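/- arXiv:2105.12274 — 12 statements merged into one kernel-verified Lean document; each statement's English description precedes it below -/
import Mathlib

section
/- For every triangulation T of the convex (n+2)-gon P_{n+2} and every k with 1 ≤ k ≤ n, there exist unique integers k_L and k_R with k_L < k < k_R such that {k_L, k}, {k, k_R} and {k_L, k_R} are all edges of T; that is, every k ∈ {1,…,n} is the middle vertex of exactly one triangle of T. -/
/-- A triangulation of the convex `(n+2)`-gon with vertices `0, 1, …, n+1` labelled
counterclockwise, encoded as the finite set of its `2n+1` edges `(a,b)` with `a < b`:
it contains all boundary edges, has exactly `2n+1` edges, and its edges are pairwise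
noncrossing, where `{a,b}` (`a<b`) and `{c,d}` (`c<d`) cross iff `a<c<b<d` or `c<a<d<b`. -/
def IsTriangulation (n : ℕ) (T : Finset (ℕ × ℕ)) : Prop :=
  (∀ e ∈ T, e.1 < e.2 ∧ e.2 ≤ n + 1) ∧
  (∀ i, i ≤ n → (i, i + 1) ∈ T) ∧
  (0, n + 1) ∈ T ∧
  T.card = 2 * n + 1 ∧
  ∀ e ∈ T, ∀ f ∈ T, ¬(e.1 < f.1 ∧ f.1 < e.2 ∧ e.2 < f.2)

def NC (D : Finset (ℕ × ℕ)) : Prop :=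
  ∀ e ∈ D, ∀ f ∈ D, ¬(e.1 < f.1 ∧ f.1 < e.2 ∧ e.2 < f.2)

lemma nc_bound : ∀ N : ℕ, 1 ≤ N → ∀ D : Finset (ℕ × ℕ),
    (∀ e ∈ D, e.1 < e.2 ∧ e.2 ≤ N) → NC D → D.card + 1 ≤ 2 * N := by
  intro N
  induction N using Nat.strong_induction_on with
  | _ N IH =>
    intro hN D hD hNC
    by_cases hdiag : ∃ e ∈ D, e.1 + 2 ≤ e.2 ∧ ¬(e.1 = 0 ∧ e.2 = N)
    · obtain ⟨⟨a, b⟩, hab, hab2, habN⟩ := hdiag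
      simp only at hab2 habN
      have hbN : b ≤ N := (hD _ hab).2
      -- inner and outer parts
      set Din : Finset (ℕ × ℕ) := D.filter (fun e => a ≤ e.1 ∧ e.2 ≤ b) with hDin
      set Dout : Finset (ℕ × ℕ) :=
        D.filter (fun e => e.2 ≤ a ∨ b ≤ e.1 ∨ (e.1 ≤ a ∧ b ≤ e.2)) with hDout
      have hcover : D ⊆ Din ∪ Dout := by
        intro e he
        have h1 : ¬(e.1 < a ∧ a < e.2 ∧ e.2 < b) := hNC e he (a, b) hab
        have h2 : ¬(a < e.1 ∧ e.1 < b ∧ b < e.2) := hNC (a, b) hab e he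
        have h3 := (hD e he).1
        have key : (a ≤ e.1 ∧ e.2 ≤ b) ∨ (e.2 ≤ a ∨ b ≤ e.1 ∨ (e.1 ≤ a ∧ b ≤ e.2)) := by
          omega
        rcases key with h | h
        · exact Finset.mem_union_left _ (Finset.mem_filter.mpr ⟨he, h⟩)
        · exact Finset.mem_union_right _ (Finset.mem_filter.mpr ⟨he, h⟩)
      have hinter : (a, b) ∈ Din ∩ Dout := by
        simp only [Finset.mem_inter, hDin, hDout, Finset.mem_filter]
        refine ⟨⟨hab, le_refl _, le_refl _⟩, ⟨hab, ?_⟩⟩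
        omega
      have hsum : D.card + 1 ≤ Din.card + Dout.card := by
        have h1 := Finset.card_union_add_card_inter Din Dout
        have h2 := Finset.card_le_card hcover
        have h3 : 1 ≤ (Din ∩ Dout).card := Finset.card_pos.mpr ⟨_, hinter⟩
        omega
      -- inner bound
      set M := b - a with hM
      have hMIN : Din.card + 1 ≤ 2 * M := by
        have hinj : Set.InjOn (fun e : ℕ × ℕ => (e.1 - a, e.2 - a)) Din := by
          intro e he f hf hef
          simp only [Finset.coe_filter, Set.mem_setOf_eq, hDin, Finset.mem_filter] at he hf
          have he1 := (hD e he.1).1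
          have hf1 := (hD f hf.1).1
          simp only [Prod.mk.injEq] at hef
          have : e.1 = f.1 ∧ e.2 = f.2 := by omega
          exact Prod.ext this.1 this.2
        have hcard : (Din.image (fun e : ℕ × ℕ => (e.1 - a, e.2 - a))).card = Din.card :=
          Finset.card_image_of_injOn hinj
        have happ := IH M (by omega) (by omega)
          (Din.image (fun e : ℕ × ℕ => (e.1 - a, e.2 - a))) ?_ ?_
        · omega
        · intro e' he'
          simp only [Finset.mem_image, hDin, Finset.mem_filter] at he'
          obtain ⟨e, ⟨heD, hea, heb⟩, rfl⟩ := he'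
          have := (hD e heD).1
          constructor <;> simp <;> omega
        · intro e' he' f' hf'
          simp only [Finset.mem_image, hDin, Finset.mem_filter] at he' hf'
          obtain ⟨e, ⟨heD, hea, heb⟩, rfl⟩ := he'
          obtain ⟨f, ⟨hfD, hfa, hfb⟩, rfl⟩ := hf'
          have h1 := hNC e heD f hfD
          have h2 := (hD e heD).1
          have h3 := (hD f hfD).1
          simp only at h1 ⊢
          omega
      -- outer bound
      set c := b - a - 1 with hc
      set ψ : ℕ → ℕ := fun x => if x ≤ a then x else x - c with hψ
      have hψmono : ∀ x, (x ≤ a ∨ b ≤ x) → ∀ y, (y ≤ a ∨ b ≤ y) → (ψ x < ψ y ↔ x < y) := by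
        intro x hx y hy
        simp only [hψ]
        split_ifs <;> omega
      have hL : ∀ e ∈ Dout, (e.1 ≤ a ∨ b ≤ e.1) ∧ (e.2 ≤ a ∨ b ≤ e.2) := by
        intro e he
        simp only [hDout, Finset.mem_filter] at he
        have := (hD e he.1).1
        omega
      set N' := N - c with hN'
      have hψle : ∀ x, (x ≤ a ∨ b ≤ x) → x ≤ N → ψ x ≤ N' := by
        intro x hx hxN
        simp only [hψ]
        split_ifs <;> omega
      have hMOUT : Dout.card + 1 ≤ 2 * N' := by
        have hinj : Set.InjOn (fun e : ℕ × ℕ => (ψ e.1, ψ e.2)) Dout := by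
          intro e he f hf hef
          have hLe := hL e (by exact_mod_cast he)
          have hLf := hL f (by exact_mod_cast hf)
          simp only [Prod.mk.injEq] at hef
          have h1 : e.1 = f.1 := by
            have a1 := hψmono e.1 hLe.1 f.1 hLf.1
            have a2 := hψmono f.1 hLf.1 e.1 hLe.1
            omega
          have h2 : e.2 = f.2 := by
            have a1 := hψmono e.2 hLe.2 f.2 hLf.2
            have a2 := hψmono f.2 hLf.2 e.2 hLe.2
            omega
          exact Prod.ext h1 h2
        have hcard : (Dout.image (fun e : ℕ × ℕ => (ψ e.1, ψ e.2))).card = Dout.card :=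
          Finset.card_image_of_injOn hinj
        have happ := IH N' (by omega) (by omega)
          (Dout.image (fun e : ℕ × ℕ => (ψ e.1, ψ e.2))) ?_ ?_
        · omega
        · intro e' he'
          simp only [Finset.mem_image] at he'
          obtain ⟨e, heD, rfl⟩ := he'
          have hLe := hL e heD
          have hmem : e ∈ D := Finset.mem_of_mem_filter e heD
          have h2 := (hD e hmem).1
          have h3 := (hD e hmem).2
          refine ⟨?_, hψle _ hLe.2 h3⟩
          exact (hψmono e.1 hLe.1 e.2 hLe.2).mpr h2
        · intro e' he' f' hf'
          simp only [Finset.mem_image] at he' hf'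
          obtain ⟨e, heD, rfl⟩ := he'
          obtain ⟨f, hfD, rfl⟩ := hf'
          have hLe := hL e heD
          have hLf := hL f hfD
          have h1 := hNC e (Finset.mem_of_mem_filter e heD) f (Finset.mem_of_mem_filter f hfD)
          have m1 := hψmono e.1 hLe.1 f.1 hLf.1
          have m2 := hψmono f.1 hLf.1 e.2 hLe.2
          have m3 := hψmono e.2 hLe.2 f.2 hLf.2
          simp only at h1 ⊢
          omega
      omega
    · push_neg at hdiag
      by_cases hN1 : N = 1
      · subst hN1
        have : D ⊆ {(0, 1)} := by
          intro e he
          have := hD e he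
          simp only [Finset.mem_singleton]
          have : e.1 = 0 ∧ e.2 = 1 := by omega
          exact Prod.ext this.1 this.2
        have := Finset.card_le_card this
        simp at this
        omega
      · have hsub : D ⊆ insert (0, N) ((Finset.range N).image fun i => (i, i + 1)) := by
          intro e he
          have h1 := hD e he
          have h2 := hdiag e he
          simp only [Finset.mem_insert, Finset.mem_image, Finset.mem_range]
          by_cases h3 : e.1 = 0 ∧ e.2 = N
          · left; exact Prod.ext h3.1 h3.2
          · right
            refine ⟨e.1, by omega, ?_⟩
            have : e.2 = e.1 + 1 := by omega
            exact Prod.ext rfl this.symm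
        have h4 := Finset.card_le_card hsub
        have h5 : (insert (0, N) ((Finset.range N).image fun i => (i, i + 1))).card ≤ N + 1 := by
          refine (Finset.card_insert_le _ _).trans ?_
          have := Finset.card_image_le (s := Finset.range N) (f := fun i => (i, i + 1))
          simp only [Finset.card_range] at this
          omega
        omega

lemma tri_maximal (n : ℕ) (T : Finset (ℕ × ℕ)) (hT : IsTriangulation n T)
    (x y : ℕ) (hxy : x < y) (hyn : y ≤ n + 1) (hnot : (x, y) ∉ T) :
    ∃ e ∈ T, (e.1 < x ∧ x < e.2 ∧ e.2 < y) ∨ (x < e.1 ∧ e.1 < y ∧ y < e.2) := by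
  obtain ⟨hTb, hTbd, hT0, hTc, hTnc⟩ := hT
  by_contra hcon
  push_neg at hcon
  have hNC : NC (insert (x, y) T) := by
    intro e he f hf
    rcases Finset.mem_insert.mp he with he' | he' <;>
      rcases Finset.mem_insert.mp hf with hf' | hf'
    · subst he'; subst hf'; simp
    · subst he'
      have := hcon f hf'
      simp only at this ⊢
      omega
    · subst hf'
      have := hcon e he'
      simp only at this ⊢
      omega
    · exact hTnc e he' f hf'
  have hbd : ∀ e ∈ insert (x, y) T, e.1 < e.2 ∧ e.2 ≤ n + 1 := by
    intro e he
    rcases Finset.mem_insert.mp he with he' | he'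
    · subst he'; exact ⟨hxy, hyn⟩
    · exact hTb e he'
  have := nc_bound (n + 1) (by omega) _ hbd hNC
  rw [Finset.card_insert_of_notMem hnot, hTc] at this
  omega

lemma tri_split (n : ℕ) (T : Finset (ℕ × ℕ)) (hT : IsTriangulation n T)
    (a b : ℕ) (hab : (a, b) ∈ T) (h2 : a + 2 ≤ b) :
    ∃ c, a < c ∧ c < b ∧ (a, c) ∈ T ∧ (c, b) ∈ T := by
  have hTb := hT.1
  have hTbd := hT.2.1
  have hTnc := hT.2.2.2.2
  have hbn : b ≤ n + 1 := (hTb _ hab).2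
  set S : Finset ℕ := (Finset.range b).filter (fun c => a < c ∧ (a, c) ∈ T) with hS
  have hSne : S.Nonempty := by
    refine ⟨a + 1, Finset.mem_filter.mpr ⟨Finset.mem_range.mpr (by omega), by omega, ?_⟩⟩
    exact hTbd a (by omega)
  set c := S.max' hSne with hc
  have hcS : c ∈ S := S.max'_mem hSne
  have hcb : c < b := Finset.mem_range.mp (Finset.mem_filter.mp hcS).1
  have hac : a < c := (Finset.mem_filter.mp hcS).2.1
  have hacT : (a, c) ∈ T := (Finset.mem_filter.mp hcS).2.2
  refine ⟨c, hac, hcb, hacT, ?_⟩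
  by_contra hcbT
  obtain ⟨e, heT, hcross⟩ := tri_maximal n T hT c b hcb hbn hcbT
  rcases hcross with ⟨h1, h2', h3⟩ | ⟨h1, h2', h3⟩
  · -- e.1 < c < e.2 < b
    rcases lt_trichotomy e.1 a with ha' | ha' | ha'
    · exact hTnc e heT (a, b) hab ⟨ha', by omega, by omega⟩
    · have : (a, e.2) ∈ T := by
        have : e = (a, e.2) := Prod.ext ha' rfl
        rwa [← this]
      have : e.2 ∈ S := Finset.mem_filter.mpr ⟨Finset.mem_range.mpr (by omega), by omega, this⟩
      have := S.le_max' e.2 this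
      omega
    · exact hTnc (a, c) hacT e heT ⟨ha', by omega, by omega⟩
  · -- c < e.1 < b < e.2
    exact hTnc (a, b) hab e heT ⟨by omega, by omega, by omega⟩

/-- Every `k ∈ {1,…,n}` is the middle vertex of exactly one triangle of a triangulation `T`
of the `(n+2)`-gon: there are unique `k_L < k < k_R` with `{k_L,k}, {k,k_R}, {k_L,k_R} ∈ T`. -/
theorem stmt0 (n : ℕ) (hn : 1 ≤ n) (T : Finset (ℕ × ℕ)) (hT : IsTriangulation n T) :
    ∀ k, 1 ≤ k → k ≤ n →
      ∃! ab : ℕ × ℕ, ab.1 < k ∧ k < ab.2 ∧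
        (ab.1, k) ∈ T ∧ (k, ab.2) ∈ T ∧ (ab.1, ab.2) ∈ T := by
  intro k hk1 hkn
  have hTnc := hT.2.2.2.2
  set S : Finset (ℕ × ℕ) := T.filter (fun e => e.1 < k ∧ k < e.2) with hS
  have hSne : S.Nonempty :=
    ⟨(0, n + 1), Finset.mem_filter.mpr ⟨hT.2.2.1, by omega, by omega⟩⟩
  obtain ⟨e, heS, hemin⟩ := S.exists_min_image (fun e => e.2 - e.1) hSne
  have heT : e ∈ T := (Finset.mem_filter.mp heS).1
  have he1 : e.1 < k := (Finset.mem_filter.mp heS).2.1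
  have he2 : k < e.2 := (Finset.mem_filter.mp heS).2.2
  obtain ⟨c, hc1, hc2, hc3, hc4⟩ := tri_split n T hT e.1 e.2
    (by rwa [Prod.mk.eta]) (by omega)
  have hck : c = k := by
    rcases lt_trichotomy c k with h | h | h
    · have : (c, e.2) ∈ S := Finset.mem_filter.mpr ⟨hc4, h, he2⟩
      have := hemin _ this
      simp only at this
      omega
    · exact h
    · have : (e.1, c) ∈ S := Finset.mem_filter.mpr ⟨hc3, he1, h⟩
      have := hemin _ this
      simp only at this
      omega
  subst hck
  refine ⟨(e.1, e.2), ⟨he1, he2, hc3, hc4, by rwa [Prod.mk.eta]⟩, ?_⟩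
  rintro ⟨a', b'⟩ ⟨ha'1, hb'1, ha'T, hb'T, hab'T⟩
  simp only at ha'1 hb'1 ha'T hb'T hab'T
  have h1 : a' = e.1 := by
    rcases lt_trichotomy a' e.1 with h | h | h
    · exact absurd ⟨h, he1, he2⟩ (hTnc (a', c) ha'T (e.1, e.2) (by rwa [Prod.mk.eta]))
    · exact h
    · exact absurd ⟨h, ha'1, hb'1⟩ (hTnc (e.1, c) hc3 (a', b') hab'T)
  have h2 : b' = e.2 := by
    rcases lt_trichotomy b' e.2 with h | h | h
    · exact absurd ⟨ha'1, hb'1, h⟩ (hTnc (a', b') hab'T (c, e.2) hc4)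
    · exact h
    · exact absurd ⟨he1, he2, h⟩ (hTnc (e.1, e.2) (by rwa [Prod.mk.eta]) (c, b') hb'T)
  simp [h1, h2]
end

section
/- Let T be a triangulation of P_{n+2}. The 2n edges {k_L,k} and {k,k_R} for k ∈ {1,…,n} are pairwise distinct, none of them equals {0,n+1}, and together with {0,n+1} they comprise all edges of T. Moreover, the left graph T^L (vertex set {0,1,…,n}, edges {k_L,k} for k ∈ {1,…,n}) is a tree, and the right graph T^R (vertex set {1,…,n+1}, edges {k,k_R} for k ∈ {1,…,n}) is a tree. -/
/-- `kL k < k < kR k` is the (unique) triangle of `T` with middle vertex `k`,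
for each `k ∈ {1,…,n}`. -/
def MidTriangle (n : ℕ) (T : Finset (ℕ × ℕ)) (kL kR : ℕ → ℕ) : Prop :=
  ∀ k, 1 ≤ k → k ≤ n → kL k < k ∧ k < kR k ∧
    (kL k, k) ∈ T ∧ (k, kR k) ∈ T ∧ (kL k, kR k) ∈ T

/-- The left graph `T^L` of a triangulation `T`: vertex set `{0,…,n}` (encoded as `Fin (n+1)`,
vertex `a` standing for the polygon vertex `a`), with edges `{kL k, k}` for `k ∈ {1,…,n}`. -/
def leftGraph (n : ℕ) (kL : ℕ → ℕ) : SimpleGraph (Fin (n + 1)) :=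
  SimpleGraph.fromRel fun a b => ∃ k, 1 ≤ k ∧ k ≤ n ∧ (a : ℕ) = kL k ∧ (b : ℕ) = k

/-- The right graph `T^R` of a triangulation `T`: vertex set `{1,…,n+1}` (encoded as
`Fin (n+1)`, vertex `a` standing for the polygon vertex `a+1`), with edges `{k, kR k}`
for `k ∈ {1,…,n}`. -/
def rightGraph (n : ℕ) (kR : ℕ → ℕ) : SimpleGraph (Fin (n + 1)) :=
  SimpleGraph.fromRel fun a b => ∃ k, 1 ≤ k ∧ k ≤ n ∧ (a : ℕ) + 1 = k ∧ (b : ℕ) + 1 = kR k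

/-!
Every `k ∈ {1,…,n}` is joined in `T^L` to exactly one smaller vertex, `kL k`, and in `T^R`
to exactly one larger vertex, `kR k`; so both graphs are the parent graphs of a rooted forest
with a single root (`0`, resp. `n+1`), i.e. trees. An equality `(kL k, k) = (k', kR k')`
would make the diagonals `{kL k', k}` and `{k', kR k}` of the triangles at `k'` and `k` cross;
so the `2n + 1` listed edges are distinct edges of `T`, and since `T` has `2n + 1` edges
they are all of them.
-/

namespace SimpleGraph

variable {V : Type*}

theorem connected_of_exists_adj_lt (G : SimpleGraph V) (m : V → ℕ) (root : V)
    (h : ∀ v, v ≠ root → ∃ w, G.Adj v w ∧ m w < m v) : G.Connected := by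
  have hreach : ∀ v, G.Reachable v root := by
    intro v
    induction v using (measure m).wf.induction with
    | _ v ih =>
      by_cases hv : v = root
      · exact hv ▸ .rfl
      · obtain ⟨w, hvw, hw⟩ := h v hv
        exact hvw.reachable.trans (ih w hw)
  exact (connected_iff_exists_forall_reachable G).2 ⟨root, fun v => (hreach v).symm⟩

/-- A cycle through a vertex `u` of maximal measure leaves `u` along two distinct edges. -/
theorem isAcyclic_of_unique_adj_lt (G : SimpleGraph V) (m : V → ℕ)
    (hne : ∀ u v, G.Adj u v → m u ≠ m v)
    (huniq : ∀ u v w, G.Adj u v → G.Adj u w → m v < m u → m w < m u → v = w) :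
    G.IsAcyclic := by
  classical
  intro v c hc
  obtain ⟨u, hu, hmax⟩ := c.support.toFinset.exists_max_image m ⟨v, by simp⟩
  rw [List.mem_toFinset] at hu
  have hc' := hc.rotate hu
  have hnil := hc'.not_nil
  have lt_of_mem {w} (hw : w ∈ (c.rotate u hu).support) (hadj : G.Adj u w) : m w < m u :=
    lt_of_le_of_ne (hmax w (by simpa [Walk.mem_support_rotate_iff] using hw))
      (hne u w hadj).symm
  have hsnd := Walk.adj_snd hnil
  have hpen := (Walk.adj_penultimate hnil).symm
  exact hc'.snd_ne_penultimate <| huniq u _ _ hsnd hpen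
    (lt_of_mem (Walk.getVert_mem_support _ _) hsnd)
    (lt_of_mem (Walk.getVert_mem_support _ _) hpen)

theorem fromRel_flip (r : V → V → Prop) : fromRel (flip r) = fromRel r := by
  ext u v
  simp only [fromRel_adj, flip, or_comm]

theorem isTree_fromRel_of_parent (r : V → V → Prop) (m : V → ℕ) (root : V)
    (hlt : ∀ a b, r a b → m a < m b) (hex : ∀ v, v ≠ root → ∃ w, r w v)
    (huniq : ∀ a a' b, r a b → r a' b → a = a') : (fromRel r).IsTree := by
  have adj_iff {u v} : (fromRel r).Adj u v ↔ r u v ∨ r v u := by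
    refine ⟨And.right, fun h => ⟨?_, h⟩⟩
    rintro rfl
    exact h.elim (fun h => (hlt _ _ h).false) (fun h => (hlt _ _ h).false)
  refine ⟨connected_of_exists_adj_lt _ m root fun v hv => ?_,
    isAcyclic_of_unique_adj_lt _ m (fun u v huv => ?_) fun u v w huv huw hvu hwu => ?_⟩
  · obtain ⟨w, hwv⟩ := hex v hv
    exact ⟨w, adj_iff.2 (.inr hwv), hlt w v hwv⟩
  · rcases adj_iff.1 huv with h | h
    exacts [(hlt u v h).ne, (hlt v u h).ne']
  · have parent_of {x} (hux : (fromRel r).Adj u x) (hxu : m x < m u) : r x u :=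
      (adj_iff.1 hux).resolve_left fun h => (hlt u x h).not_gt hxu
    exact huniq v w u (parent_of huv hvu) (parent_of huw hwu)

end SimpleGraph

namespace MidTriangle

variable {n : ℕ} {T : Finset (ℕ × ℕ)} {kL kR : ℕ → ℕ}

theorem leftEdge_ne_rightEdge (hT : IsTriangulation n T) (hmid : MidTriangle n T kL kR)
    {k k' : ℕ} (hk : 1 ≤ k) (hkn : k ≤ n) (hk' : 1 ≤ k') (hk'n : k' ≤ n) :
    (kL k, k) ≠ (k', kR k') := by
  intro h
  obtain ⟨hl, hr⟩ := Prod.mk.inj h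
  obtain ⟨hltL, hltR, -, -, hmem⟩ := hmid k hk hkn
  obtain ⟨hltL', -, -, -, hmem'⟩ := hmid k' hk' hk'n
  exact hT.2.2.2.2 _ hmem' _ hmem ⟨by omega, by omega, by omega⟩

theorem eq_edges_union (hT : IsTriangulation n T) (hmid : MidTriangle n T kL kR) :
    T = ((Finset.Icc 1 n).image fun k => (kL k, k)) ∪
        ((Finset.Icc 1 n).image fun k => (k, kR k)) ∪ {(0, n + 1)} := by
  set A := (Finset.Icc 1 n).image fun k => (kL k, k)
  set B := (Finset.Icc 1 n).image fun k => (k, kR k)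
  have hA : A.card = n := by
    rw [Finset.card_image_of_injective _ fun a b h => congrArg Prod.snd h, Nat.card_Icc,
      Nat.add_sub_cancel]
  have hB : B.card = n := by
    rw [Finset.card_image_of_injective _ fun a b h => congrArg Prod.fst h, Nat.card_Icc,
      Nat.add_sub_cancel]
  have hAB : Disjoint A B := by
    simp only [A, B, Finset.disjoint_left, Finset.mem_image, Finset.mem_Icc]
    rintro _ ⟨k, ⟨hk, hkn⟩, rfl⟩ ⟨k', ⟨hk', hk'n⟩, h⟩
    exact hmid.leftEdge_ne_rightEdge hT hk hkn hk' hk'n h.symm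
  have hAB0 : (0, n + 1) ∉ A ∪ B := by
    simp only [A, B, Finset.mem_union, Finset.mem_image, Finset.mem_Icc, Prod.mk.injEq]
    omega
  have hsub : A ∪ B ∪ {(0, n + 1)} ⊆ T := by
    simp only [A, B, Finset.union_subset_iff, Finset.image_subset_iff, Finset.mem_Icc,
      Finset.singleton_subset_iff]
    exact ⟨⟨fun k hk => (hmid k hk.1 hk.2).2.2.1, fun k hk => (hmid k hk.1 hk.2).2.2.2.1⟩,
      hT.2.2.1⟩
  refine (Finset.eq_of_subset_of_card_le hsub ?_).symm
  rw [Finset.card_union_of_disjoint (Finset.disjoint_singleton_right.2 hAB0),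
    Finset.card_union_of_disjoint hAB, hA, hB, Finset.card_singleton, hT.2.2.2.1]
  omega

theorem leftGraph_isTree (hmid : MidTriangle n T kL kR) : (leftGraph n kL).IsTree := by
  refine SimpleGraph.isTree_fromRel_of_parent _ Fin.val 0 ?_ (fun v hv => ?_) ?_
  · rintro a b ⟨k, hk1, hkn, ha, hb⟩
    have := (hmid k hk1 hkn).1
    omega
  · have hv1 : 1 ≤ (v : ℕ) := Nat.one_le_iff_ne_zero.2 (Fin.val_ne_zero_iff.2 hv)
    have hlt := (hmid v hv1 (Fin.is_le v)).1
    exact ⟨⟨kL v, by omega⟩, v, hv1, Fin.is_le v, rfl, rfl⟩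
  · rintro a a' b ⟨k, -, -, ha, rfl⟩ ⟨k', -, -, ha', hk'⟩
    exact Fin.ext (by rw [ha, ha', hk'])

theorem rightGraph_isTree (hT : IsTriangulation n T) (hmid : MidTriangle n T kL kR) :
    (rightGraph n kR).IsTree := by
  rw [rightGraph, ← SimpleGraph.fromRel_flip]
  refine SimpleGraph.isTree_fromRel_of_parent _ (fun v => n - v) (Fin.last n) ?_
    (fun v hv => ?_) ?_
  · rintro a b ⟨k, hk1, hkn, hb, ha⟩
    have := (hmid k hk1 hkn).2.1
    have := a.is_le
    omega
  · have hvn : (v : ℕ) < n := Fin.val_lt_last hv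
    obtain ⟨-, hlt, -, hmem, -⟩ := hmid (v + 1) (by omega) (by omega)
    have hle := (hT.1 _ hmem).2
    exact ⟨⟨kR (v + 1) - 1, by omega⟩, v + 1, by omega, by omega, rfl, by dsimp only; omega⟩
  · rintro a a' b ⟨k, -, -, rfl, ha⟩ ⟨k', -, -, rfl, ha'⟩
    exact Fin.ext (by omega)

end MidTriangle

theorem stmt1_general (n : ℕ) (T : Finset (ℕ × ℕ)) (hT : IsTriangulation n T)
    (kL kR : ℕ → ℕ) (hmid : MidTriangle n T kL kR) :
    (∀ k, 1 ≤ k → k ≤ n → ∀ k', 1 ≤ k' → k' ≤ n →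
      (k ≠ k' → (kL k, k) ≠ (kL k', k') ∧ (k, kR k) ≠ (k', kR k')) ∧
      (kL k, k) ≠ (k', kR k')) ∧
    (∀ k, 1 ≤ k → k ≤ n → (kL k, k) ≠ (0, n + 1) ∧ (k, kR k) ≠ (0, n + 1)) ∧
    T = ((Finset.Icc 1 n).image fun k => (kL k, k)) ∪
        ((Finset.Icc 1 n).image fun k => (k, kR k)) ∪ {(0, n + 1)} ∧
    (leftGraph n kL).IsTree ∧ (rightGraph n kR).IsTree := by
  refine ⟨fun k hk hkn k' hk' hk'n => ⟨fun hne => ⟨?_, ?_⟩, ?_⟩, fun k hk hkn => ⟨?_, ?_⟩,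
    hmid.eq_edges_union hT, hmid.leftGraph_isTree, hmid.rightGraph_isTree hT⟩
  · exact fun h => hne (congrArg Prod.snd h)
  · exact fun h => hne (congrArg Prod.fst h)
  · exact hmid.leftEdge_ne_rightEdge hT hk hkn hk' hk'n
  · exact fun h => by simp only [Prod.mk.injEq] at h; omega
  · exact fun h => by simp only [Prod.mk.injEq] at h; omega

/-- The `2n` edges `{kL k, k}` and `{k, kR k}` (`k ∈ {1,…,n}`) are pairwise distinct, none of
them equals `{0,n+1}`, and together with `{0,n+1}` they comprise all edges of `T`; moreover
the left graph `T^L` and the right graph `T^R` are trees. -/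
theorem stmt1 (n : ℕ) (hn : 1 ≤ n) (T : Finset (ℕ × ℕ)) (hT : IsTriangulation n T)
    (kL kR : ℕ → ℕ) (hmid : MidTriangle n T kL kR) :
    (∀ k, 1 ≤ k → k ≤ n → ∀ k', 1 ≤ k' → k' ≤ n →
      (k ≠ k' → (kL k, k) ≠ (kL k', k') ∧ (k, kR k) ≠ (k', kR k')) ∧
      (kL k, k) ≠ (k', kR k')) ∧
    (∀ k, 1 ≤ k → k ≤ n → (kL k, k) ≠ (0, n + 1) ∧ (k, kR k) ≠ (0, n + 1)) ∧
    T = ((Finset.Icc 1 n).image fun k => (kL k, k)) ∪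
        ((Finset.Icc 1 n).image fun k => (k, kR k)) ∪ {(0, n + 1)} ∧
    (leftGraph n kL).IsTree ∧ (rightGraph n kR).IsTree :=
  stmt1_general n T hT kL kR hmid
end

section
/- Let T be a triangulation of P_{n+2}. The vectors p_1,…,p_n form a ℤ-basis of the lattice M = {x ∈ ℤ^{n+1} : x_1+⋯+x_{n+1} = 0}, and likewise the vectors q_1,…,q_n form a ℤ-basis of M. -/
/-- The lattice `M = {x ∈ ℤ^{n+1} : x₁ + ⋯ + x_{n+1} = 0}`. -/
def Mlat (n : ℕ) : Submodule ℤ (Fin (n + 1) → ℤ) where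
  carrier := {x | ∑ i, x i = 0}
  add_mem' := by
    intro a b ha hb
    simp only [Set.mem_setOf_eq, Pi.add_apply, Finset.sum_add_distrib] at *
    omega
  zero_mem' := by simp
  smul_mem' := by
    intro c x hx
    simp only [Set.mem_setOf_eq, Pi.smul_apply, smul_eq_mul, ← Finset.mul_sum] at *
    simp [hx]

/-- `stdE n i` is the standard basis vector `e_i` of `ℤ^{n+1}` (coordinates indexed `1,…,n+1`;
the `Fin (n+1)` index `x` stands for coordinate `x+1`). -/
def stdE (n : ℕ) (i : ℕ) : Fin (n + 1) → ℤ := fun x => if (x : ℕ) + 1 = i then 1 else 0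

/-- `p_k = e_{k_L + 1} − e_{k+1}`. -/
def pVec (n : ℕ) (kL : ℕ → ℕ) (k : ℕ) : Fin (n + 1) → ℤ :=
  stdE n (kL k + 1) - stdE n (k + 1)

/-- `q_k = −e_k + e_{k_R}`. -/
def qVec (n : ℕ) (kR : ℕ → ℕ) (k : ℕ) : Fin (n + 1) → ℤ :=
  -stdE n k + stdE n (kR k)

/-!
Write `e_v` for `Pi.single v 1`. Both families consist of edge vectors `e_{π k} - e_{σ k}` of a
rooted tree on the coordinates: `σ` is a bijection onto the non-root coordinates, and because
`k_L < k < k_R` the parent `π k` is strictly closer to the root (the first coordinate for the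
`p_k`, the last one for the `q_k`). Such a family is linearly independent: in a nontrivial
relation, take the edge `i` farthest from the root among those with nonzero coefficient; then
the coordinate `σ i` receives no other contribution. It spans the sum-zero lattice:
`e_v - e_r` telescopes along the path from `v` to the root `r`, and `x = ∑ x_v (e_v - e_r)`
whenever `∑ x_v = 0`.
-/

open Finset Function

section

variable {ι V R : Type*} [Ring R] [DecidableEq V]

theorem linearIndependent_single_sub_single {σ π : ι → V} (h : V → ℕ) (hσ : Injective σ)
    (hlt : ∀ i, h (π i) < h (σ i)) :
    LinearIndependent R fun i => (Pi.single (π i) 1 - Pi.single (σ i) 1 : V → R) := by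
  classical
  rw [linearIndependent_iff']
  intro s g hg
  by_contra! ⟨i₀, hi₀, hgi₀⟩
  obtain ⟨i, hi, hmax⟩ :=
    (s.filter (g · ≠ 0)).exists_max_image (h ∘ σ) ⟨i₀, mem_filter.2 ⟨hi₀, hgi₀⟩⟩
  rw [mem_filter] at hi
  have hparent : ∀ j ∈ s, π j = σ i → g j = 0 := fun j hj hji => by
    by_contra hgj
    have hle : h (σ j) ≤ h (σ i) := hmax j (mem_filter.2 ⟨hj, hgj⟩)
    have hlt_j := hlt j
    rw [hji] at hlt_j
    omega
  have hcoord := congrFun hg (σ i)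
  simp only [Finset.sum_apply, Pi.smul_apply, Pi.sub_apply, Pi.single_apply, hσ.eq_iff, smul_eq_mul,
    mul_sub, mul_ite, mul_one, mul_zero, sum_sub_distrib, sum_ite_eq, if_pos hi.1] at hcoord
  rw [sum_eq_zero fun j hj => ite_eq_right_iff.2 fun hji => hparent j hj hji.symm,
    zero_sub, Pi.zero_apply, neg_eq_zero] at hcoord
  exact hi.2 hcoord

theorem mem_span_single_sub_single_iff [Fintype V] {σ π : ι → V} (h : V → ℕ) (r : V)
    (hlt : ∀ i, h (π i) < h (σ i)) (hσr : ∀ v, v ≠ r → ∃ i, σ i = v) (x : V → R) :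
    x ∈ Submodule.span R (Set.range fun i => (Pi.single (π i) 1 - Pi.single (σ i) 1 : V → R)) ↔
      ∑ v, x v = 0 := by
  set S := Submodule.span R (Set.range fun i => (Pi.single (π i) 1 - Pi.single (σ i) 1 : V → R))
  constructor
  · intro hx
    induction hx using Submodule.span_induction with
    | mem _ hy => obtain ⟨i, rfl⟩ := hy; simp [sum_sub_distrib]
    | zero => simp
    | add _ _ _ _ hy hz => simp [sum_add_distrib, hy, hz]
    | smul a _ _ hy => simp [← mul_sum, hy]
  · intro hx
    have hroot : ∀ v, (Pi.single v 1 - Pi.single r 1 : V → R) ∈ S := by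
      intro v
      induction v using (measure h).wf.induction with
      | _ v ih =>
        by_cases hv : v = r
        · simp [hv]
        obtain ⟨i, rfl⟩ := hσr v hv
        have hedge : (Pi.single (π i) 1 - Pi.single (σ i) 1 : V → R) ∈ S :=
          Submodule.subset_span ⟨i, rfl⟩
        simpa using sub_mem (ih (π i) (hlt i)) hedge
    have hx' : x = ∑ v, x v • (Pi.single v 1 - Pi.single r 1 : V → R) := by
      simp [smul_sub, sum_sub_distrib, ← sum_smul, hx, ← pi_eq_sum_univ']
    rw [hx']
    exact sum_mem fun v _ => Submodule.smul_mem _ _ (hroot v)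

end

theorem stdE_succ_eq_single (n : ℕ) (i : Fin (n + 1)) : stdE n (i + 1) = Pi.single i 1 := by
  ext x
  simp [stdE, Pi.single_apply, Fin.ext_iff]

section Triangulation

variable {n : ℕ} {T : Finset (ℕ × ℕ)} {kL kR : ℕ → ℕ}

theorem exists_pVec_eq_single_sub_single (hmid : MidTriangle n T kL kR) :
    ∃ π : Fin n → Fin (n + 1), (∀ k, π k < k.succ) ∧
      ∀ k : Fin n, pVec n kL (k + 1) = Pi.single (π k) 1 - Pi.single k.succ 1 := by
  have hlt (k : Fin n) : kL (k + 1) < k + 1 := (hmid (k + 1) (by omega) k.isLt).1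
  refine ⟨fun k => ⟨kL (k + 1), by have := hlt k; omega⟩, hlt, fun k => ?_⟩
  rw [← stdE_succ_eq_single, ← stdE_succ_eq_single]
  rfl

theorem exists_qVec_eq_single_sub_single (hT : IsTriangulation n T)
    (hmid : MidTriangle n T kL kR) :
    ∃ π : Fin n → Fin (n + 1), (∀ k, k.castSucc < π k) ∧
      ∀ k : Fin n, qVec n kR (k + 1) = Pi.single (π k) 1 - Pi.single k.castSucc 1 := by
  have hbounds (k : Fin n) : k + 1 < kR (k + 1) ∧ kR (k + 1) ≤ n + 1 := by
    obtain ⟨-, hlt, -, hedge, -⟩ := hmid (k + 1) (by omega) k.isLt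
    exact ⟨hlt, (hT.1 _ hedge).2⟩
  refine ⟨fun k => ⟨kR (k + 1) - 1, by have := hbounds k; omega⟩,
    fun k => Fin.lt_def.2 (by have := hbounds k; simp only [Fin.val_castSucc]; omega), fun k => ?_⟩
  rw [← stdE_succ_eq_single, ← stdE_succ_eq_single, qVec, neg_add_eq_sub]
  congr 2
  have := hbounds k
  dsimp only
  omega

end Triangulation

theorem mem_Mlat_of_span_eq {n : ℕ} {f : ℕ → Fin (n + 1) → ℤ}
    (hspan : Submodule.span ℤ (Set.range fun k : Fin n => f (k + 1)) = Mlat n) :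
    ∀ k, 1 ≤ k → k ≤ n → f k ∈ Mlat n := by
  intro k hk hkn
  obtain ⟨j, rfl⟩ := Nat.exists_eq_add_of_le' hk
  exact hspan ▸ Submodule.subset_span ⟨⟨j, hkn⟩, rfl⟩

theorem stmt2_general (n : ℕ) (T : Finset (ℕ × ℕ)) (hT : IsTriangulation n T)
    (kL kR : ℕ → ℕ) (hmid : MidTriangle n T kL kR) :
    ((∀ k, 1 ≤ k → k ≤ n → pVec n kL k ∈ Mlat n) ∧
      LinearIndependent ℤ (fun k : Fin n => pVec n kL ((k : ℕ) + 1)) ∧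
      Submodule.span ℤ (Set.range fun k : Fin n => pVec n kL ((k : ℕ) + 1)) = Mlat n) ∧
    ((∀ k, 1 ≤ k → k ≤ n → qVec n kR k ∈ Mlat n) ∧
      LinearIndependent ℤ (fun k : Fin n => qVec n kR ((k : ℕ) + 1)) ∧
      Submodule.span ℤ (Set.range fun k : Fin n => qVec n kR ((k : ℕ) + 1)) = Mlat n) := by
  obtain ⟨πL, hπL, hp⟩ := exists_pVec_eq_single_sub_single hmid
  obtain ⟨πR, hπR, hq⟩ := exists_qVec_eq_single_sub_single hT hmid
  have hπR' (k : Fin n) : (Fin.rev (πR k) : ℕ) < Fin.rev k.castSucc := Fin.rev_lt_rev.2 (hπR k)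
  have hpspan : Submodule.span ℤ (Set.range fun k : Fin n => pVec n kL (k + 1)) = Mlat n := by
    ext x
    simp_rw [hp]
    exact mem_span_single_sub_single_iff Fin.val 0 hπL (fun _ => Fin.exists_succ_eq.2) x
  have hqspan : Submodule.span ℤ (Set.range fun k : Fin n => qVec n kR (k + 1)) = Mlat n := by
    ext x
    simp_rw [hq]
    exact mem_span_single_sub_single_iff (fun v => Fin.rev v) (Fin.last n) hπR'
      (fun _ => Fin.exists_castSucc_eq.2) x
  refine ⟨⟨mem_Mlat_of_span_eq hpspan, ?_, hpspan⟩, ⟨mem_Mlat_of_span_eq hqspan, ?_, hqspan⟩⟩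
  · simp_rw [hp]
    exact linearIndependent_single_sub_single Fin.val (Fin.succ_injective n) hπL
  · simp_rw [hq]
    exact linearIndependent_single_sub_single (fun v => Fin.rev v) (Fin.castSucc_injective n) hπR'

/-- The vectors `p_1,…,p_n` form a ℤ-basis of `M`, and likewise `q_1,…,q_n` form a
ℤ-basis of `M`. -/
theorem stmt2 (n : ℕ) (hn : 1 ≤ n) (T : Finset (ℕ × ℕ)) (hT : IsTriangulation n T)
    (kL kR : ℕ → ℕ) (hmid : MidTriangle n T kL kR) :
    ((∀ k, 1 ≤ k → k ≤ n → pVec n kL k ∈ Mlat n) ∧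
      LinearIndependent ℤ (fun k : Fin n => pVec n kL ((k : ℕ) + 1)) ∧
      Submodule.span ℤ (Set.range fun k : Fin n => pVec n kL ((k : ℕ) + 1)) = Mlat n) ∧
    ((∀ k, 1 ≤ k → k ≤ n → qVec n kR k ∈ Mlat n) ∧
      LinearIndependent ℤ (fun k : Fin n => qVec n kR ((k : ℕ) + 1)) ∧
      Submodule.span ℤ (Set.range fun k : Fin n => qVec n kR ((k : ℕ) + 1)) = Mlat n) :=
  stmt2_general n T hT kL kR hmid
end

section
/- Let T be a triangulation of P_{n+2}. For all i, j ∈ {1,…,n} one has ⟨v_i, p_j⟩ = δ_{ij} and ⟨w_i, q_j⟩ = δ_{ij}, where δ_{ij} is the Kronecker delta. -/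
/-- `Wrep n i = e_1 + ⋯ + e_i ∈ ℤ^{n+1}`, the canonical representative of
`ϖ_i ∈ N = ℤ^{n+1}/ℤ(1,…,1)` (note `Wrep n (n+1)` represents `ϖ_{n+1} = 0`). -/
def Wrep (n : ℕ) (i : ℕ) : Fin (n + 1) → ℤ := fun x => if (x : ℕ) + 1 ≤ i then 1 else 0

/-- A representative in `ℤ^{n+1}` of `v_k = ϖ_k − ϖ_{k_R} ∈ N`. -/
def vRep (n : ℕ) (kR : ℕ → ℕ) (k : ℕ) : Fin (n + 1) → ℤ := Wrep n k - Wrep n (kR k)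

/-- A representative in `ℤ^{n+1}` of `w_k = ϖ_{k_L} − ϖ_k ∈ N`. -/
def wRep (n : ℕ) (kL : ℕ → ℕ) (k : ℕ) : Fin (n + 1) → ℤ := Wrep n (kL k) - Wrep n k


lemma noncross {n : ℕ} {T : Finset (ℕ × ℕ)}
    (hT : IsTriangulation n T) {a b c d : ℕ} (h1 : (a, b) ∈ T) (h2 : (c, d) ∈ T) :
    ¬(a < c ∧ c < b ∧ b < d) := hT.2.2.2.2 _ h1 _ h2

lemma dot_stdE (n t : ℕ) (ht1 : 1 ≤ t) (ht2 : t ≤ n + 1) (f : Fin (n + 1) → ℤ) :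
    ∑ x : Fin (n + 1), f x * stdE n t x = f ⟨t - 1, by omega⟩ := by
  rw [Finset.sum_eq_single (⟨t - 1, by omega⟩ : Fin (n + 1))]
  · simp [stdE, Nat.sub_add_cancel ht1]
  · intro b _ hb
    have : (b : ℕ) + 1 ≠ t := by
      intro h; apply hb; exact Fin.ext (by simp; omega)
    simp [stdE, this]
  · intro h; exact absurd (Finset.mem_univ _) h

lemma dotW (n m t : ℕ) (ht1 : 1 ≤ t) (ht2 : t ≤ n + 1) :
    ∑ x : Fin (n + 1), Wrep n m x * stdE n t x = if t ≤ m then 1 else 0 := by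
  rw [dot_stdE n t ht1 ht2]
  simp only [Wrep]
  rw [Nat.sub_add_cancel ht1]

lemma key (n a b c d : ℕ) (hc1 : 1 ≤ c) (hc2 : c ≤ n + 1) (hd1 : 1 ≤ d) (hd2 : d ≤ n + 1) :
    ∑ x : Fin (n + 1), (Wrep n a x - Wrep n b x) * (stdE n c x - stdE n d x)
      = (if c ≤ a then (1 : ℤ) else 0) - (if d ≤ a then 1 else 0)
        - (if c ≤ b then 1 else 0) + (if d ≤ b then 1 else 0) := by
  have h : ∀ x : Fin (n + 1), (Wrep n a x - Wrep n b x) * (stdE n c x - stdE n d x)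
      = (Wrep n a x * stdE n c x - Wrep n a x * stdE n d x)
        - (Wrep n b x * stdE n c x - Wrep n b x * stdE n d x) := fun x => by ring
  rw [Finset.sum_congr rfl fun x _ => h x, Finset.sum_sub_distrib,
    Finset.sum_sub_distrib, Finset.sum_sub_distrib,
    dotW n a c hc1 hc2, dotW n a d hd1 hd2, dotW n b c hc1 hc2, dotW n b d hd1 hd2]
  ring

set_option maxHeartbeats 1600000

/-- `⟨v_i, p_j⟩ = δ_{ij}` and `⟨w_i, q_j⟩ = δ_{ij}`, where the pairing between
`N = ℤ^{n+1}/ℤ(1,…,1)` and `M = {x : ∑ x_i = 0}` is induced by the dot product on `ℤ^{n+1}`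
(hence is computed by the dot product of any representative with `p_j`, resp. `q_j`). -/
theorem stmt3 (n : ℕ) (hn : 1 ≤ n) (T : Finset (ℕ × ℕ)) (hT : IsTriangulation n T)
    (kL kR : ℕ → ℕ) (hmid : MidTriangle n T kL kR) :
    ∀ i j, 1 ≤ i → i ≤ n → 1 ≤ j → j ≤ n →
      (∑ x : Fin (n + 1), vRep n kR i x * pVec n kL j x) = (if i = j then 1 else 0) ∧
      (∑ x : Fin (n + 1), wRep n kL i x * qVec n kR j x) = (if i = j then 1 else 0) := by
  intro i j hi1 hi2 hj1 hj2
  obtain ⟨hiL, hiR, hA1, hA2, hA3⟩ := hmid i hi1 hi2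
  obtain ⟨hjL, hjR, hB1, hB2, hB3⟩ := hmid j hj1 hj2
  have hbRi : kR i ≤ n + 1 := (hT.1 _ hA2).2
  have hbRj : kR j ≤ n + 1 := (hT.1 _ hB2).2
  have n11 := noncross hT hA1 hB1
  have n12 := noncross hT hA1 hB2
  have n13 := noncross hT hA1 hB3
  have n21 := noncross hT hA2 hB1
  have n22 := noncross hT hA2 hB2
  have n23 := noncross hT hA2 hB3
  have n31 := noncross hT hA3 hB1
  have n32 := noncross hT hA3 hB2
  have n33 := noncross hT hA3 hB3
  have m11 := noncross hT hB1 hA1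
  have m12 := noncross hT hB1 hA2
  have m13 := noncross hT hB1 hA3
  have m21 := noncross hT hB2 hA1
  have m22 := noncross hT hB2 hA2
  have m23 := noncross hT hB2 hA3
  have m31 := noncross hT hB3 hA1
  have m32 := noncross hT hB3 hA2
  have m33 := noncross hT hB3 hA3
  constructor
  · have e1 : ∀ x : Fin (n + 1), vRep n kR i x * pVec n kL j x
        = (Wrep n i x - Wrep n (kR i) x) * (stdE n (kL j + 1) x - stdE n (j + 1) x) :=
      fun x => by simp only [vRep, pVec, Pi.sub_apply]
    rw [Finset.sum_congr rfl fun x _ => e1 x,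
      key n i (kR i) (kL j + 1) (j + 1) (by omega) (by omega) (by omega) (by omega)]
    split_ifs <;> omega
  · have e2 : ∀ x : Fin (n + 1), wRep n kL i x * qVec n kR j x
        = (Wrep n (kL i) x - Wrep n i x) * (stdE n (kR j) x - stdE n j x) :=
      fun x => by simp only [wRep, qVec, Pi.sub_apply, Pi.add_apply, Pi.neg_apply]; ring
    rw [Finset.sum_congr rfl fun x _ => e2 x,
      key n (kL i) i (kR j) j (by omega) (by omega) (by omega) (by omega)]
    split_ifs <;> omega
end

section
/- Let T be a triangulation of P_{n+2}. The vectors v_1,…,v_n form a ℤ-basis of the lattice N = ℤ^{n+1}/ℤ(1,…,1), and likewise the vectors w_1,…,w_n form a ℤ-basis of N. -/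
/-- The lattice `N = ℤ^{n+1}/ℤ(1,…,1)`. -/
abbrev Nlat (n : ℕ) : Type :=
  (Fin (n + 1) → ℤ) ⧸ (Submodule.span ℤ ({fun _ => 1} : Set (Fin (n + 1) → ℤ)))

/-- `ϖ_i ∈ N`, the image of `e_1 + ⋯ + e_i` (so `ϖ_0 = ϖ_{n+1} = 0`). -/
def varpi (n : ℕ) (i : ℕ) : Nlat n :=
  Submodule.Quotient.mk (fun x => if (x : ℕ) + 1 ≤ i then 1 else 0)

/-- `v_k = ϖ_k − ϖ_{k_R} ∈ N`. -/
noncomputable def vVec (n : ℕ) (kR : ℕ → ℕ) (k : ℕ) : Nlat n := varpi n k - varpi n (kR k)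

/-- `w_k = ϖ_{k_L} − ϖ_k ∈ N`. -/
noncomputable def wVec (n : ℕ) (kL : ℕ → ℕ) (k : ℕ) : Nlat n := varpi n (kL k) - varpi n k

/-!
In `N`, the classes `ϖ_1, …, ϖ_n` form a basis: the images `e_i = ϖ_{i+1} - ϖ_i` of the standard
basis vectors lie in their span, and the consecutive-difference map `ℤ^{n+1} → ℤ^n`, which kills
`(1,…,1)`, sends `ϖ_j` to the `j`-th standard basis vector. Since `ϖ_{n+1} = 0` and
`k_L < k < k_R`, the coordinates of `v_k = ϖ_k - ϖ_{k_R}` in this basis form a unitriangular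
matrix, and those of `w_k = ϖ_{k_L} - ϖ_k` form a triangular matrix with diagonal `-1`; both are
invertible over `ℤ`.
-/

open Module Submodule

theorem Matrix.isUnit_det_of_triangular {m R : Type*} [Fintype m] [DecidableEq m] [LinearOrder m]
    [CommRing R] {M : Matrix m m R} (htri : M.IsUpperTriangular ∨ M.IsLowerTriangular)
    (hdiag : ∀ i, IsUnit (M i i)) : IsUnit M.det := by
  rcases htri with h | h
  · rw [Matrix.det_of_isUpperTriangular h]
    exact IsUnit.prod_univ_iff.2 hdiag
  · rw [Matrix.det_of_isLowerTriangular M h]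
    exact IsUnit.prod_univ_iff.2 hdiag

theorem Module.Basis.isBasis_of_triangular {ι R M : Type*} [Fintype ι] [DecidableEq ι]
    [LinearOrder ι] [CommRing R] [AddCommGroup M] [Module R M] (b : Basis ι R M) {v : ι → M}
    (htri : (b.toMatrix v).IsUpperTriangular ∨ (b.toMatrix v).IsLowerTriangular)
    (hdiag : ∀ i, IsUnit (b.repr (v i) i)) :
    LinearIndependent R v ∧ span R (Set.range v) = ⊤ := by
  rw [b.is_basis_iff_det, b.det_apply]
  exact Matrix.isUnit_det_of_triangular htri hdiag

lemma varpi_zero (n : ℕ) : varpi n 0 = 0 := by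
  have : (fun x : Fin (n + 1) => if (x : ℕ) + 1 ≤ 0 then (1 : ℤ) else 0) = 0 := by
    funext x
    simp
  rw [varpi, this, Quotient.mk_zero]

lemma varpi_eq_zero_of_le {n m : ℕ} (hm : n + 1 ≤ m) : varpi n m = 0 := by
  rw [varpi, Quotient.mk_eq_zero]
  convert mem_span_singleton_self (R := ℤ) (fun _ : Fin (n + 1) => (1 : ℤ)) using 1
  funext x
  rw [if_pos (by omega)]

lemma mk_single_eq_varpi_sub (n : ℕ) (i : Fin (n + 1)) :
    (Submodule.Quotient.mk (Pi.single i 1) : Nlat n) = varpi n (i + 1) - varpi n i := by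
  rw [varpi, varpi, ← Quotient.mk_sub]
  congr 1
  funext x
  simp only [Pi.single_apply, Pi.sub_apply, Fin.ext_iff]
  split_ifs <;> omega

def consecDiff (n : ℕ) : (Fin (n + 1) → ℤ) →ₗ[ℤ] (Fin n → ℤ) :=
  LinearMap.pi fun j => LinearMap.proj (R := ℤ) (φ := fun _ => ℤ) j.castSucc - LinearMap.proj j.succ

def Nlat.consecDiff (n : ℕ) : Nlat n →ₗ[ℤ] (Fin n → ℤ) :=
  liftQ _ (_root_.consecDiff n) <| by
    rw [span_le, Set.singleton_subset_iff, SetLike.mem_coe, LinearMap.mem_ker]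
    funext j
    simp [_root_.consecDiff]

lemma Nlat.consecDiff_varpi (n : ℕ) (j : Fin n) :
    Nlat.consecDiff n (varpi n (j + 1)) = Pi.single j 1 := by
  funext i
  simp only [Nlat.consecDiff, varpi, liftQ_apply, _root_.consecDiff, LinearMap.pi_apply,
    LinearMap.sub_apply, LinearMap.proj_apply, Fin.val_castSucc, Fin.val_succ,
    Pi.single_apply, Fin.ext_iff]
  split_ifs <;> omega

lemma linearIndependent_varpi (n : ℕ) :
    LinearIndependent ℤ (fun j : Fin n => varpi n (j + 1)) := by
  apply LinearIndependent.of_comp (Nlat.consecDiff n)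
  have : Nlat.consecDiff n ∘ (fun j : Fin n => varpi n (j + 1)) = Pi.basisFun ℤ (Fin n) := by
    funext j
    simp [Nlat.consecDiff_varpi]
  rw [this]
  exact (Pi.basisFun ℤ (Fin n)).linearIndependent

lemma span_varpi (n : ℕ) :
    span ℤ (Set.range fun j : Fin n => varpi n (j + 1)) = ⊤ := by
  set S := span ℤ (Set.range fun j : Fin n => varpi n (j + 1))
  have hvarpi : ∀ m ≤ n + 1, varpi n m ∈ S := by
    intro m hm
    rcases Nat.eq_zero_or_pos m with rfl | hpos
    · rw [varpi_zero]; exact zero_mem S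
    rcases hm.lt_or_eq with hlt | rfl
    · obtain ⟨j, rfl⟩ : ∃ j, m = j + 1 := ⟨m - 1, by omega⟩
      exact subset_span ⟨⟨j, by omega⟩, rfl⟩
    · rw [varpi_eq_zero_of_le le_rfl]; exact zero_mem S
  have hsingle : ∀ i : Fin (n + 1), (Submodule.Quotient.mk (Pi.single i 1) : Nlat n) ∈ S := fun i => by
    rw [mk_single_eq_varpi_sub]
    exact sub_mem (hvarpi _ i.isLt) (hvarpi _ i.isLt.le)
  rw [eq_top_iff]
  rintro x -
  obtain ⟨f, rfl⟩ := Submodule.Quotient.mk_surjective _ x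
  rw [← mkQ_apply, ← (Pi.basisFun ℤ (Fin (n + 1))).sum_repr f, map_sum]
  exact sum_mem fun i _ => by
    simpa only [map_smul, Pi.basisFun_apply, mkQ_apply] using smul_mem S _ (hsingle i)

noncomputable def varpiBasis (n : ℕ) : Basis (Fin n) ℤ (Nlat n) :=
  .mk (linearIndependent_varpi n) (span_varpi n).ge

lemma varpiBasis_repr_varpi (n m : ℕ) (i : Fin n) :
    (varpiBasis n).repr (varpi n m) i = if (i : ℕ) + 1 = m then 1 else 0 := by
  rcases Nat.eq_zero_or_pos m with rfl | hpos
  · simp [varpi_zero]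
  rcases le_or_gt (n + 1) m with hle | hlt
  · rw [varpi_eq_zero_of_le hle, if_neg (by omega)]
    simp
  obtain ⟨j, rfl⟩ : ∃ j : Fin n, m = j + 1 := ⟨⟨m - 1, by omega⟩, by simp; omega⟩
  have : varpi n (j + 1) = varpiBasis n j := by simp [varpiBasis]
  rw [this, Basis.repr_self, Finsupp.single_apply]
  simp only [add_left_inj, Fin.ext_iff, eq_comm]

lemma isBasis_varpi_succ_sub {n : ℕ} (f : Fin n → ℕ) (hf : ∀ j : Fin n, (j : ℕ) + 1 < f j) :
    LinearIndependent ℤ (fun j : Fin n => varpi n (j + 1) - varpi n (f j)) ∧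
      span ℤ (Set.range fun j : Fin n => varpi n (j + 1) - varpi n (f j)) = ⊤ := by
  refine (varpiBasis n).isBasis_of_triangular (.inr fun i j (hij : (i : ℕ) < j) => ?_) fun j => ?_
  all_goals
    have := hf j
    simp only [Basis.toMatrix_apply, map_sub, Finsupp.sub_apply, varpiBasis_repr_varpi]
  · rw [if_neg (by omega), if_neg (by omega), sub_zero]
  · rw [if_pos trivial, if_neg (by omega), sub_zero]
    exact isUnit_one

lemma isBasis_sub_varpi_succ {n : ℕ} (f : Fin n → ℕ) (hf : ∀ j : Fin n, f j < (j : ℕ) + 1) :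
    LinearIndependent ℤ (fun j : Fin n => varpi n (f j) - varpi n (j + 1)) ∧
      span ℤ (Set.range fun j : Fin n => varpi n (f j) - varpi n (j + 1)) = ⊤ := by
  refine (varpiBasis n).isBasis_of_triangular (.inl fun i j (hij : (j : ℕ) < i) => ?_) fun j => ?_
  all_goals
    have := hf j
    simp only [Basis.toMatrix_apply, map_sub, Finsupp.sub_apply, varpiBasis_repr_varpi]
  · rw [if_neg (by omega), if_neg (by omega), sub_zero]
  · rw [if_neg (by omega), if_pos trivial, zero_sub]
    exact isUnit_one.neg

theorem stmt4_general (n : ℕ) (T : Finset (ℕ × ℕ))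
    (kL kR : ℕ → ℕ) (hmid : MidTriangle n T kL kR) :
    (LinearIndependent ℤ (fun k : Fin n => vVec n kR ((k : ℕ) + 1)) ∧
      Submodule.span ℤ (Set.range fun k : Fin n => vVec n kR ((k : ℕ) + 1)) = ⊤) ∧
    (LinearIndependent ℤ (fun k : Fin n => wVec n kL ((k : ℕ) + 1)) ∧
      Submodule.span ℤ (Set.range fun k : Fin n => wVec n kL ((k : ℕ) + 1)) = ⊤) :=
  ⟨isBasis_varpi_succ_sub _ fun j => (hmid (j + 1) (by omega) j.isLt).2.1,
    isBasis_sub_varpi_succ _ fun j => (hmid (j + 1) (by omega) j.isLt).1⟩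

/-- The vectors `v_1,…,v_n` form a ℤ-basis of `N = ℤ^{n+1}/ℤ(1,…,1)`, and likewise
`w_1,…,w_n` form a ℤ-basis of `N`. -/
theorem stmt4 (n : ℕ) (hn : 1 ≤ n) (T : Finset (ℕ × ℕ)) (hT : IsTriangulation n T)
    (kL kR : ℕ → ℕ) (hmid : MidTriangle n T kL kR) :
    (LinearIndependent ℤ (fun k : Fin n => vVec n kR ((k : ℕ) + 1)) ∧
      Submodule.span ℤ (Set.range fun k : Fin n => vVec n kR ((k : ℕ) + 1)) = ⊤) ∧
    (LinearIndependent ℤ (fun k : Fin n => wVec n kL ((k : ℕ) + 1)) ∧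
      Submodule.span ℤ (Set.range fun k : Fin n => wVec n kL ((k : ℕ) + 1)) = ⊤) :=
  stmt4_general n T kL kR hmid
end

section
/- Let T be a triangulation of P_{n+2}. There is a unique k_0 ∈ {1,…,n} such that v_{k_0} + w_{k_0} = 0, namely the middle vertex of the triangle of T containing the edge {0,n+1} (i.e. the unique k with k_L = 0 and k_R = n+1). Moreover, for every k ∈ {1,…,n} with k ≠ k_0 one has v_k + w_k = v_{k_L} if {k_L, k_R} is an edge of the right tree T^R, and v_k + w_k = w_{k_R} if {k_L, k_R} is an edge of the left tree T^L. -/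
lemma varpi_eq_iff (n a b : ℕ) (hab : a < b) (hb : b ≤ n + 1) :
    varpi n a = varpi n b ↔ a = 0 ∧ b = n + 1 := by
  unfold varpi
  rw [Submodule.Quotient.eq, Submodule.mem_span_singleton]
  constructor
  · rintro ⟨c, hc⟩
    have ha' : a ≤ n := by omega
    have hA := congrFun hc ⟨a, by omega⟩
    simp only [Pi.smul_apply, Pi.sub_apply, smul_eq_mul, mul_one] at hA
    rw [if_neg (by omega), if_pos (by omega)] at hA
    -- c = -1
    constructor
    · by_contra h0
      have hB := congrFun hc ⟨0, by omega⟩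
      simp only [Pi.smul_apply, Pi.sub_apply, smul_eq_mul, mul_one] at hB
      rw [if_pos (by omega), if_pos (by omega)] at hB
      omega
    · by_contra h0
      have hb' : b ≤ n := by omega
      have hB := congrFun hc ⟨b, by omega⟩
      simp only [Pi.smul_apply, Pi.sub_apply, smul_eq_mul, mul_one] at hB
      rw [if_neg (by omega), if_neg (by omega)] at hB
      omega
  · rintro ⟨rfl, rfl⟩
    refine ⟨-1, ?_⟩
    funext x
    simp only [Pi.smul_apply, Pi.sub_apply, smul_eq_mul, mul_one]
    rw [if_neg (by omega), if_pos (by omega)]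
    ring

/-- There is a unique `k₀ ∈ {1,…,n}` with `v_{k₀} + w_{k₀} = 0`, namely the middle vertex of
the triangle of `T` containing the edge `{0,n+1}` (the unique `k` with `k_L = 0` and
`k_R = n+1`); and for every other `k`, `v_k + w_k = v_{k_L}` if `{k_L,k_R}` is an edge of the
right tree `T^R` (i.e. `{k_L,k_R} = {m, m_R}` for some `m ∈ {1,…,n}`), and `v_k + w_k = w_{k_R}`
if `{k_L,k_R}` is an edge of the left tree `T^L` (i.e. `{k_L,k_R} = {m_L, m}` for some
`m ∈ {1,…,n}`). -/
theorem stmt5 (n : ℕ) (hn : 1 ≤ n) (T : Finset (ℕ × ℕ)) (hT : IsTriangulation n T)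
    (kL kR : ℕ → ℕ) (hmid : MidTriangle n T kL kR) :
    (∃! k0 : ℕ, 1 ≤ k0 ∧ k0 ≤ n ∧ vVec n kR k0 + wVec n kL k0 = 0) ∧
    (∀ k0, 1 ≤ k0 → k0 ≤ n →
      (vVec n kR k0 + wVec n kL k0 = 0 ↔ kL k0 = 0 ∧ kR k0 = n + 1)) ∧
    (∀ k, 1 ≤ k → k ≤ n → ¬(kL k = 0 ∧ kR k = n + 1) →
      ((∃ m, 1 ≤ m ∧ m ≤ n ∧ kL k = m ∧ kR k = kR m) →
        vVec n kR k + wVec n kL k = vVec n kR (kL k)) ∧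
      ((∃ m, 1 ≤ m ∧ m ≤ n ∧ kR k = m ∧ kL k = kL m) →
        vVec n kR k + wVec n kL k = wVec n kL (kR k))) := by
  obtain ⟨hub, hbd, hlong, hcard, hcross⟩ := hT
  have hiff : ∀ k, 1 ≤ k → k ≤ n →
      (vVec n kR k + wVec n kL k = 0 ↔ kL k = 0 ∧ kR k = n + 1) := by
    intro k hk1 hkn
    obtain ⟨hL, hR, hLk, hkR, hLR⟩ := hmid k hk1 hkn
    have h1 : vVec n kR k + wVec n kL k = varpi n (kL k) - varpi n (kR k) := by
      unfold vVec wVec; abel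
    rw [h1, sub_eq_zero]
    exact varpi_eq_iff n _ _ (hL.trans hR) (hub _ hkR).2
  refine ⟨?_, hiff, ?_⟩
  · -- existence and uniqueness of k0
    set S := (Finset.Icc 1 n).filter (fun j => (0, j) ∈ T) with hS
    have h1S : 1 ∈ S := by
      simp only [hS, Finset.mem_filter, Finset.mem_Icc]
      exact ⟨⟨le_refl 1, hn⟩, hbd 0 (by omega)⟩
    have hne : S.Nonempty := ⟨1, h1S⟩
    set k0 := S.max' hne with hk0def
    have hk0S : k0 ∈ S := S.max'_mem hne
    simp only [hS, Finset.mem_filter, Finset.mem_Icc] at hk0S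
    obtain ⟨⟨hk01, hk0n⟩, hk0T⟩ := hk0S
    obtain ⟨hL, hR, hLk, hkR, hLR⟩ := hmid k0 hk01 hk0n
    have hkL0 : kL k0 = 0 := by
      by_contra h0
      exact hcross (0, k0) hk0T (kL k0, kR k0) hLR ⟨by omega, hL, hR⟩
    have hkR0 : kR k0 = n + 1 := by
      have hub' := (hub _ hkR).2
      by_contra h0
      have : kR k0 ∈ S := by
        simp only [hS, Finset.mem_filter, Finset.mem_Icc]
        refine ⟨⟨by omega, by omega⟩, ?_⟩
        rwa [hkL0] at hLR
      have := S.le_max' _ this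
      omega
    refine ⟨k0, ⟨hk01, hk0n, (hiff k0 hk01 hk0n).2 ⟨hkL0, hkR0⟩⟩, ?_⟩
    rintro y ⟨hy1, hyn, hy0⟩
    obtain ⟨hyL0, hyR0⟩ := (hiff y hy1 hyn).1 hy0
    by_contra hne'
    obtain ⟨hL', hR', hLk', hkR', hLR'⟩ := hmid y hy1 hyn
    rcases lt_or_gt_of_ne hne' with h | h
    · -- y < k0 : edges (0, k0) and (y, n+1) cross
      rw [hyR0] at hkR'
      exact hcross (0, k0) hk0T (y, n + 1) hkR' ⟨by omega, h, by omega⟩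
    · -- k0 < y : edges (0, y) and (k0, n+1) cross
      rw [hyL0] at hLk'
      rw [hkR0] at hkR
      exact hcross (0, y) hLk' (k0, n + 1) hkR ⟨by omega, h, by omega⟩
  · intro k hk1 hkn _
    constructor
    · rintro ⟨m, _, _, h1, h2⟩
      unfold vVec wVec
      rw [h1, ← h2]
      abel
    · rintro ⟨m, _, _, h1, h2⟩
      unfold vVec wVec
      rw [h1, ← h2]
      abel
end

section
/- Let T be a triangulation of P_{n+2}. For every ℓ ∈ {1,…,n}, the preimage φ^{-1}(ℓ) has at most two elements; and if k_1 ≠ k_2 satisfy φ(k_1) = φ(k_2), then σ(k_1) ≠ σ(k_2). -/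
/-- `k0` is the middle vertex of the triangle of `T` containing the distinguished edge
`{0, n+1}`. -/
def IsRootVertex (n : ℕ) (kL kR : ℕ → ℕ) (k0 : ℕ) : Prop :=
  1 ≤ k0 ∧ k0 ≤ n ∧ kL k0 = 0 ∧ kR k0 = n + 1

/-- Defining property of `φ` and the sign map `σ` (with `σ k = true` standing for `+` and
`σ k = false` for `−`): for `k ≠ k0`, if `{k_L, k_R}` is an edge of the right tree `T^R`
(i.e. `{k_L,k_R} = {m, m_R}` for some `m ∈ {1,…,n}`) then `φ k = k_L` and `σ k = +`, and if
`{k_L, k_R}` is an edge of the left tree `T^L` (i.e. `{k_L,k_R} = {m_L, m}` for some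
`m ∈ {1,…,n}`) then `φ k = k_R` and `σ k = −`. -/
def PhiSigma (n : ℕ) (kL kR : ℕ → ℕ) (k0 : ℕ) (φ : ℕ → ℕ) (σ : ℕ → Bool) : Prop :=
  ∀ k, 1 ≤ k → k ≤ n → k ≠ k0 →
    ((∃ m, 1 ≤ m ∧ m ≤ n ∧ kL k = m ∧ kR k = kR m) ∧ φ k = kL k ∧ σ k = true) ∨
    ((∃ m, 1 ≤ m ∧ m ≤ n ∧ kR k = m ∧ kL k = kL m) ∧ φ k = kR k ∧ σ k = false)

lemma core_distinct (n : ℕ) (T : Finset (ℕ × ℕ)) (hT : IsTriangulation n T)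
    (kL kR : ℕ → ℕ) (hmid : MidTriangle n T kL kR)
    (k1 k2 : ℕ) (h11 : 1 ≤ k1) (h12 : k1 ≤ n) (h21 : 1 ≤ k2) (h22 : k2 ≤ n)
    (hlt : k1 < k2) (hL : kL k1 = kL k2) (hR : kR k1 = kR k2) : False := by
  obtain ⟨a1, b1, e1, f1, g1⟩ := hmid k1 h11 h12
  obtain ⟨a2, b2, e2, f2, g2⟩ := hmid k2 h21 h22
  exact hT.2.2.2.2 (kL k2, k2) e2 (k1, kR k1) f1 ⟨by omega, by omega, by omega⟩

lemma sigma_ne (n : ℕ) (T : Finset (ℕ × ℕ)) (hT : IsTriangulation n T)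
    (kL kR : ℕ → ℕ) (hmid : MidTriangle n T kL kR)
    (k0 : ℕ) (φ : ℕ → ℕ) (σ : ℕ → Bool) (hφσ : PhiSigma n kL kR k0 φ σ)
    (k1 k2 : ℕ) (h11 : 1 ≤ k1) (h12 : k1 ≤ n) (hn1 : k1 ≠ k0)
    (h21 : 1 ≤ k2) (h22 : k2 ≤ n) (hn2 : k2 ≠ k0)
    (hne : k1 ≠ k2) (hφ : φ k1 = φ k2) : σ k1 ≠ σ k2 := by
  intro hσ
  rcases hφσ k1 h11 h12 hn1 with ⟨⟨m1, _, _, hm1L, hm1R⟩, hφ1, hσ1⟩ |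
    ⟨⟨m1, _, _, hm1R, hm1L⟩, hφ1, hσ1⟩ <;>
  rcases hφσ k2 h21 h22 hn2 with ⟨⟨m2, _, _, hm2L, hm2R⟩, hφ2, hσ2⟩ |
    ⟨⟨m2, _, _, hm2R, hm2L⟩, hφ2, hσ2⟩
  · have hL : kL k1 = kL k2 := by rw [← hφ1, ← hφ2, hφ]
    have hR : kR k1 = kR k2 := by
      rw [hm1R, hm2R, ← hm1L, ← hm2L, hL]
    rcases lt_or_gt_of_ne hne with h | h
    · exact core_distinct n T hT kL kR hmid k1 k2 h11 h12 h21 h22 h hL hR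
    · exact core_distinct n T hT kL kR hmid k2 k1 h21 h22 h11 h12 h hL.symm hR.symm
  · rw [hσ1, hσ2] at hσ; exact Bool.noConfusion hσ
  · rw [hσ1, hσ2] at hσ; exact Bool.noConfusion hσ
  · have hR : kR k1 = kR k2 := by rw [← hφ1, ← hφ2, hφ]
    have hL : kL k1 = kL k2 := by
      rw [hm1L, hm2L, ← hm1R, ← hm2R, hR]
    rcases lt_or_gt_of_ne hne with h | h
    · exact core_distinct n T hT kL kR hmid k1 k2 h11 h12 h21 h22 h hL hR
    · exact core_distinct n T hT kL kR hmid k2 k1 h21 h22 h11 h12 h hL.symm hR.symm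

/-- For every `ℓ ∈ {1,…,n}`, the preimage `φ⁻¹(ℓ)` has at most two elements; and if
`k₁ ≠ k₂` satisfy `φ(k₁) = φ(k₂)`, then `σ(k₁) ≠ σ(k₂)`. -/
theorem stmt6 (n : ℕ) (hn : 1 ≤ n) (T : Finset (ℕ × ℕ)) (hT : IsTriangulation n T)
    (kL kR : ℕ → ℕ) (hmid : MidTriangle n T kL kR)
    (k0 : ℕ) (hk0 : IsRootVertex n kL kR k0)
    (φ : ℕ → ℕ) (σ : ℕ → Bool) (hφσ : PhiSigma n kL kR k0 φ σ) :
    (∀ ℓ, 1 ≤ ℓ → ℓ ≤ n →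
      ((Finset.Icc 1 n).filter fun k => k ≠ k0 ∧ φ k = ℓ).card ≤ 2) ∧
    (∀ k1 k2, 1 ≤ k1 → k1 ≤ n → k1 ≠ k0 → 1 ≤ k2 → k2 ≤ n → k2 ≠ k0 →
      k1 ≠ k2 → φ k1 = φ k2 → σ k1 ≠ σ k2) := by
  constructor
  · intro ℓ hℓ1 hℓ2
    have h2 : ((Finset.Icc 1 n).filter fun k => k ≠ k0 ∧ φ k = ℓ).card ≤
        (Finset.univ : Finset Bool).card := by
      apply Finset.card_le_card_of_injOn σ (fun _ _ => Finset.mem_univ _)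
      intro a ha b hb hσ
      simp only [Finset.mem_coe, Finset.mem_filter, Finset.mem_Icc] at ha hb
      by_contra hne
      exact sigma_ne n T hT kL kR hmid k0 φ σ hφσ a b ha.1.1 ha.1.2 ha.2.1
        hb.1.1 hb.1.2 hb.2.1 hne (ha.2.2.trans hb.2.2.symm) hσ
    simpa using h2
  · intro k1 k2 h11 h12 hn1 h21 h22 hn2 hne hφ
    exact sigma_ne n T hT kL kR hmid k0 φ σ hφσ k1 k2 h11 h12 hn1 h21 h22 hn2 hne hφ
end

section
/- Let T be a triangulation of P_{n+2}. There exists a permutation u ∈ S_n such that u(k_0) = 1 and u(φ(k)) < u(k) for every k ∈ {1,…,n} with k ≠ k_0. -/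
private lemma keyaux {a b c j k : ℕ} (hab : a < b) (hj : j < c) :
    a * c + j < b * c + k := by
  have h1 : (a + 1) * c ≤ b * c := Nat.mul_le_mul_right c hab
  have h2 : (a + 1) * c = a * c + c := by ring
  linarith

/-- There exists a permutation `u` of `{1,…,n}` such that `u(k₀) = 1` and `u(φ(k)) < u(k)`
for every `k ∈ {1,…,n}` with `k ≠ k₀`. -/
theorem stmt7 (n : ℕ) (hn : 1 ≤ n) (T : Finset (ℕ × ℕ)) (hT : IsTriangulation n T)
    (kL kR : ℕ → ℕ) (hmid : MidTriangle n T kL kR)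
    (k0 : ℕ) (hk0 : IsRootVertex n kL kR k0)
    (φ : ℕ → ℕ) (σ : ℕ → Bool) (hφσ : PhiSigma n kL kR k0 φ σ) :
    ∃ u : ℕ → ℕ, Set.BijOn u (Set.Icc 1 n) (Set.Icc 1 n) ∧ u k0 = 1 ∧
      ∀ k, 1 ≤ k → k ≤ n → k ≠ k0 → u (φ k) < u k := by
  classical
  obtain ⟨hk01, hk0n, hkL0, hkR0⟩ := hk0
  set w : ℕ → ℕ := fun k => kR k - kL k with hw
  set key : ℕ → ℕ := fun k => (n + 1 - w k) * (n + 2) + k with hkey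
  set s : Finset ℕ := Finset.Icc 1 n with hs
  set u : ℕ → ℕ := fun k => (s.filter fun j => key j ≤ key k).card with hu
  -- basic bounds
  have hbound : ∀ k, 1 ≤ k → k ≤ n → kL k < k ∧ k < kR k ∧ kR k ≤ n + 1 := by
    intro k h1 h2
    obtain ⟨hl, hr, _, hmem, _⟩ := hmid k h1 h2
    exact ⟨hl, hr, (hT.1 _ hmem).2⟩
  have hphi : ∀ k, 1 ≤ k → k ≤ n → k ≠ k0 →
      1 ≤ φ k ∧ φ k ≤ n ∧ w k < w (φ k) ∧ w k ≤ n := by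
    intro k h1 h2 hne
    rcases hφσ k h1 h2 hne with ⟨⟨m, hm1, hm2, hLm, hRm⟩, hφk, -⟩ |
        ⟨⟨m, hm1, hm2, hRm, hLm⟩, hφk, -⟩
    · obtain ⟨hlk, hrk, hrkn⟩ := hbound k h1 h2
      obtain ⟨hlm, hrm, hrmn⟩ := hbound m hm1 hm2
      have hφm : φ k = m := by rw [hφk, hLm]
      refine ⟨by omega, by omega, ?_, ?_⟩ <;> simp only [hw, hφm] <;> omega
    · obtain ⟨hlk, hrk, hrkn⟩ := hbound k h1 h2
      obtain ⟨hlm, hrm, hrmn⟩ := hbound m hm1 hm2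
      have hφm : φ k = m := by rw [hφk, hRm]
      refine ⟨by omega, by omega, ?_, ?_⟩ <;> simp only [hw, hφm] <;> omega
  have hwk0 : w k0 = n + 1 := by simp [hw, hkL0, hkR0]
  have hkeyk0 : key k0 = k0 := by simp [hkey, hwk0]
  have hkeylt : ∀ j k, j ≤ n → w k < w j → w j ≤ n + 1 → key j < key k := by
    intro j k hj hwlt hwle
    have hab : n + 1 - w j < n + 1 - w k := by omega
    exact keyaux hab (by omega)
  have hmono : ∀ j k, k ∈ s → key j < key k → u j < u k := by
    intro j k hks hlt
    apply Finset.card_lt_card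
    refine ⟨fun x hx => ?_, fun hsub => ?_⟩
    · simp only [Finset.mem_filter] at hx ⊢
      exact ⟨hx.1, hx.2.trans hlt.le⟩
    · have hk : k ∈ s.filter fun j => key j ≤ key k :=
        Finset.mem_filter.mpr ⟨hks, le_refl _⟩
      have := (Finset.mem_filter.mp (hsub hk)).2
      omega
  have hk0s : k0 ∈ s := Finset.mem_Icc.mpr ⟨hk01, hk0n⟩
  -- key is large on non-root vertices
  have hkeybig : ∀ j, 1 ≤ j → j ≤ n → j ≠ k0 → n + 2 ≤ key j := by
    intro j hj1 hjn hne
    have hwj : w j ≤ n := (hphi j hj1 hjn hne).2.2.2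
    have h1 : 1 ≤ n + 1 - w j := by omega
    have h2 : 1 * (n + 2) ≤ (n + 1 - w j) * (n + 2) := Nat.mul_le_mul_right _ h1
    calc n + 2 = 1 * (n + 2) := (one_mul _).symm
      _ ≤ (n + 1 - w j) * (n + 2) := h2
      _ ≤ (n + 1 - w j) * (n + 2) + j := Nat.le_add_right _ _
      _ = key j := rfl
  have huk0 : u k0 = 1 := by
    have hfil : (s.filter fun j => key j ≤ key k0) = {k0} := by
      ext j
      simp only [Finset.mem_filter, Finset.mem_singleton, hs, Finset.mem_Icc]
      constructor
      · rintro ⟨⟨hj1, hjn⟩, hle⟩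
        by_contra hne
        have := hkeybig j hj1 hjn hne
        rw [hkeyk0] at hle
        omega
      · rintro rfl
        exact ⟨⟨hk01, hk0n⟩, le_refl _⟩
    show (s.filter fun j => key j ≤ key k0).card = 1
    rw [hfil, Finset.card_singleton]
  -- u maps s into [1, n]
  have hcards : s.card = n := by simp [hs]
  have humem : ∀ k, k ∈ s → 1 ≤ u k ∧ u k ≤ n := by
    intro k hks
    have h5 : u k = (s.filter fun j => key j ≤ key k).card := rfl
    constructor
    · have hk : k ∈ s.filter fun j => key j ≤ key k :=
        Finset.mem_filter.mpr ⟨hks, le_refl _⟩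
      have := Finset.card_pos.mpr ⟨k, hk⟩
      omega
    · have := Finset.card_filter_le s (fun j => key j ≤ key k)
      omega
  -- key is injective on [1, n]
  have hkeyinj : ∀ j k, j ≤ n → k ≤ n → key j = key k → j = k := by
    intro j k hj hk heq
    rcases lt_trichotomy (n + 1 - w j) (n + 1 - w k) with h | h | h
    · exact absurd heq (ne_of_lt (keyaux h (by omega)))
    · have h3 : key j = (n + 1 - w j) * (n + 2) + j := rfl
      have h4 : key k = (n + 1 - w k) * (n + 2) + k := rfl
      rw [h3, h4, h] at heq
      exact Nat.add_left_cancel heq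
    · exact absurd heq.symm (ne_of_lt (keyaux h (by omega)))
  have huinj : ∀ j ∈ s, ∀ k ∈ s, u j = u k → j = k := by
    intro j hjs k hks heq
    have hj := Finset.mem_Icc.mp hjs
    have hk := Finset.mem_Icc.mp hks
    rcases lt_trichotomy (key j) (key k) with h | h | h
    · exact absurd heq (ne_of_lt (hmono j k hks h))
    · exact hkeyinj j k hj.2 hk.2 h
    · exact absurd heq.symm (ne_of_lt (hmono k j hjs h))
  -- image of s under u is exactly Icc 1 n
  have himg : s.image u = Finset.Icc 1 n := by
    apply Finset.eq_of_subset_of_card_le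
    · intro y hy
      obtain ⟨x, hxs, rfl⟩ := Finset.mem_image.mp hy
      exact Finset.mem_Icc.mpr (humem x hxs)
    · rw [Finset.card_image_of_injOn (fun a ha b hb => huinj a ha b hb)]
  refine ⟨u, ⟨?_, ?_, ?_⟩, huk0, ?_⟩
  · -- MapsTo
    intro x hx
    have hxs : x ∈ s := Finset.mem_Icc.mpr ⟨hx.1, hx.2⟩
    exact Set.mem_Icc.mpr (humem x hxs)
  · -- InjOn
    intro a ha b hb heq
    exact huinj a (Finset.mem_Icc.mpr ⟨ha.1, ha.2⟩) b (Finset.mem_Icc.mpr ⟨hb.1, hb.2⟩) heq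
  · -- SurjOn
    intro y hy
    have : y ∈ Finset.Icc 1 n := Finset.mem_Icc.mpr ⟨hy.1, hy.2⟩
    rw [← himg] at this
    obtain ⟨x, hxs, hxy⟩ := Finset.mem_image.mp this
    have hx := Finset.mem_Icc.mp hxs
    exact ⟨x, Set.mem_Icc.mpr hx, hxy⟩
  · -- decreasing along φ
    intro k h1 h2 hne
    obtain ⟨hφ1, hφn, hwlt, -⟩ := hphi k h1 h2 hne
    have hwφ : w (φ k) ≤ n + 1 := by
      obtain ⟨hl, hr, hb⟩ := hbound (φ k) hφ1 hφn
      simp only [hw]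
      omega
    exact hmono (φ k) k (Finset.mem_Icc.mpr ⟨h1, h2⟩) (hkeylt (φ k) k hφn hwlt hwφ)
end

section
/- Let T be a triangulation of P_{n+2} and let u ∈ S_n satisfy u(k_0) = 1 and u(φ(k)) < u(k) for all k ≠ k_0. Then for every k ∈ {1,…,n}, the vector v_k + w_k lies in the ℤ-span of {v_j : u(j) < u(k)}; equivalently, the matrix expressing w_{u^{-1}(1)},…,w_{u^{-1}(n)} in the basis v_{u^{-1}(1)},…,v_{u^{-1}(n)} of N is upper triangular with all diagonal entries equal to −1. -/
/-- If `u` is a permutation of `{1,…,n}` with `u(k₀) = 1` and `u(φ(k)) < u(k)` for all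
`k ≠ k₀`, then for every `k ∈ {1,…,n}` the vector `v_k + w_k` lies in the ℤ-span of
`{v_j : u(j) < u(k)}`. -/
theorem stmt8 (n : ℕ) (hn : 1 ≤ n) (T : Finset (ℕ × ℕ)) (hT : IsTriangulation n T)
    (kL kR : ℕ → ℕ) (hmid : MidTriangle n T kL kR)
    (k0 : ℕ) (hk0 : IsRootVertex n kL kR k0)
    (φ : ℕ → ℕ) (σ : ℕ → Bool) (hφσ : PhiSigma n kL kR k0 φ σ)
    (u : ℕ → ℕ) (hu : Set.BijOn u (Set.Icc 1 n) (Set.Icc 1 n)) (huk0 : u k0 = 1)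
    (hmono : ∀ k, 1 ≤ k → k ≤ n → k ≠ k0 → u (φ k) < u k) :
    ∀ k, 1 ≤ k → k ≤ n →
      vVec n kR k + wVec n kL k ∈
        Submodule.span ℤ ((fun j => vVec n kR j) '' {j : ℕ | 1 ≤ j ∧ j ≤ n ∧ u j < u k}) := by
  obtain ⟨hk01, hk0n, hkL0, hkR0⟩ := hk0
  have hvarpi0 : varpi n 0 = 0 := by
    have h : (fun x : Fin (n+1) => if (x : ℕ) + 1 ≤ 0 then (1:ℤ) else 0) = 0 := by
      funext x; simp
    unfold varpi; rw [h]; exact (Submodule.Quotient.mk_eq_zero _).mpr (Submodule.zero_mem _)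
  have hvarpiTop : varpi n (n + 1) = 0 := by
    unfold varpi
    rw [Submodule.Quotient.mk_eq_zero]
    have : (fun x : Fin (n+1) => if (x : ℕ) + 1 ≤ n + 1 then (1:ℤ) else 0)
        = (fun _ => 1) := by
      funext x; exact if_pos (by omega)
    rw [this]
    exact Submodule.subset_span rfl
  have key : ∀ N, ∀ k, 1 ≤ k → k ≤ n → u k ≤ N →
      vVec n kR k + wVec n kL k ∈
        Submodule.span ℤ ((fun j => vVec n kR j) '' {j : ℕ | 1 ≤ j ∧ j ≤ n ∧ u j < u k}) := by
    intro N
    induction N with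
    | zero =>
      intro k hk1 hkn hN
      have := (hu.mapsTo ⟨hk1, hkn⟩).1
      omega
    | succ N ih =>
      intro k hk1 hkn hN
      by_cases hk : k = k0
      · subst hk
        have : vVec n kR k + wVec n kL k = 0 := by
          unfold vVec wVec
          rw [hkL0, hkR0, hvarpi0, hvarpiTop]
          abel
        rw [this]
        exact Submodule.zero_mem _
      · rcases hφσ k hk1 hkn hk with ⟨⟨m, hm1, hmn, hLm, hRm⟩, hφ, _⟩ |
          ⟨⟨m, hm1, hmn, hRm, hLm⟩, hφ, _⟩
        · have hum : u m < u k := by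
            have := hmono k hk1 hkn hk
            rwa [hφ, hLm] at this
          have : vVec n kR k + wVec n kL k = vVec n kR m := by
            unfold vVec wVec
            rw [hLm, hRm]
            abel
          rw [this]
          exact Submodule.subset_span ⟨m, ⟨hm1, hmn, hum⟩, rfl⟩
        · have hum : u m < u k := by
            have := hmono k hk1 hkn hk
            rwa [hφ, hRm] at this
          have heq : vVec n kR k + wVec n kL k
              = (vVec n kR m + wVec n kL m) - vVec n kR m := by
            unfold vVec wVec
            rw [hRm, hLm]
            abel
          rw [heq]
          have h1 : vVec n kR m + wVec n kL m ∈
              Submodule.span ℤ ((fun j => vVec n kR j) '' {j : ℕ | 1 ≤ j ∧ j ≤ n ∧ u j < u k}) := by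
            refine Submodule.span_mono ?_ (ih m hm1 hmn (by omega))
            exact Set.image_mono (fun j hj => ⟨hj.1, hj.2.1, lt_trans hj.2.2 hum⟩)
          have h2 : vVec n kR m ∈
              Submodule.span ℤ ((fun j => vVec n kR j) '' {j : ℕ | 1 ≤ j ∧ j ≤ n ∧ u j < u k}) :=
            Submodule.subset_span ⟨m, ⟨hm1, hmn, hum⟩, rfl⟩
          exact sub_mem h1 h2
  intro k hk1 hkn
  exact key (u k) k hk1 hkn le_rfl
end

section
/- Let T and T' be triangulations of P_{n+2}, with associated data (k_0, φ, v_1,…,v_n, w_1,…,w_n) and (k_0', φ', v_1',…,v_n', w_1',…,w_n'). Then the following are equivalent: (i) there exist a ℤ-linear automorphism Φ of N and a bijection η : {1,…,n} → {1,…,n} such that {Φ(v_i), Φ(w_i)} = {v'_{η(i)}, w'_{η(i)}} for every i ∈ {1,…,n} (i.e. the fans Σ_T and Σ_{T'} are isomorphic); (ii) there exists a bijection f : {1,…,n} → {1,…,n} with f(k_0) = k_0' and f(φ(k)) = φ'(f(k)) for every k ∈ {1,…,n} with k ≠ k_0 (i.e. the binary trees B_T and B_{T'} are isomorphic as unordered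 rooted trees). -/
/-- Defining property of `φ`: for `k ≠ k0`, `φ k = k_L` if `{k_L,k_R}` is an edge of the
right tree `T^R` (i.e. `{k_L,k_R} = {m, m_R}` for some `m ∈ {1,…,n}`), and `φ k = k_R` if
`{k_L,k_R}` is an edge of the left tree `T^L` (i.e. `{k_L,k_R} = {m_L, m}` for some
`m ∈ {1,…,n}`). -/
def PhiMap (n : ℕ) (kL kR : ℕ → ℕ) (k0 : ℕ) (φ : ℕ → ℕ) : Prop :=
  ∀ k, 1 ≤ k → k ≤ n → k ≠ k0 →
    ((∃ m, 1 ≤ m ∧ m ≤ n ∧ kL k = m ∧ kR k = kR m) ∧ φ k = kL k) ∨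
    ((∃ m, 1 ≤ m ∧ m ≤ n ∧ kR k = m ∧ kL k = kL m) ∧ φ k = kR k)


set_option linter.unusedVariables false
set_option linter.unusedSectionVars false

namespace Stmt9Aux
variable {n : ℕ}

lemma interval_eq {a b c d : ℕ} (hab : a < b) (hb : b ≤ n+1) (hcd : c < d) (hd : d ≤ n+1) (t : ℤ)
    (h : ∀ p, 1 ≤ p → p ≤ n+1 →
      (if a < p ∧ p ≤ b then (1:ℤ) else 0) - (if c < p ∧ p ≤ d then 1 else 0) = t) :
    a = c ∧ b = d := by
  have e1 := h b (by omega) (by omega)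
  have e2 := h d (by omega) (by omega)
  have e3 := h (a+1) (by omega) (by omega)
  have e4 := h (c+1) (by omega) (by omega)
  rw [if_pos (show a < b ∧ b ≤ b by omega)] at e1
  rw [if_pos (show c < d ∧ d ≤ d by omega)] at e2
  rw [if_pos (show a < a+1 ∧ a+1 ≤ b by omega)] at e3
  rw [if_pos (show c < c+1 ∧ c+1 ≤ d by omega)] at e4
  split_ifs at e1 e2 e3 e4 <;> omega

lemma interval_zero {a b : ℕ} (hab : a < b) (hb : b ≤ n+1) (t : ℤ)
    (h : ∀ p, 1 ≤ p → p ≤ n+1 → (if a < p ∧ p ≤ b then (1:ℤ) else 0) = t) :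
    a = 0 ∧ b = n+1 := by
  have e1 := h b (by omega) (by omega)
  have e2 := h 1 (by omega) (by omega)
  have e3 := h (n+1) (by omega) (by omega)
  rw [if_pos (show a < b ∧ b ≤ b by omega)] at e1
  split_ifs at e2 e3 <;> omega

lemma chi_sub (a b p : ℕ) (hab : a < b) (hp : 1 ≤ p) :
    (if p ≤ a then (1:ℤ) else 0) - (if p ≤ b then 1 else 0)
      = -(if a < p ∧ p ≤ b then 1 else 0) := by
  split_ifs <;> omega

lemma varpi_zero : varpi n 0 = 0 := by
  rw [varpi]
  have h : (fun x : Fin (n+1) => if (x : ℕ) + 1 ≤ 0 then (1:ℤ) else 0) = 0 := by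
    funext x; simp
  rw [h]
  exact Submodule.Quotient.mk_zero _

lemma varpi_top : varpi n (n+1) = 0 := by
  rw [varpi, Submodule.Quotient.mk_eq_zero]
  refine Submodule.mem_span_singleton.2 ⟨1, ?_⟩
  funext x
  simp [Nat.lt_succ_iff.1 x.isLt]

lemma vp_eq_iff {a b c d : ℕ} (hab : a < b) (hb : b ≤ n+1) (hcd : c < d) (hd : d ≤ n+1) :
    varpi n a - varpi n b = varpi n c - varpi n d ↔ (a = c ∧ b = d) := by
  constructor
  · intro h
    rw [varpi, varpi, varpi, varpi, ← Submodule.Quotient.mk_sub, ← Submodule.Quotient.mk_sub,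
      Submodule.Quotient.eq] at h
    obtain ⟨t, ht⟩ := Submodule.mem_span_singleton.1 h
    refine interval_eq hab hb hcd hd (-t) ?_
    intro p hp1 hp2
    have hx := congrFun ht ⟨p - 1, by omega⟩
    simp only [Pi.smul_apply, Pi.sub_apply, smul_eq_mul, mul_one] at hx
    rw [show ((⟨p - 1, by omega⟩ : Fin (n+1)) : ℕ) + 1 = p from by simp; omega] at hx
    have h1 := chi_sub a b p hab hp1
    have h2 := chi_sub c d p hcd hp1
    omega
  · rintro ⟨rfl, rfl⟩; rfl

lemma vp_eq_zero_iff {a b : ℕ} (hab : a < b) (hb : b ≤ n+1) :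
    varpi n a - varpi n b = 0 ↔ (a = 0 ∧ b = n+1) := by
  constructor
  · intro h
    rw [sub_eq_zero, varpi, varpi, Submodule.Quotient.eq] at h
    obtain ⟨t, ht⟩ := Submodule.mem_span_singleton.1 h
    refine interval_zero hab hb (-t) ?_
    intro p hp1 hp2
    have hx := congrFun ht ⟨p - 1, by omega⟩
    simp only [Pi.smul_apply, Pi.sub_apply, smul_eq_mul, mul_one] at hx
    rw [show ((⟨p - 1, by omega⟩ : Fin (n+1)) : ℕ) + 1 = p from by simp; omega] at hx
    have h1 := chi_sub a b p hab hp1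
    omega
  · rintro ⟨rfl, rfl⟩
    rw [varpi_zero, varpi_top, sub_zero]

end Stmt9Aux

namespace Stmt9Aux

/-- `a` is the R-child of `m`. -/
def Rch (n : ℕ) (kL kR : ℕ → ℕ) (a m : ℕ) : Prop :=
  1 ≤ a ∧ a ≤ n ∧ 1 ≤ m ∧ m ≤ n ∧ kL a = m ∧ kR a = kR m

/-- `a` is the L-child of `m`. -/
def Lch (n : ℕ) (kL kR : ℕ → ℕ) (a m : ℕ) : Prop :=
  1 ≤ a ∧ a ≤ n ∧ 1 ≤ m ∧ m ≤ n ∧ kR a = m ∧ kL a = kL m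

section Comb
variable {n : ℕ} {T : Finset (ℕ × ℕ)} {kL kR : ℕ → ℕ} {k0 : ℕ} {φ : ℕ → ℕ}

lemma kR_le (hT : IsTriangulation n T) (hmid : MidTriangle n T kL kR)
    {k : ℕ} (h1 : 1 ≤ k) (h2 : k ≤ n) : kR k ≤ n + 1 :=
  (hT.1 _ (hmid k h1 h2).2.2.2.1).2

lemma Rch_unique (hT : IsTriangulation n T) (hmid : MidTriangle n T kL kR)
    {a b m : ℕ} (ha : Rch n kL kR a m) (hb : Rch n kL kR b m) : a = b := by
  obtain ⟨ha1, ha2, hm1, hm2, haL, haR⟩ := ha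
  obtain ⟨hb1, hb2, -, -, hbL, hbR⟩ := hb
  have key : ∀ x y : ℕ, 1 ≤ x → x ≤ n → 1 ≤ y → y ≤ n → kL x = m → kR x = kR m →
      kL y = m → kR y = kR m → x < y → False := by
    intro x y hx1 hx2 hy1 hy2 hxL hxR hyL hyR hxy
    have hmx := hmid x hx1 hx2
    have hmy := hmid y hy1 hy2
    exact hT.2.2.2.2 _ hmy.2.2.1 _ hmx.2.2.2.1
      ⟨by omega, hxy, by rw [hxR, ← hyR]; exact hmy.2.1⟩
  rcases lt_trichotomy a b with h | h | h
  · exact absurd (key a b ha1 ha2 hb1 hb2 haL haR hbL hbR h) (by simp)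
  · exact h
  · exact absurd (key b a hb1 hb2 ha1 ha2 hbL hbR haL haR h) (by simp)

lemma Lch_unique (hT : IsTriangulation n T) (hmid : MidTriangle n T kL kR)
    {a b m : ℕ} (ha : Lch n kL kR a m) (hb : Lch n kL kR b m) : a = b := by
  obtain ⟨ha1, ha2, hm1, hm2, haR, haL⟩ := ha
  obtain ⟨hb1, hb2, -, -, hbR, hbL⟩ := hb
  have key : ∀ x y : ℕ, 1 ≤ x → x ≤ n → 1 ≤ y → y ≤ n → kR x = m → kL x = kL m →
      kR y = m → kL y = kL m → x < y → False := by
    intro x y hx1 hx2 hy1 hy2 hxR hxL hyR hyL hxy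
    have hmx := hmid x hx1 hx2
    have hmy := hmid y hy1 hy2
    exact hT.2.2.2.2 _ hmy.2.2.1 _ hmx.2.2.2.1
      ⟨by rw [hyL, ← hxL]; exact hmx.1, hxy, by omega⟩
  rcases lt_trichotomy a b with h | h | h
  · exact absurd (key a b ha1 ha2 hb1 hb2 haR haL hbR hbL h) (by simp)
  · exact h
  · exact absurd (key b a hb1 hb2 ha1 ha2 hbR hbL haR haL h) (by simp)

lemma noX (hT : IsTriangulation n T) {a b c d : ℕ}
    (h1 : (a, b) ∈ T) (h2 : (c, d) ∈ T) (h3 : a < c) (h4 : c < b) (h5 : b < d) : False :=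
  hT.2.2.2.2 _ h1 _ h2 ⟨h3, h4, h5⟩

lemma RL_excl (hT : IsTriangulation n T) (hmid : MidTriangle n T kL kR)
    {a m1 m2 : ℕ} (hR : Rch n kL kR a m1) (hL : Lch n kL kR a m2) : False := by
  obtain ⟨ha1, ha2, hm11, hm12, haL, haR⟩ := hR
  obtain ⟨-, -, hm21, hm22, haR2, haL2⟩ := hL
  have hma := hmid a ha1 ha2
  have hm1 := hmid m1 hm11 hm12
  have hm2 := hmid m2 hm21 hm22
  exact noX hT hm1.2.2.2.2 hm2.2.2.2.2 (by omega) (by omega) (by omega)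

lemma k0_unique (hT : IsTriangulation n T) (hmid : MidTriangle n T kL kR)
    (hk0 : IsRootVertex n kL kR k0) {j : ℕ} (hj1 : 1 ≤ j) (hj2 : j ≤ n)
    (hjL : kL j = 0) (hjR : kR j = n + 1) : j = k0 := by
  obtain ⟨h01, h02, h0L, h0R⟩ := hk0
  have hmj := hmid j hj1 hj2
  have hm0 := hmid k0 h01 h02
  rcases lt_trichotomy j k0 with h | h | h
  · have e1 : (0, k0) ∈ T := by have := hm0.2.2.1; rwa [h0L] at this
    have e2 : (j, n + 1) ∈ T := by have := hmj.2.2.2.1; rwa [hjR] at this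
    exact absurd (hT.2.2.2.2 _ e1 _ e2 ⟨by omega, h, by omega⟩) (by simp)
  · exact h
  · have e1 : (0, j) ∈ T := by have := hmj.2.2.1; rwa [hjL] at this
    have e2 : (k0, n + 1) ∈ T := by have := hm0.2.2.2.1; rwa [h0R] at this
    exact absurd (hT.2.2.2.2 _ e1 _ e2 ⟨by omega, h, by omega⟩) (by simp)

lemma phi_cases (hφ : PhiMap n kL kR k0 φ) {k : ℕ} (h1 : 1 ≤ k) (h2 : k ≤ n) (hk : k ≠ k0) :
    Rch n kL kR k (φ k) ∨ Lch n kL kR k (φ k) := by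
  rcases hφ k h1 h2 hk with ⟨⟨m, hm1, hm2, hm3, hm4⟩, hp⟩ | ⟨⟨m, hm1, hm2, hm3, hm4⟩, hp⟩
  · left; exact ⟨h1, h2, by omega, by omega, by omega, by rw [hp, hm3]; exact hm4⟩
  · right; exact ⟨h1, h2, by omega, by omega, by omega, by rw [hp, hm3]; exact hm4⟩

lemma phi_mem (hφ : PhiMap n kL kR k0 φ) {k : ℕ} (h1 : 1 ≤ k) (h2 : k ≤ n) (hk : k ≠ k0) :
    1 ≤ φ k ∧ φ k ≤ n := by
  rcases phi_cases hφ h1 h2 hk with h | h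
  · exact ⟨h.2.2.1, h.2.2.2.1⟩
  · exact ⟨h.2.2.1, h.2.2.2.1⟩

lemma Rch_ne_k0 (hk0 : IsRootVertex n kL kR k0) {a m : ℕ} (h : Rch n kL kR a m) : a ≠ k0 := by
  obtain ⟨-, -, hm1, -, hL, -⟩ := h
  intro he
  rw [he] at hL
  have := hk0.2.2.1
  omega

lemma Lch_ne_k0 (hk0 : IsRootVertex n kL kR k0) {a m : ℕ} (h : Lch n kL kR a m) : a ≠ k0 := by
  obtain ⟨-, -, -, hm2, hR, -⟩ := h
  intro he
  rw [he] at hR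
  have := hk0.2.2.2
  omega

lemma Rch_parent (hT : IsTriangulation n T) (hmid : MidTriangle n T kL kR)
    (hk0 : IsRootVertex n kL kR k0) (hφ : PhiMap n kL kR k0 φ)
    {a m : ℕ} (h : Rch n kL kR a m) : φ a = m := by
  rcases phi_cases hφ h.1 h.2.1 (Rch_ne_k0 hk0 h) with h' | h'
  · rw [← h'.2.2.2.2.1, ← h.2.2.2.2.1]
  · exact absurd (RL_excl hT hmid h h') (by simp)

lemma Lch_parent (hT : IsTriangulation n T) (hmid : MidTriangle n T kL kR)
    (hk0 : IsRootVertex n kL kR k0) (hφ : PhiMap n kL kR k0 φ)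
    {a m : ℕ} (h : Lch n kL kR a m) : φ a = m := by
  rcases phi_cases hφ h.1 h.2.1 (Lch_ne_k0 hk0 h) with h' | h'
  · exact absurd (RL_excl hT hmid h' h) (by simp)
  · rw [← h'.2.2.2.2.1, ← h.2.2.2.2.1]

lemma Rch_Lch_same (hmid : MidTriangle n T kL kR) {a m : ℕ}
    (hR : Rch n kL kR a m) (hL : Lch n kL kR a m) : False := by
  obtain ⟨ha1, ha2, -, -, hL1, -⟩ := hR
  obtain ⟨-, -, -, -, hR1, -⟩ := hL
  have := hmid a ha1 ha2
  omega

end Comb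
end Stmt9Aux

namespace Stmt9Aux

noncomputable def chainPi (n : ℕ) (kR : ℕ → ℕ) (t : ℕ → Nlat n) : ℕ → ℕ → Nlat n
  | 0, _ => 0
  | fuel + 1, i => if 1 ≤ i ∧ i ≤ n then t i + chainPi n kR t fuel (kR i) else 0

section LinAlg
variable {n : ℕ} {kR : ℕ → ℕ} {t : ℕ → Nlat n}

lemma chainPi_congr (hkR : ∀ i, 1 ≤ i → i ≤ n → i < kR i ∧ kR i ≤ n + 1) :
    ∀ f1 f2 i, n + 1 ≤ f1 + i → n + 1 ≤ f2 + i → chainPi n kR t f1 i = chainPi n kR t f2 i := by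
  intro f1
  induction f1 with
  | zero =>
    intro f2 i h1 h2
    cases f2 with
    | zero => rfl
    | succ f2 =>
      rw [chainPi, chainPi, if_neg (by omega)]
  | succ f1 ih =>
    intro f2 i h1 h2
    cases f2 with
    | zero =>
      rw [chainPi, chainPi, if_neg (by omega)]
    | succ f2 =>
      rw [chainPi, chainPi]
      by_cases hi : 1 ≤ i ∧ i ≤ n
      · rw [if_pos hi, if_pos hi, ih f2 (kR i) (by have := hkR i hi.1 hi.2; omega)
          (by have := hkR i hi.1 hi.2; omega)]
      · rw [if_neg hi, if_neg hi]

noncomputable def piMap (n : ℕ) (kR : ℕ → ℕ) (t : ℕ → Nlat n) (i : ℕ) : Nlat n :=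
  chainPi n kR t (n + 1) i

lemma piMap_zero : piMap n kR t 0 = 0 := by
  rw [piMap, chainPi, if_neg (by omega)]

lemma piMap_top : piMap n kR t (n + 1) = 0 := by
  rw [piMap, chainPi, if_neg (by omega)]

lemma piMap_oob {i : ℕ} (h : ¬(1 ≤ i ∧ i ≤ n)) : piMap n kR t i = 0 := by
  rw [piMap, chainPi, if_neg h]

lemma piMap_step (hkR : ∀ i, 1 ≤ i → i ≤ n → i < kR i ∧ kR i ≤ n + 1)
    {i : ℕ} (h1 : 1 ≤ i) (h2 : i ≤ n) : piMap n kR t i = t i + piMap n kR t (kR i) := by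
  rw [piMap, chainPi, if_pos ⟨h1, h2⟩, piMap]
  congr 1
  have := hkR i h1 h2
  exact chainPi_congr hkR n (n + 1) (kR i) (by omega) (by omega)

/-- The linear map `(Fin (n+1) → ℤ) →ₗ[ℤ] Nlat n` sending `e_x` to `π (x+1) - π x`. -/
noncomputable def preMap (n : ℕ) (π : ℕ → Nlat n) : (Fin (n + 1) → ℤ) →ₗ[ℤ] Nlat n where
  toFun x := ∑ j : Fin (n + 1), x j • (π ((j : ℕ) + 1) - π (j : ℕ))
  map_add' x y := by
    simp only [Pi.add_apply, add_smul]
    rw [Finset.sum_add_distrib]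
  map_smul' c x := by
    simp only [Pi.smul_apply, smul_eq_mul, RingHom.id_apply, Finset.smul_sum, mul_smul]

lemma preMap_ones (π : ℕ → Nlat n) (hπ0 : π 0 = 0) (hπtop : π (n + 1) = 0) :
    preMap n π (fun _ => 1) = 0 := by
  show ∑ j : Fin (n + 1), (1 : ℤ) • (π ((j : ℕ) + 1) - π (j : ℕ)) = 0
  simp only [one_smul]
  rw [Fin.sum_univ_eq_sum_range (fun j => π (j + 1) - π j) (n + 1), Finset.sum_range_sub]
  rw [hπ0, hπtop, sub_zero]

noncomputable def buildMap (n : ℕ) (π : ℕ → Nlat n) (hπ0 : π 0 = 0) (hπtop : π (n + 1) = 0) :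
    Nlat n →ₗ[ℤ] Nlat n :=
  Submodule.liftQ _ (preMap n π) (by
    rw [Submodule.span_le]
    rintro x rfl
    simpa using preMap_ones π hπ0 hπtop)

lemma buildMap_varpi (π : ℕ → Nlat n) (hπ0 : π 0 = 0) (hπtop : π (n + 1) = 0)
    {i : ℕ} (hi : i ≤ n + 1) : buildMap n π hπ0 hπtop (varpi n i) = π i := by
  rw [varpi, buildMap]
  rw [show (Submodule.Quotient.mk (fun x : Fin (n+1) => if (x : ℕ) + 1 ≤ i then (1:ℤ) else 0) : Nlat n)
    = Submodule.Quotient.mk (p := Submodule.span ℤ ({fun _ => 1} : Set (Fin (n + 1) → ℤ)))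
      (fun x : Fin (n+1) => if (x : ℕ) + 1 ≤ i then (1:ℤ) else 0) from rfl]
  rw [Submodule.liftQ_apply]
  show ∑ j : Fin (n + 1), (if (j : ℕ) + 1 ≤ i then (1:ℤ) else 0) • (π ((j : ℕ) + 1) - π (j : ℕ)) = π i
  have h1 : ∀ j : Fin (n + 1), (if (j : ℕ) + 1 ≤ i then (1:ℤ) else 0) • (π ((j : ℕ) + 1) - π (j : ℕ))
      = if (j : ℕ) < i then π ((j : ℕ) + 1) - π (j : ℕ) else 0 := by
    intro j
    by_cases h : (j : ℕ) + 1 ≤ i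
    · rw [if_pos h, if_pos (by omega), one_smul]
    · rw [if_neg h, if_neg (by omega), zero_smul]
  rw [Finset.sum_congr rfl (fun j _ => h1 j)]
  rw [Fin.sum_univ_eq_sum_range (fun j => if j < i then π (j + 1) - π j else 0) (n + 1)]
  rw [show ∑ j ∈ Finset.range (n + 1), (if j < i then π (j + 1) - π j else 0)
      = ∑ j ∈ Finset.range i, (π (j + 1) - π j) from ?_]
  · rw [Finset.sum_range_sub, hπ0, sub_zero]
  · rw [← Finset.sum_subset (Finset.range_subset_range.2 hi)
      (fun j _ hj => if_neg (by simp at hj ⊢; omega))]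
    exact Finset.sum_congr rfl (fun j hj => if_pos (Finset.mem_range.1 hj))

end LinAlg
end Stmt9Aux

namespace Stmt9Aux
section Span
variable {n : ℕ} {T : Finset (ℕ × ℕ)} {kL kR : ℕ → ℕ}

lemma single_eq_varpi (j : Fin (n + 1)) :
    (Submodule.Quotient.mk (p := Submodule.span ℤ ({fun _ => 1} : Set (Fin (n + 1) → ℤ)))
      (fun x : Fin (n + 1) => if j = x then (1 : ℤ) else 0) : Nlat n)
      = varpi n ((j : ℕ) + 1) - varpi n (j : ℕ) := by
  rw [varpi, varpi, ← Submodule.Quotient.mk_sub]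
  congr 1
  funext x
  simp only [Pi.sub_apply, Fin.ext_iff]
  split_ifs <;> omega

lemma varpi_mem_span (hT : IsTriangulation n T) (hmid : MidTriangle n T kL kR) :
    ∀ N i, i ≤ n + 1 → n + 1 ≤ i + N →
      varpi n i ∈ Submodule.span ℤ {x : Nlat n | ∃ k, 1 ≤ k ∧ k ≤ n ∧ x = vVec n kR k} := by
  intro N
  induction N with
  | zero =>
    intro i h1 h2
    rw [show i = n + 1 by omega, varpi_top]
    exact Submodule.zero_mem _
  | succ N ih =>
    intro i h1 h2
    by_cases h0 : i = 0
    · rw [h0, varpi_zero]; exact Submodule.zero_mem _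
    by_cases htop : i = n + 1
    · rw [htop, varpi_top]; exact Submodule.zero_mem _
    have hi1 : 1 ≤ i := by omega
    have hi2 : i ≤ n := by omega
    have hkR1 := (hmid i hi1 hi2).2.1
    have hkR2 := kR_le hT hmid hi1 hi2
    have hdec : varpi n i = vVec n kR i + varpi n (kR i) := by
      rw [vVec, sub_add_cancel]
    rw [hdec]
    exact Submodule.add_mem _ (Submodule.subset_span ⟨i, hi1, hi2, rfl⟩)
      (ih (kR i) hkR2 (by omega))

lemma span_v_top (hT : IsTriangulation n T) (hmid : MidTriangle n T kL kR) :
    Submodule.span ℤ {x : Nlat n | ∃ k, 1 ≤ k ∧ k ≤ n ∧ x = vVec n kR k} = ⊤ := by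
  rw [eq_top_iff]
  intro y _
  obtain ⟨x, rfl⟩ := Submodule.Quotient.mk_surjective _ y
  have hx := pi_eq_sum_univ x
  have h2 : (Submodule.Quotient.mk x : Nlat n)
      = ∑ j : Fin (n + 1), x j • (varpi n ((j : ℕ) + 1) - varpi n (j : ℕ)) := by
    conv_lhs => rw [hx]
    rw [show (Submodule.Quotient.mk (∑ j : Fin (n+1), (x j) • fun i => if j = i then (1:ℤ) else 0) : Nlat n)
      = Submodule.mkQ _ (∑ j : Fin (n+1), (x j) • fun i => if j = i then (1:ℤ) else 0) from rfl]
    rw [map_sum]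
    refine Finset.sum_congr rfl (fun j _ => ?_)
    rw [map_smul, ← single_eq_varpi j]
    rfl
  rw [h2]
  refine Submodule.sum_mem _ (fun j _ => Submodule.smul_mem _ _ (Submodule.sub_mem _ ?_ ?_))
  · exact varpi_mem_span hT hmid (n + 1) ((j : ℕ) + 1) (by omega) (by omega)
  · exact varpi_mem_span hT hmid (n + 1) (j : ℕ) (by omega) (by omega)

end Span
end Stmt9Aux

namespace Stmt9Aux
open scoped Classical

noncomputable def tVec (n : ℕ) (kL' kR' F : ℕ → ℕ) (E : ℕ → Prop) (k : ℕ) : Nlat n :=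
  if E k then vVec n kR' (F k) else wVec n kL' (F k)

noncomputable def sVec (n : ℕ) (kL' kR' F : ℕ → ℕ) (E : ℕ → Prop) (k : ℕ) : Nlat n :=
  if E k then wVec n kL' (F k) else vVec n kR' (F k)

lemma tVec_add_sVec (n : ℕ) (kL' kR' F : ℕ → ℕ) (E : ℕ → Prop) (k : ℕ) :
    tVec n kL' kR' F E k + sVec n kL' kR' F E k = vVec n kR' (F k) + wVec n kL' (F k) := by
  by_cases h : E k
  · rw [tVec, sVec, if_pos h, if_pos h]
  · rw [tVec, sVec, if_neg h, if_neg h, add_comm]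

lemma d_sum (n : ℕ) (kL'' kR'' : ℕ → ℕ) (x : ℕ) :
    vVec n kR'' x + wVec n kL'' x = varpi n (kL'' x) - varpi n (kR'' x) := by
  rw [vVec, wVec]; abel

noncomputable def PhiOf (n : ℕ) (kR kL' kR' F : ℕ → ℕ) (E : ℕ → Prop) : Nlat n →ₗ[ℤ] Nlat n :=
  buildMap n (piMap n kR (tVec n kL' kR' F E)) piMap_zero piMap_top

section Key

variable {n : ℕ} {T T' : Finset (ℕ × ℕ)} {kL kR kL' kR' : ℕ → ℕ} {k0 k0' : ℕ}
  {φ φ' F : ℕ → ℕ} {E : ℕ → Prop}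

lemma PhiOf_varpi {i : ℕ} (hi : i ≤ n + 1) :
    PhiOf n kR kL' kR' F E (varpi n i) = piMap n kR (tVec n kL' kR' F E) i := by
  unfold PhiOf
  exact buildMap_varpi _ _ _ hi

lemma PhiOf_v (hT : IsTriangulation n T) (hmid : MidTriangle n T kL kR)
    {k : ℕ} (h1 : 1 ≤ k) (h2 : k ≤ n) :
    PhiOf n kR kL' kR' F E (vVec n kR k) = tVec n kL' kR' F E k := by
  have hkRb : ∀ i, 1 ≤ i → i ≤ n → i < kR i ∧ kR i ≤ n + 1 :=
    fun i hi1 hi2 => ⟨(hmid i hi1 hi2).2.1, kR_le hT hmid hi1 hi2⟩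
  rw [vVec, map_sub, PhiOf_varpi (by omega), PhiOf_varpi (kR_le hT hmid h1 h2),
    piMap_step hkRb h1 h2, add_sub_cancel_right]

lemma PhiOf_w_aux (hT : IsTriangulation n T) (hT' : IsTriangulation n T')
    (hmid : MidTriangle n T kL kR) (hmid' : MidTriangle n T' kL' kR')
    (hk0 : IsRootVertex n kL kR k0) (hk0' : IsRootVertex n kL' kR' k0')
    (hφ : PhiMap n kL kR k0 φ) (hφ' : PhiMap n kL' kR' k0' φ')
    (hF1 : ∀ k, 1 ≤ k → k ≤ n → 1 ≤ F k ∧ F k ≤ n)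
    (hFne : ∀ k, 1 ≤ k → k ≤ n → k ≠ k0 → F k ≠ k0')
    (hFk0 : F k0 = k0')
    (hFφ : ∀ k, 1 ≤ k → k ≤ n → k ≠ k0 → F (φ k) = φ' (F k))
    (hER : ∀ a m, Rch n kL kR a m → (E m ↔ Rch n kL' kR' (F a) (F m)))
    (hEL : ∀ a m, Lch n kL kR a m → (E m ↔ Lch n kL' kR' (F a) (F m))) :
    ∀ Nb k, 1 ≤ k → k ≤ n → n + 1 ≤ (kR k - kL k) + Nb →
      PhiOf n kR kL' kR' F E (wVec n kL k) = sVec n kL' kR' F E k := by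
  have hkRb : ∀ i, 1 ≤ i → i ≤ n → i < kR i ∧ kR i ≤ n + 1 :=
    fun i hi1 hi2 => ⟨(hmid i hi1 hi2).2.1, kR_le hT hmid hi1 hi2⟩
  -- root case as an auxiliary computation
  have root : PhiOf n kR kL' kR' F E (wVec n kL k0) = sVec n kL' kR' F E k0 := by
    have h01 := hk0.1
    have h02 := hk0.2.1
    have hmk0 := hmid k0 h01 h02
    have hw : PhiOf n kR kL' kR' F E (wVec n kL k0)
        = - tVec n kL' kR' F E k0 := by
      rw [wVec, map_sub, PhiOf_varpi (by omega), PhiOf_varpi (by omega), hk0.2.2.1,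
        piMap_zero, piMap_step hkRb h01 h02, hk0.2.2.2, piMap_top, add_zero, zero_sub]
    rw [hw]
    have hsum : tVec n kL' kR' F E k0 + sVec n kL' kR' F E k0 = 0 := by
      rw [tVec_add_sVec, d_sum, hFk0, hk0'.2.2.1, hk0'.2.2.2, varpi_zero, varpi_top, sub_zero]
    rw [neg_eq_iff_add_eq_zero]
    exact hsum
  intro Nb
  induction Nb with
  | zero =>
    intro k h1 h2 hm
    have hb := kR_le hT hmid h1 h2
    have hmk := hmid k h1 h2
    have hkL : kL k = 0 := by omega
    have hkR : kR k = n + 1 := by omega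
    obtain rfl : k = k0 := k0_unique hT hmid hk0 h1 h2 hkL hkR
    exact root
  | succ Nb ih =>
    intro k h1 h2 hm
    by_cases hk : k = k0
    · rw [hk]; exact root
    have hmk := hmid k h1 h2
    have hpm := phi_mem hφ h1 h2 hk
    have hFk := hF1 k h1 h2
    have hFm := hF1 (φ k) hpm.1 hpm.2
    have hFkne := hFne k h1 h2 hk
    have hparent : φ' (F k) = F (φ k) := (hFφ k h1 h2 hk).symm
    have hdich := phi_cases hφ' hFk.1 hFk.2 hFkne
    rw [hparent] at hdich
    have hsum : tVec n kL' kR' F E k + sVec n kL' kR' F E k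
        = varpi n (kL' (F k)) - varpi n (kR' (F k)) := by
      rw [tVec_add_sVec, d_sum]
    rcases phi_cases hφ h1 h2 hk with hch | hch
    · -- k is R-child of φ k
      obtain ⟨-, -, hm1, hm2, hLk, hRk⟩ := hch
      have hw : PhiOf n kR kL' kR' F E (wVec n kL k)
          = tVec n kL' kR' F E (φ k) - tVec n kL' kR' F E k := by
        rw [wVec, map_sub, PhiOf_varpi (by omega), PhiOf_varpi (by omega),
          piMap_step hkRb h1 h2, hLk, piMap_step hkRb hm1 hm2, hRk]
        abel
      rw [hw]
      have htm : tVec n kL' kR' F E (φ k) = varpi n (kL' (F k)) - varpi n (kR' (F k)) := by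
        rcases hdich with hd | hd
        · have hE : E (φ k) := (hER k (φ k) ⟨h1, h2, hm1, hm2, hLk, hRk⟩).2 hd
          rw [tVec, if_pos hE, vVec, hd.2.2.2.2.1, hd.2.2.2.2.2]
        · have hE : ¬ E (φ k) := fun hE =>
            Rch_Lch_same hmid' ((hER k (φ k) ⟨h1, h2, hm1, hm2, hLk, hRk⟩).1 hE) hd
          rw [tVec, if_neg hE, wVec, hd.2.2.2.2.1, hd.2.2.2.2.2]
      rw [htm, ← hsum]
      abel
    · -- k is L-child of φ k
      obtain ⟨-, -, hm1, hm2, hRk, hLk⟩ := hch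
      have hmm := hmid (φ k) hm1 hm2
      have hw : PhiOf n kR kL' kR' F E (wVec n kL k)
          = PhiOf n kR kL' kR' F E (wVec n kL (φ k)) - tVec n kL' kR' F E k := by
        rw [wVec, wVec, map_sub, map_sub, PhiOf_varpi (by omega), PhiOf_varpi (by omega),
          PhiOf_varpi (by omega), PhiOf_varpi (by omega),
          piMap_step hkRb h1 h2, hRk, hLk]
        abel
      rw [hw, ih (φ k) hm1 hm2 (by omega)]
      have hsm : sVec n kL' kR' F E (φ k) = varpi n (kL' (F k)) - varpi n (kR' (F k)) := by
        rcases hdich with hd | hd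
        · have hE : ¬ E (φ k) := fun hE =>
            Rch_Lch_same hmid' hd ((hEL k (φ k) ⟨h1, h2, hm1, hm2, hRk, hLk⟩).1 hE)
          rw [sVec, if_neg hE, vVec, hd.2.2.2.2.1, hd.2.2.2.2.2]
        · have hE : E (φ k) := (hEL k (φ k) ⟨h1, h2, hm1, hm2, hRk, hLk⟩).2 hd
          rw [sVec, if_pos hE, wVec, hd.2.2.2.2.1, hd.2.2.2.2.2]
      rw [hsm, ← hsum]
      abel

end Key
end Stmt9Aux

namespace Stmt9Aux

open scoped Classical in
noncomputable def Eps (n : ℕ) (kL kR kL' kR' f : ℕ → ℕ) (m : ℕ) : Prop :=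
  if h : ∃ a, Rch n kL kR a m then Rch n kL' kR' (f h.choose) (f m)
  else if h2 : ∃ b, Lch n kL kR b m then Lch n kL' kR' (f h2.choose) (f m)
  else True

section EpsSec

variable {n : ℕ} {T T' : Finset (ℕ × ℕ)} {kL kR kL' kR' : ℕ → ℕ} {k0 k0' : ℕ}
  {φ φ' f g : ℕ → ℕ}

variable (hT : IsTriangulation n T) (hT' : IsTriangulation n T')
  (hmid : MidTriangle n T kL kR) (hmid' : MidTriangle n T' kL' kR')
  (hk0 : IsRootVertex n kL kR k0) (hk0' : IsRootVertex n kL' kR' k0')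
  (hφ : PhiMap n kL kR k0 φ) (hφ' : PhiMap n kL' kR' k0' φ')
  (hf1 : ∀ k, 1 ≤ k → k ≤ n → 1 ≤ f k ∧ f k ≤ n)
  (hfinj : ∀ a b, 1 ≤ a → a ≤ n → 1 ≤ b → b ≤ n → f a = f b → a = b)
  (hfne : ∀ k, 1 ≤ k → k ≤ n → k ≠ k0 → f k ≠ k0')
  (hfk0 : f k0 = k0')
  (hfφ : ∀ k, 1 ≤ k → k ≤ n → k ≠ k0 → f (φ k) = φ' (f k))

include hT hT' hmid hmid' hk0 hk0' hφ hφ' hf1 hfne hfφ in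
lemma child_img_R {a m : ℕ} (ha : Rch n kL kR a m) :
    Rch n kL' kR' (f a) (f m) ∨ Lch n kL' kR' (f a) (f m) := by
  have hane := Rch_ne_k0 hk0 ha
  have hfa := hf1 a ha.1 ha.2.1
  have hp : φ' (f a) = f m := by
    rw [← hfφ a ha.1 ha.2.1 hane, Rch_parent hT hmid hk0 hφ ha]
  have := phi_cases hφ' hfa.1 hfa.2 (hfne a ha.1 ha.2.1 hane)
  rwa [hp] at this

include hT hT' hmid hmid' hk0 hk0' hφ hφ' hf1 hfne hfφ in
lemma child_img_L {a m : ℕ} (ha : Lch n kL kR a m) :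
    Rch n kL' kR' (f a) (f m) ∨ Lch n kL' kR' (f a) (f m) := by
  have hane := Lch_ne_k0 hk0 ha
  have hfa := hf1 a ha.1 ha.2.1
  have hp : φ' (f a) = f m := by
    rw [← hfφ a ha.1 ha.2.1 hane, Lch_parent hT hmid hk0 hφ ha]
  have := phi_cases hφ' hfa.1 hfa.2 (hfne a ha.1 ha.2.1 hane)
  rwa [hp] at this

include hT hT' hmid hmid' hk0 hk0' hφ hφ' hf1 hfinj hfne hfφ in
lemma both_children {a b m : ℕ} (ha : Rch n kL kR a m) (hb : Lch n kL kR b m) :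
    (Rch n kL' kR' (f a) (f m) ↔ Lch n kL' kR' (f b) (f m)) := by
  have hab : a ≠ b := by
    intro h
    rw [h] at ha
    exact Rch_Lch_same hmid ha hb
  have hfab : f a ≠ f b := fun h => hab (hfinj a b ha.1 ha.2.1 hb.1 hb.2.1 h)
  constructor
  · intro hR
    rcases child_img_L hT hT' hmid hmid' hk0 hk0' hφ hφ' hf1 hfne hfφ hb with h | h
    · exact absurd (Rch_unique hT' hmid' hR h) hfab
    · exact h
  · intro hL
    rcases child_img_R hT hT' hmid hmid' hk0 hk0' hφ hφ' hf1 hfne hfφ ha with h | h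
    · exact h
    · exact absurd (Lch_unique hT' hmid' h hL) (fun he => hfab he)

include hT hmid in
lemma Eps_R {a m : ℕ} (ha : Rch n kL kR a m) :
    Eps n kL kR kL' kR' f m ↔ Rch n kL' kR' (f a) (f m) := by
  have h : ∃ a', Rch n kL kR a' m := ⟨a, ha⟩
  rw [Eps, dif_pos h, Rch_unique hT hmid h.choose_spec ha]

include hT hT' hmid hmid' hk0 hk0' hφ hφ' hf1 hfinj hfne hfφ in
lemma Eps_L {b m : ℕ} (hb : Lch n kL kR b m) :
    Eps n kL kR kL' kR' f m ↔ Lch n kL' kR' (f b) (f m) := by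
  by_cases h : ∃ a, Rch n kL kR a m
  · rw [Eps, dif_pos h]
    exact both_children hT hT' hmid hmid' hk0 hk0' hφ hφ' hf1 hfinj hfne hfφ h.choose_spec hb
  · have h2 : ∃ b', Lch n kL kR b' m := ⟨b, hb⟩
    rw [Eps, dif_neg h, dif_pos h2, Lch_unique hT hmid h2.choose_spec hb]

end EpsSec
end Stmt9Aux

namespace Stmt9Aux
section EpsInv

variable {n : ℕ} {T T' : Finset (ℕ × ℕ)} {kL kR kL' kR' : ℕ → ℕ} {k0 k0' : ℕ}
  {φ φ' f g : ℕ → ℕ}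

variable (hT : IsTriangulation n T) (hT' : IsTriangulation n T')
  (hmid : MidTriangle n T kL kR) (hmid' : MidTriangle n T' kL' kR')
  (hk0 : IsRootVertex n kL kR k0) (hk0' : IsRootVertex n kL' kR' k0')
  (hφ : PhiMap n kL kR k0 φ) (hφ' : PhiMap n kL' kR' k0' φ')
  (hf1 : ∀ k, 1 ≤ k → k ≤ n → 1 ≤ f k ∧ f k ≤ n)
  (hfinj : ∀ a b, 1 ≤ a → a ≤ n → 1 ≤ b → b ≤ n → f a = f b → a = b)
  (hfne : ∀ k, 1 ≤ k → k ≤ n → k ≠ k0 → f k ≠ k0')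
  (hfk0 : f k0 = k0')
  (hfφ : ∀ k, 1 ≤ k → k ≤ n → k ≠ k0 → f (φ k) = φ' (f k))
  (hg1 : ∀ j, 1 ≤ j → j ≤ n → 1 ≤ g j ∧ g j ≤ n)
  (hgne : ∀ j, 1 ≤ j → j ≤ n → j ≠ k0' → g j ≠ k0)
  (hfg : ∀ j, 1 ≤ j → j ≤ n → f (g j) = j)
  (hgφ : ∀ j, 1 ≤ j → j ≤ n → j ≠ k0' → g (φ' j) = φ (g j))

include hT hT' hmid hmid' hk0 hk0' hφ hφ' hf1 hfinj hfne hfk0 hfφ hg1 hgne hfg hgφ in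
lemma Eps_inv_R {a' m' : ℕ} (hA : Rch n kL' kR' a' m') :
    Eps n kL kR kL' kR' f (g m') ↔ Rch n kL kR (g a') (g m') := by
  have hane : a' ≠ k0' := Rch_ne_k0 hk0' hA
  have hga := hg1 a' hA.1 hA.2.1
  have hgane : g a' ≠ k0 := hgne a' hA.1 hA.2.1 hane
  have hpar : φ (g a') = g m' := by
    rw [← hgφ a' hA.1 hA.2.1 hane, Rch_parent hT' hmid' hk0' hφ' hA]
  have hdich := phi_cases hφ hga.1 hga.2 hgane
  rw [hpar] at hdich
  have hfa : f (g a') = a' := hfg a' hA.1 hA.2.1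
  have hfm : f (g m') = m' := hfg m' hA.2.2.1 hA.2.2.2.1
  rcases hdich with hch | hch
  · have h1 := Eps_R hT hmid (kL' := kL') (kR' := kR') (f := f) hch
    rw [hfa, hfm] at h1
    constructor
    · intro _; exact hch
    · intro _; exact h1.2 hA
  · have h1 := Eps_L hT hT' hmid hmid' hk0 hk0' hφ hφ' hf1 hfinj hfne hfφ hch
    rw [hfa, hfm] at h1
    constructor
    · intro hE
      exact absurd (Rch_Lch_same hmid' hA (h1.1 hE)) (by simp)
    · intro hR
      exact absurd (Rch_Lch_same hmid hR hch) (by simp)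

include hT hT' hmid hmid' hk0 hk0' hφ hφ' hf1 hfinj hfne hfk0 hfφ hg1 hgne hfg hgφ in
lemma Eps_inv_L {b' m' : ℕ} (hB : Lch n kL' kR' b' m') :
    Eps n kL kR kL' kR' f (g m') ↔ Lch n kL kR (g b') (g m') := by
  have hbne : b' ≠ k0' := Lch_ne_k0 hk0' hB
  have hgb := hg1 b' hB.1 hB.2.1
  have hgbne : g b' ≠ k0 := hgne b' hB.1 hB.2.1 hbne
  have hpar : φ (g b') = g m' := by
    rw [← hgφ b' hB.1 hB.2.1 hbne, Lch_parent hT' hmid' hk0' hφ' hB]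
  have hdich := phi_cases hφ hgb.1 hgb.2 hgbne
  rw [hpar] at hdich
  have hfb : f (g b') = b' := hfg b' hB.1 hB.2.1
  have hfm : f (g m') = m' := hfg m' hB.2.2.1 hB.2.2.2.1
  rcases hdich with hch | hch
  · have h1 := Eps_R hT hmid (kL' := kL') (kR' := kR') (f := f) hch
    rw [hfb, hfm] at h1
    constructor
    · intro hE
      exact absurd (Rch_Lch_same hmid' (h1.1 hE) hB) (by simp)
    · intro hL
      exact absurd (Rch_Lch_same hmid hch hL) (by simp)
  · have h1 := Eps_L hT hT' hmid hmid' hk0 hk0' hφ hφ' hf1 hfinj hfne hfφ hch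
    rw [hfb, hfm] at h1
    constructor
    · intro _; exact hch
    · intro _; exact h1.2 hB

end EpsInv
end Stmt9Aux

namespace Stmt9Aux
section Main

variable {n : ℕ} {T T' : Finset (ℕ × ℕ)} {kL kR kL' kR' : ℕ → ℕ} {k0 k0' : ℕ} {φ φ' : ℕ → ℕ}

variable (hT : IsTriangulation n T) (hT' : IsTriangulation n T')
  (hmid : MidTriangle n T kL kR) (hmid' : MidTriangle n T' kL' kR')
  (hk0 : IsRootVertex n kL kR k0) (hk0' : IsRootVertex n kL' kR' k0')
  (hφ : PhiMap n kL kR k0 φ) (hφ' : PhiMap n kL' kR' k0' φ')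

include hT hT' hmid hmid' hk0 hk0' hφ hφ' in
lemma dir2 (f : ℕ → ℕ) (hbij : Set.BijOn f (Set.Icc 1 n) (Set.Icc 1 n))
    (hfk0 : f k0 = k0') (hfφ : ∀ k, 1 ≤ k → k ≤ n → k ≠ k0 → f (φ k) = φ' (f k)) :
    ∃ Φ : Nlat n ≃ₗ[ℤ] Nlat n, ∃ η : ℕ → ℕ,
      Set.BijOn η (Set.Icc 1 n) (Set.Icc 1 n) ∧
      ∀ i, 1 ≤ i → i ≤ n →
        ({Φ (vVec n kR i), Φ (wVec n kL i)} : Set (Nlat n)) =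
          {vVec n kR' (η i), wVec n kL' (η i)} := by
  classical
  set g := Function.invFunOn f (Set.Icc 1 n) with hgdef
  have hInv := hbij.invOn_invFunOn
  have hf1 : ∀ k, 1 ≤ k → k ≤ n → 1 ≤ f k ∧ f k ≤ n := fun k h1 h2 =>
    Set.mem_Icc.1 (hbij.1 (Set.mem_Icc.2 ⟨h1, h2⟩))
  have hfinj : ∀ a b, 1 ≤ a → a ≤ n → 1 ≤ b → b ≤ n → f a = f b → a = b := fun a b h1 h2 h3 h4 h =>
    hbij.2.1 (Set.mem_Icc.2 ⟨h1, h2⟩) (Set.mem_Icc.2 ⟨h3, h4⟩) h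
  have hk0m := hk0.1
  have hk0M := hk0.2.1
  have hfne : ∀ k, 1 ≤ k → k ≤ n → k ≠ k0 → f k ≠ k0' := by
    intro k h1 h2 hk he
    exact hk (hfinj k k0 h1 h2 hk0m hk0M (by rw [he, hfk0]))
  have hgf : ∀ k, 1 ≤ k → k ≤ n → g (f k) = k := fun k h1 h2 =>
    hInv.1 (Set.mem_Icc.2 ⟨h1, h2⟩)
  have hfg : ∀ j, 1 ≤ j → j ≤ n → f (g j) = j := fun j h1 h2 =>
    hInv.2 (Set.mem_Icc.2 ⟨h1, h2⟩)
  have hg1 : ∀ j, 1 ≤ j → j ≤ n → 1 ≤ g j ∧ g j ≤ n := by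
    intro j h1 h2
    have := Function.invFunOn_mem (f := f) (s := Set.Icc 1 n)
      (by
        obtain ⟨a, ha, hfa⟩ := hbij.2.2 (Set.mem_Icc.2 ⟨h1, h2⟩)
        exact ⟨a, ha, hfa⟩)
    exact Set.mem_Icc.1 this
  have hgne : ∀ j, 1 ≤ j → j ≤ n → j ≠ k0' → g j ≠ k0 := by
    intro j h1 h2 hj he
    apply hj
    rw [← hfg j h1 h2, he, hfk0]
  have hgk0 : g k0' = k0 := by rw [← hfk0, hgf k0 hk0m hk0M]
  have hgφ : ∀ j, 1 ≤ j → j ≤ n → j ≠ k0' → g (φ' j) = φ (g j) := by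
    intro j h1 h2 hj
    have hgj := hg1 j h1 h2
    have hgjne := hgne j h1 h2 hj
    have hp := hfφ (g j) hgj.1 hgj.2 hgjne
    rw [hfg j h1 h2] at hp
    have hpm := phi_mem hφ hgj.1 hgj.2 hgjne
    rw [← hp, hgf _ hpm.1 hpm.2]
  set E := Eps n kL kR kL' kR' f with hEdef
  set E' : ℕ → Prop := fun j => E (g j) with hE'def
  set Φl := PhiOf n kR kL' kR' f E with hΦldef
  set Ψl := PhiOf n kR' kL kR g E' with hΨldef
  have hΦv : ∀ k, 1 ≤ k → k ≤ n → Φl (vVec n kR k) = tVec n kL' kR' f E k :=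
    fun k h1 h2 => PhiOf_v hT hmid h1 h2
  have hΨv : ∀ j, 1 ≤ j → j ≤ n → Ψl (vVec n kR' j) = tVec n kL kR g E' j :=
    fun j h1 h2 => PhiOf_v hT' hmid' h1 h2
  have hΦw : ∀ k, 1 ≤ k → k ≤ n → Φl (wVec n kL k) = sVec n kL' kR' f E k := by
    intro k h1 h2
    exact PhiOf_w_aux hT hT' hmid hmid' hk0 hk0' hφ hφ' hf1 hfne hfk0 hfφ
      (fun a m ha => Eps_R hT hmid ha)
      (fun a m ha => Eps_L hT hT' hmid hmid' hk0 hk0' hφ hφ' hf1 hfinj hfne hfφ ha)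
      (n + 1) k h1 h2 (by omega)
  have hΨw : ∀ j, 1 ≤ j → j ≤ n → Ψl (wVec n kL' j) = sVec n kL kR g E' j := by
    intro j h1 h2
    exact PhiOf_w_aux hT' hT hmid' hmid hk0' hk0 hφ' hφ hg1 hgne hgk0 hgφ
      (fun a m ha => Eps_inv_R hT hT' hmid hmid' hk0 hk0' hφ hφ' hf1 hfinj hfne hfk0 hfφ hg1 hgne hfg hgφ ha)
      (fun a m ha => Eps_inv_L hT hT' hmid hmid' hk0 hk0' hφ hφ' hf1 hfinj hfne hfk0 hfφ hg1 hgne hfg hgφ ha)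
      (n + 1) j h1 h2 (by omega)
  have hcomp1 : Φl.comp Ψl = LinearMap.id := by
    apply LinearMap.ext_on (span_v_top hT' hmid')
    rintro x ⟨j, hj1, hj2, rfl⟩
    simp only [LinearMap.comp_apply, LinearMap.id_apply]
    rw [hΨv j hj1 hj2]
    have hgj := hg1 j hj1 hj2
    by_cases hE : E (g j)
    · rw [tVec, if_pos hE, hΦv (g j) hgj.1 hgj.2, tVec, if_pos hE, hfg j hj1 hj2]
    · rw [tVec, if_neg hE, hΦw (g j) hgj.1 hgj.2, sVec, if_neg hE, hfg j hj1 hj2]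
  have hcomp2 : Ψl.comp Φl = LinearMap.id := by
    apply LinearMap.ext_on (span_v_top hT hmid)
    rintro x ⟨k, hk1, hk2, rfl⟩
    simp only [LinearMap.comp_apply, LinearMap.id_apply]
    rw [hΦv k hk1 hk2]
    have hfk := hf1 k hk1 hk2
    by_cases hE : E k
    · rw [tVec, if_pos hE, hΨv (f k) hfk.1 hfk.2, tVec]
      have hE' : E' (f k) := by
        show E (g (f k))
        rwa [hgf k hk1 hk2]
      rw [if_pos hE']
      show vVec n kR (g (f k)) = vVec n kR k
      rw [hgf k hk1 hk2]
    · rw [tVec, if_neg hE, hΨw (f k) hfk.1 hfk.2, sVec]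
      have hE' : ¬ E' (f k) := by
        show ¬ E (g (f k))
        rwa [hgf k hk1 hk2]
      rw [if_neg hE']
      show vVec n kR (g (f k)) = vVec n kR k
      rw [hgf k hk1 hk2]
  refine ⟨LinearEquiv.ofLinear Φl Ψl hcomp1 hcomp2, f, hbij, ?_⟩
  intro i h1 h2
  rw [LinearEquiv.ofLinear_apply, LinearEquiv.ofLinear_apply, hΦv i h1 h2, hΦw i h1 h2]
  by_cases hE : E i
  · rw [tVec, sVec, if_pos hE, if_pos hE]
  · rw [tVec, sVec, if_neg hE, if_neg hE, Set.pair_comm]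

end Main
end Stmt9Aux

namespace Stmt9Aux
section Main2

variable {n : ℕ} {T T' : Finset (ℕ × ℕ)} {kL kR kL' kR' : ℕ → ℕ} {k0 k0' : ℕ} {φ φ' : ℕ → ℕ}

variable (hT : IsTriangulation n T) (hT' : IsTriangulation n T')
  (hmid : MidTriangle n T kL kR) (hmid' : MidTriangle n T' kL' kR')
  (hk0 : IsRootVertex n kL kR k0) (hk0' : IsRootVertex n kL' kR' k0')
  (hφ : PhiMap n kL kR k0 φ) (hφ' : PhiMap n kL' kR' k0' φ')

include hT hT' hmid hmid' hk0 hk0' hφ hφ' in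
lemma dir1 (Φ : Nlat n ≃ₗ[ℤ] Nlat n) (η : ℕ → ℕ)
    (hbij : Set.BijOn η (Set.Icc 1 n) (Set.Icc 1 n))
    (hpair : ∀ i, 1 ≤ i → i ≤ n →
      ({Φ (vVec n kR i), Φ (wVec n kL i)} : Set (Nlat n)) =
        {vVec n kR' (η i), wVec n kL' (η i)}) :
    ∃ f : ℕ → ℕ, Set.BijOn f (Set.Icc 1 n) (Set.Icc 1 n) ∧ f k0 = k0' ∧
      ∀ k, 1 ≤ k → k ≤ n → k ≠ k0 → f (φ k) = φ' (f k) := by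
  have hη1 : ∀ k, 1 ≤ k → k ≤ n → 1 ≤ η k ∧ η k ≤ n := fun k h1 h2 =>
    Set.mem_Icc.1 (hbij.1 (Set.mem_Icc.2 ⟨h1, h2⟩))
  have hηinj : ∀ a b, 1 ≤ a → a ≤ n → 1 ≤ b → b ≤ n → η a = η b → a = b := fun a b h1 h2 h3 h4 h =>
    hbij.2.1 (Set.mem_Icc.2 ⟨h1, h2⟩) (Set.mem_Icc.2 ⟨h3, h4⟩) h
  have hsum : ∀ i, 1 ≤ i → i ≤ n →
      Φ (vVec n kR i) + Φ (wVec n kL i) = vVec n kR' (η i) + wVec n kL' (η i) := by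
    intro i h1 h2
    rcases Set.pair_eq_pair_iff.1 (hpair i h1 h2) with ⟨ha, hb⟩ | ⟨ha, hb⟩
    · rw [ha, hb]
    · rw [ha, hb, add_comm]
  have hηk0 : η k0 = k0' := by
    have h01 := hk0.1
    have h02 := hk0.2.1
    have hj := hη1 k0 h01 h02
    have hmj := hmid' (η k0) hj.1 hj.2
    have h0 : Φ (vVec n kR k0) + Φ (wVec n kL k0) = 0 := by
      rw [← map_add]
      have hz : vVec n kR k0 + wVec n kL k0 = 0 := by
        rw [d_sum, hk0.2.2.1, hk0.2.2.2, varpi_zero, varpi_top, sub_zero]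
      rw [hz, map_zero]
    have h1 : varpi n (kL' (η k0)) - varpi n (kR' (η k0)) = 0 := by
      rw [← d_sum n kL' kR' (η k0), ← hsum k0 h01 h02, h0]
    have h2 := (vp_eq_zero_iff (by omega) (kR_le hT' hmid' hj.1 hj.2)).1 h1
    exact k0_unique hT' hmid' hk0' hj.1 hj.2 h2.1 h2.2
  refine ⟨η, hbij, hηk0, ?_⟩
  intro k h1 h2 hk
  have hm := phi_mem hφ h1 h2 hk
  have hηk := hη1 k h1 h2
  have hηm := hη1 (φ k) hm.1 hm.2
  have hηkne : η k ≠ k0' := by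
    intro he
    exact hk (hηinj k k0 h1 h2 hk0.1 hk0.2.1 (by rw [he, hηk0]))
  have hmidk' := hmid' (η k) hηk.1 hηk.2
  have hmidm' := hmid' (η (φ k)) hηm.1 hηm.2
  have hRle' := kR_le hT' hmid' hηk.1 hηk.2
  have hRlem' := kR_le hT' hmid' hηm.1 hηm.2
  have hmem : varpi n (kL' (η k)) - varpi n (kR' (η k)) ∈
      ({vVec n kR' (η (φ k)), wVec n kL' (η (φ k))} : Set (Nlat n)) := by
    have hdd : varpi n (kL' (η k)) - varpi n (kR' (η k))
        = Φ (vVec n kR k + wVec n kL k) := by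
      rw [map_add, hsum k h1 h2, d_sum]
    rcases phi_cases hφ h1 h2 hk with hch | hch
    · have : vVec n kR k + wVec n kL k = vVec n kR (φ k) := by
        rw [d_sum, vVec, hch.2.2.2.2.1, hch.2.2.2.2.2]
      rw [hdd, this, ← hpair (φ k) hm.1 hm.2]
      exact Set.mem_insert _ _
    · have : vVec n kR k + wVec n kL k = wVec n kL (φ k) := by
        rw [d_sum, wVec, hch.2.2.2.2.1, hch.2.2.2.2.2]
      rw [hdd, this, ← hpair (φ k) hm.1 hm.2]
      exact Set.mem_insert_of_mem _ rfl
  rcases hmem with hv | hw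
  · rw [vVec] at hv
    have he := (vp_eq_iff (by omega) hRle' hmidm'.2.1 hRlem').1 hv
    have : Rch n kL' kR' (η k) (η (φ k)) := ⟨hηk.1, hηk.2, hηm.1, hηm.2, he.1, he.2⟩
    rw [Rch_parent hT' hmid' hk0' hφ' this]
  · rw [Set.mem_singleton_iff, wVec] at hw
    have he := (vp_eq_iff (by omega) hRle' (by omega) (by omega)).1 hw
    have : Lch n kL' kR' (η k) (η (φ k)) := ⟨hηk.1, hηk.2, hηm.1, hηm.2, he.2, he.1⟩
    rw [Lch_parent hT' hmid' hk0' hφ' this]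

end Main2
end Stmt9Aux


/-- The fans `Σ_T` and `Σ_{T'}` of Catalan type are isomorphic — i.e. there are a ℤ-linear
automorphism `Φ` of `N` and a bijection `η` of `{1,…,n}` with
`{Φ(v_i), Φ(w_i)} = {v'_{η(i)}, w'_{η(i)}}` for all `i` — if and only if the binary trees
`B_T` and `B_{T'}` are isomorphic as unordered rooted trees — i.e. there is a bijection `f`
of `{1,…,n}` with `f(k₀) = k₀'` and `f(φ(k)) = φ'(f(k))` for all `k ≠ k₀`. -/
theorem stmt9 (n : ℕ) (hn : 1 ≤ n)
    (T T' : Finset (ℕ × ℕ)) (hT : IsTriangulation n T) (hT' : IsTriangulation n T')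
    (kL kR kL' kR' : ℕ → ℕ)
    (hmid : MidTriangle n T kL kR) (hmid' : MidTriangle n T' kL' kR')
    (k0 k0' : ℕ) (hk0 : IsRootVertex n kL kR k0) (hk0' : IsRootVertex n kL' kR' k0')
    (φ φ' : ℕ → ℕ) (hφ : PhiMap n kL kR k0 φ) (hφ' : PhiMap n kL' kR' k0' φ') :
    (∃ Φ : Nlat n ≃ₗ[ℤ] Nlat n, ∃ η : ℕ → ℕ,
        Set.BijOn η (Set.Icc 1 n) (Set.Icc 1 n) ∧
        ∀ i, 1 ≤ i → i ≤ n →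
          ({Φ (vVec n kR i), Φ (wVec n kL i)} : Set (Nlat n)) =
            {vVec n kR' (η i), wVec n kL' (η i)}) ↔
    (∃ f : ℕ → ℕ, Set.BijOn f (Set.Icc 1 n) (Set.Icc 1 n) ∧ f k0 = k0' ∧
        ∀ k, 1 ≤ k → k ≤ n → k ≠ k0 → f (φ k) = φ' (f k)) := by
  constructor
  · rintro ⟨Φ, η, hbij, hpair⟩
    exact Stmt9Aux.dir1 hT hT' hmid hmid' hk0 hk0' hφ hφ' Φ η hbij hpair
  · rintro ⟨f, hbij, hfk0, hfφ⟩
    exact Stmt9Aux.dir2 hT hT' hmid hmid' hk0 hk0' hφ hφ' f hbij hfk0 hfφ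
end

section
/- Let u ∈ S_n, set v = û and w = û s(1,n) in S_{n+1}. Then for all 1 ≤ i < j ≤ n+1: (a) v ⋖ v t_{i,j} and v t_{i,j} ≤ w hold if and only if j−1 ∈ {1,…,n} and i−1 = (j−1)_L, i.e. {i−1, j−1} is an edge of the left tree of the triangulation ψ(u); (b) v ≤ w t_{i,j} and w t_{i,j} ⋖ w hold if and only if i ∈ {1,…,n} and j = i_R, i.e. {i,j} is an edge of the right tree of ψ(u). In other words, the atoms of the Bruhat interval [û, û s(1,n)] correspond to the edges of the left tree of ψ(u) and the coatoms to the edges of the right tree of ψ(u). -/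
/-!
Bruhat comparisons are read off the counts `r_x(p, c) = countGE x p c = #{k ≤ p | c ≤ x k}`:
`x ≤ y` iff `r_x ≤ r_y` pointwise. Composing with `t_{i,j}` changes `r_x(p, ·)` only for
`i ≤ p < j`, by `[c ≤ x j] - [c ≤ x i]`. Since `û = (1, w(1), …, w(n))` for
`w = û s(1,n) = (u(1)+1, …, u(n)+1, 1)`, on that window `û t_{i,j} ≤ w` amounts to
`û(j) ≤ max(û(i), w(p))` and `û ≤ w t_{i,j}` to `w(i) ≤ max(w(j), w(p))`. Together with
`û(i) < û(j)`, resp. `w(j) < w(i)`, this is exactly `i - 1 = (j - 1)_L`, resp. `j = i_R`.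
Conversely, these conditions put every value on the window outside the interval between the two
swapped values, which forces the covering relation.
-/

/-- `w : ℕ → ℕ` represents a permutation of `{1,…,m}` (extended by the identity
elsewhere); this encodes an element of the symmetric group `S_m`. -/
def IsPermOn (m : ℕ) (w : ℕ → ℕ) : Prop :=
  Set.BijOn w (Set.Icc 1 m) (Set.Icc 1 m) ∧ ∀ x, x ∉ Set.Icc 1 m → w x = x

/-- The increasing rearrangement of `(w(1), …, w(i))`. -/
def sortedInit (w : ℕ → ℕ) (i : ℕ) : List ℕ :=
  Multiset.sort ((Multiset.range i).map fun j => w (j + 1)) (· ≤ ·)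

/-- The (strong) Bruhat order on `S_m`: `v ≤ w` iff for every `1 ≤ i ≤ m` the increasing
rearrangement of `(v(1),…,v(i))` is componentwise `≤` that of `(w(1),…,w(i))`. -/
def bruhatLE (m : ℕ) (v w : ℕ → ℕ) : Prop :=
  ∀ i, 1 ≤ i → i ≤ m → List.Forall₂ (· ≤ ·) (sortedInit v i) (sortedInit w i)

/-- Strict Bruhat order. -/
def bruhatLT (m : ℕ) (v w : ℕ → ℕ) : Prop :=
  bruhatLE m v w ∧ v ≠ w

/-- `v ⋖ w` in the Bruhat order on `S_m`: `v < w` and no `z ∈ S_m` satisfies `v < z < w`. -/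
def bruhatCovBy (m : ℕ) (v w : ℕ → ℕ) : Prop :=
  bruhatLT m v w ∧ ∀ z, IsPermOn m z → ¬(bruhatLT m v z ∧ bruhatLT m z w)

/-- The transposition `t_{i,j}` interchanging `i` and `j`. -/
def transp (i j : ℕ) : ℕ → ℕ := fun x => if x = i then j else if x = j then i else x

/-- `û ∈ S_{n+1}` obtained from `u ∈ S_n` by putting `1` at the head:
`û(1) = 1` and `û(i) = u(i−1) + 1` for `2 ≤ i ≤ n+1`. -/
def uhat (u : ℕ → ℕ) : ℕ → ℕ := fun i => if i ≤ 1 then i else u (i - 1) + 1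

/-- `s(1,n) = s₁ s₂ ⋯ s_n` as a permutation (product = composition of functions,
`s_k = t_{k,k+1}`). -/
def sOneTo : ℕ → (ℕ → ℕ)
  | 0 => id
  | m + 1 => sOneTo m ∘ transp (m + 1) (m + 2)

namespace BruhatInterval

open Finset

def countGE (x : ℕ → ℕ) (p c : ℕ) : ℕ := ((Icc 1 p).filter (c ≤ x ·)).card

@[simp] lemma countGE_zero (x : ℕ → ℕ) (c : ℕ) : countGE x 0 c = 0 := by simp [countGE]

lemma countGE_succ (x : ℕ → ℕ) (p c : ℕ) :
    countGE x (p + 1) c = countGE x p c + if c ≤ x (p + 1) then 1 else 0 := by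
  have hnot : p + 1 ∉ (Icc 1 p).filter (c ≤ x ·) := by simp
  rw [countGE, countGE, ← insert_Icc_right_eq_Icc_add_one (by omega), filter_insert]
  split_ifs
  · rw [card_insert_of_notMem hnot]
  · rfl

lemma countGE_congr {x y : ℕ → ℕ} {p : ℕ} (h : ∀ k, 1 ≤ k → k ≤ p → x k = y k) (c : ℕ) :
    countGE x p c = countGE y p c := by
  refine congrArg card (filter_congr fun k hk => ?_)
  rw [mem_Icc] at hk
  rw [h k hk.1 hk.2]

lemma le_getElem_iff_length_sub_le_countP {L : List ℕ} (hL : L.Pairwise (· ≤ ·)) {r : ℕ}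
    (hr : r < L.length) (c : ℕ) :
    c ≤ L[r] ↔ L.length - r ≤ L.countP (c ≤ ·) := by
  induction L generalizing r with
  | nil => simp at hr
  | cons a L ih =>
    rw [List.pairwise_cons] at hL
    have hle := L.countP_le_length (p := (c ≤ ·))
    simp only [List.countP_cons, List.length_cons, decide_eq_true_eq]
    split_ifs with hca
    · have hall : L.countP (c ≤ ·) = L.length :=
        List.countP_eq_length.mpr fun b hb => by simpa using hca.trans (hL.1 b hb)
      have hcr : c ≤ (a :: L)[r] := by
        rcases r with _ | r
        · exact hca
        · exact hca.trans (hL.1 _ (List.getElem_mem _))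
      exact iff_of_true hcr (by omega)
    · rcases r with _ | r
      · exact iff_of_false hca (by omega)
      · rw [List.getElem_cons_succ, ih hL.2 (by simpa using hr)]
        omega

lemma forall₂_le_iff_countP_le {L₁ L₂ : List ℕ} (h₁ : L₁.Pairwise (· ≤ ·))
    (h₂ : L₂.Pairwise (· ≤ ·)) (hlen : L₁.length = L₂.length) :
    List.Forall₂ (· ≤ ·) L₁ L₂ ↔ ∀ c, L₁.countP (c ≤ ·) ≤ L₂.countP (c ≤ ·) := by
  refine ⟨fun h c => ?_, fun h => List.forall₂_iff_get.mpr ⟨hlen, fun r hr₁ hr₂ => ?_⟩⟩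
  · clear h₁ h₂ hlen
    induction h with
    | nil => rfl
    | @cons a b _ _ hab _ ih =>
      simp only [List.countP_cons, decide_eq_true_eq]
      split_ifs <;> omega
  · simp only [List.get_eq_getElem]
    rw [le_getElem_iff_length_sub_le_countP h₂ hr₂, ← hlen]
    exact ((le_getElem_iff_length_sub_le_countP h₁ hr₁ _).mp le_rfl).trans (h _)

lemma countP_sortedInit (x : ℕ → ℕ) (p c : ℕ) :
    (sortedInit x p).countP (c ≤ ·) = countGE x p c := by
  rw [← Multiset.coe_countP, sortedInit, Multiset.sort_eq]
  induction p with
  | zero => simp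
  | succ p ih =>
    rw [Multiset.range_succ, Multiset.map_cons, Multiset.countP_cons, ih, countGE_succ]

lemma bruhatLE_iff_countGE {m : ℕ} {x y : ℕ → ℕ} :
    bruhatLE m x y ↔ ∀ p, 1 ≤ p → p ≤ m → ∀ c, countGE x p c ≤ countGE y p c := by
  refine forall_congr' fun p => forall_congr' fun _ => forall_congr' fun _ => ?_
  simp only [← countP_sortedInit]
  exact forall₂_le_iff_countP_le (Multiset.pairwise_sort _ _) (Multiset.pairwise_sort _ _)
    (by simp [sortedInit])


lemma transp_apply_left (i j : ℕ) : transp i j i = j := by simp [transp]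

lemma transp_apply_right (i j : ℕ) : transp i j j = i := by
  by_cases h : j = i <;> simp [transp, h]

lemma transp_apply_of_ne {i j k : ℕ} (hi : k ≠ i) (hj : k ≠ j) : transp i j k = k := by
  simp [transp, hi, hj]

lemma comp_transp_comp_transp (x : ℕ → ℕ) (i j : ℕ) :
    (x ∘ transp i j) ∘ transp i j = x := by
  funext k
  simp only [Function.comp_apply]
  congr 1
  unfold transp
  split_ifs <;> omega

section Transposition

variable {x : ℕ → ℕ} {i j p : ℕ}

lemma countGE_comp_transp_of_lt (hij : i < j) (hpi : p < i) (c : ℕ) :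
    countGE (x ∘ transp i j) p c = countGE x p c :=
  countGE_congr (fun k _ hk => by
    rw [Function.comp_apply, transp_apply_of_ne (by omega) (by omega)]) c

lemma countGE_comp_transp_add (hi : 1 ≤ i) (hip : i ≤ p) (hpj : p < j) (c : ℕ) :
    countGE (x ∘ transp i j) p c + (if c ≤ x i then 1 else 0) =
      countGE x p c + (if c ≤ x j then 1 else 0) := by
  induction p, hip using Nat.le_induction with
  | base =>
    obtain ⟨q, rfl⟩ : ∃ q, i = q + 1 := ⟨i - 1, by omega⟩
    rw [countGE_succ, countGE_succ, countGE_comp_transp_of_lt hpj (lt_add_one q),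
      Function.comp_apply, transp_apply_left]
    omega
  | succ p hip ih =>
    rw [countGE_succ, countGE_succ, Function.comp_apply,
      transp_apply_of_ne (by omega) (by omega)]
    have := ih (by omega)
    omega

lemma countGE_comp_transp_of_le (hi : 1 ≤ i) (hij : i < j) (hjp : j ≤ p) (c : ℕ) :
    countGE (x ∘ transp i j) p c = countGE x p c := by
  induction p, hjp using Nat.le_induction with
  | base =>
    obtain ⟨q, rfl⟩ : ∃ q, j = q + 1 := ⟨j - 1, by omega⟩
    have := countGE_comp_transp_add (x := x) hi (by omega : i ≤ q) (lt_add_one q) c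
    rw [countGE_succ, countGE_succ, Function.comp_apply, transp_apply_right]
    omega
  | succ p hjp ih =>
    rw [countGE_succ, countGE_succ, Function.comp_apply, ih,
      transp_apply_of_ne (by omega) (by omega)]

lemma bruhatLE_comp_transp_iff {m : ℕ} (hi : 1 ≤ i) (hij : i < j) (hjm : j ≤ m) :
    bruhatLE m x (x ∘ transp i j) ↔ x i ≤ x j := by
  rw [bruhatLE_iff_countGE]
  constructor
  · intro h
    have h₁ := h i hi (by omega) (x i)
    have h₂ := countGE_comp_transp_add (x := x) hi le_rfl hij (x i)
    split_ifs at h₂ <;> omega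
  · intro h p hp hpm c
    rcases lt_or_ge p i with hpi | hip
    · rw [countGE_comp_transp_of_lt hij hpi]
    rcases lt_or_ge p j with hpj | hjp
    · have := countGE_comp_transp_add (x := x) hi hip hpj c
      split_ifs at this <;> omega
    · rw [countGE_comp_transp_of_le hi hij hjp]

lemma apply_eq_of_countGE_eq {z : ℕ → ℕ} {k : ℕ} (hk : 1 ≤ k)
    (h : ∀ c, (c = x k ∨ c = x k + 1) →
      countGE z (k - 1) c = countGE x (k - 1) c ∧ countGE z k c = countGE x k c) :
    z k = x k := by
  obtain ⟨q, rfl⟩ : ∃ q, k = q + 1 := ⟨k - 1, by omega⟩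
  obtain ⟨h₀, h₁⟩ := h _ (Or.inl rfl)
  obtain ⟨h₂, h₃⟩ := h _ (Or.inr rfl)
  rw [Nat.add_sub_cancel] at h₀ h₂
  rw [countGE_succ, countGE_succ] at h₁ h₃
  split_ifs at h₁ h₃ <;> omega

lemma eq_and_eq_or_eq_and_eq_of_indicator_add_eq {a b a' b' : ℕ} (hab : a < b)
    (h : ∀ c, (if c ≤ a' then 1 else 0) + (if c ≤ b' then 1 else 0) =
      (if c ≤ a then 1 else 0) + (if c ≤ b then 1 else 0)) :
    (a' = a ∧ b' = b) ∨ (a' = b ∧ b' = a) := by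
  have h₁ : a ≤ a' ∧ a ≤ b' := by
    have := h a
    split_ifs at this <;> omega
  have h₂ : (a' ≤ a ∧ a < b') ∨ (a < a' ∧ b' ≤ a) := by
    have := h (a + 1)
    split_ifs at this <;> omega
  have h₃ : (a' < b ∧ b ≤ b') ∨ (b ≤ a' ∧ b' < b) := by
    have := h b
    split_ifs at this <;> omega
  have h₄ : a' ≤ b ∧ b' ≤ b := by
    have := h (b + 1)
    split_ifs at this <;> omega
  omega

lemma countGE_eq_of_bruhatLE_of_bruhatLE_comp_transp {m : ℕ} {z : ℕ → ℕ} (hi : 1 ≤ i)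
    (hij : i < j) (hxz : bruhatLE m x z)
    (hzt : bruhatLE m z (x ∘ transp i j)) {p c : ℕ} (hpm : p ≤ m)
    (hpc : p < i ∨ j ≤ p ∨ c ≤ x i ∨ x j < c) :
    countGE z p c = countGE x p c := by
  rcases Nat.eq_zero_or_pos p with rfl | hp
  · simp
  have h₁ := bruhatLE_iff_countGE.mp hxz p hp hpm c
  have h₂ := bruhatLE_iff_countGE.mp hzt p hp hpm c
  rcases lt_or_ge p i with hpi | hip
  · rw [countGE_comp_transp_of_lt hij hpi] at h₂; omega
  rcases lt_or_ge p j with hpj | hjp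
  · have h₃ := countGE_comp_transp_add (x := x) hi hip hpj c
    split_ifs at h₃ <;> omega
  · rw [countGE_comp_transp_of_le hi hij hjp] at h₂; omega

lemma apply_eq_of_bruhatLE_of_bruhatLE_comp_transp {m : ℕ} {z : ℕ → ℕ} (hi : 1 ≤ i)
    (hij : i < j) (hmid : ∀ k, i < k → k < j → x k < x i ∨ x j < x k)
    (hzx : ∀ a, a ∉ Set.Icc 1 m → z a = x a)
    (hxz : bruhatLE m x z) (hzt : bruhatLE m z (x ∘ transp i j)) {k : ℕ} (hki : k ≠ i)
    (hkj : k ≠ j) : z k = x k := by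
  by_cases hk : k ∈ Set.Icc 1 m
  swap
  · exact hzx k hk
  obtain ⟨hk, hkm⟩ := hk
  have hc : ∀ c, (c = x k ∨ c = x k + 1) → k < i ∨ j < k ∨ c ≤ x i ∨ x j < c := by
    intro c hc
    by_cases hwin : i < k ∧ k < j
    · rcases hmid k hwin.1 hwin.2 with h | h <;> omega
    · omega
  refine apply_eq_of_countGE_eq hk fun c hcx => ?_
  have := hc c hcx
  exact ⟨countGE_eq_of_bruhatLE_of_bruhatLE_comp_transp hi hij hxz hzt (by omega) (by omega),
    countGE_eq_of_bruhatLE_of_bruhatLE_comp_transp hi hij hxz hzt hkm (by omega)⟩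

lemma eq_or_eq_comp_transp_of_bruhatLE {m : ℕ} {z : ℕ → ℕ} (hi : 1 ≤ i) (hij : i < j)
    (hjm : j ≤ m) (hx : x i < x j) (hmid : ∀ k, i < k → k < j → x k < x i ∨ x j < x k)
    (hzx : ∀ a, a ∉ Set.Icc 1 m → z a = x a)
    (hxz : bruhatLE m x z) (hzt : bruhatLE m z (x ∘ transp i j)) :
    z = x ∨ z = x ∘ transp i j := by
  have hrest : ∀ k, k ≠ i → k ≠ j → z k = x k := fun k =>
    apply_eq_of_bruhatLE_of_bruhatLE_comp_transp hi hij hmid hzx hxz hzt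
  have hout : ∀ p, p ≤ m → (p < i ∨ j ≤ p) → ∀ c, countGE z p c = countGE x p c :=
    fun p hpm hp c => countGE_eq_of_bruhatLE_of_bruhatLE_comp_transp hi hij hxz hzt hpm
      (by omega)
  have hconst : ∀ p, i ≤ p → p < j → ∀ c,
      countGE z p c + countGE x i c = countGE x p c + countGE z i c := by
    intro p hip hpj c
    induction p, hip using Nat.le_induction with
    | base => omega
    | succ p hip ih =>
      rw [countGE_succ, countGE_succ, hrest (p + 1) (by omega) (by omega)]
      have := ih (by omega)
      omega
  have hends : (z i = x i ∧ z j = x j) ∨ (z i = x j ∧ z j = x i) := by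
    refine eq_and_eq_or_eq_and_eq_of_indicator_add_eq hx fun c => ?_
    obtain ⟨q, rfl⟩ : ∃ q, i = q + 1 := ⟨i - 1, by omega⟩
    obtain ⟨r, rfl⟩ : ∃ r, j = r + 1 := ⟨j - 1, by omega⟩
    have h₁ := hconst r (by omega) (by omega) c
    have h₂ := hout (r + 1) hjm (by omega) c
    have h₃ := hout q (by omega) (by omega) c
    simp only [countGE_succ] at h₁ h₂
    omega
  rcases hends with ⟨hzi, hzj⟩ | ⟨hzi, hzj⟩
  · left
    funext k
    by_cases hki : k = i
    · rw [hki, hzi]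
    by_cases hkj : k = j
    · rw [hkj, hzj]
    exact hrest k hki hkj
  · right
    funext k
    rw [Function.comp_apply]
    by_cases hki : k = i
    · rw [hki, hzi, transp_apply_left]
    by_cases hkj : k = j
    · rw [hkj, hzj, transp_apply_right]
    rw [transp_apply_of_ne hki hkj]
    exact hrest k hki hkj

lemma bruhatCovBy_comp_transp {m : ℕ} (hi : 1 ≤ i) (hij : i < j) (hjm : j ≤ m)
    (hx : x i < x j) (hmid : ∀ k, i < k → k < j → x k < x i ∨ x j < x k)
    (hxout : ∀ a, a ∉ Set.Icc 1 m → x a = a) :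
    bruhatCovBy m x (x ∘ transp i j) := by
  refine ⟨⟨(bruhatLE_comp_transp_iff hi hij hjm).mpr hx.le, fun h => ?_⟩, ?_⟩
  · have := congrFun h i
    rw [Function.comp_apply, transp_apply_left] at this
    omega
  · rintro z hz ⟨⟨hxz, hne₁⟩, hzt, hne₂⟩
    have hzx : ∀ a, a ∉ Set.Icc 1 m → z a = x a := fun a ha => (hz.2 a ha).trans (hxout a ha).symm
    rcases eq_or_eq_comp_transp_of_bruhatLE hi hij hjm hx hmid hzx hxz hzt with rfl | rfl
    · exact hne₁ rfl
    · exact hne₂ rfl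

lemma comp_transp_bruhatLE_iff {m : ℕ} (hi : 1 ≤ i) (hij : i < j) (hjm : j ≤ m) :
    bruhatLE m (x ∘ transp i j) x ↔ x j ≤ x i := by
  have h := bruhatLE_comp_transp_iff (x := x ∘ transp i j) hi hij hjm
  rwa [comp_transp_comp_transp, Function.comp_apply, Function.comp_apply, transp_apply_left,
    transp_apply_right] at h

lemma comp_transp_bruhatCovBy {m : ℕ} (hi : 1 ≤ i) (hij : i < j) (hjm : j ≤ m)
    (hx : x j < x i) (hmid : ∀ k, i < k → k < j → x k < x j ∨ x i < x k)
    (hxout : ∀ a, a ∉ Set.Icc 1 m → x a = a) :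
    bruhatCovBy m (x ∘ transp i j) x := by
  have hout : ∀ a, a ∉ Set.Icc 1 m → (x ∘ transp i j) a = a := fun a ha => by
    have hai : a ≠ i := fun h => ha ⟨by omega, by omega⟩
    have haj : a ≠ j := fun h => ha ⟨by omega, by omega⟩
    rw [Function.comp_apply, transp_apply_of_ne hai haj, hxout a ha]
  have h := bruhatCovBy_comp_transp (x := x ∘ transp i j) hi hij hjm
  simp only [Function.comp_apply, transp_apply_left, transp_apply_right] at h
  rw [comp_transp_comp_transp] at h
  refine h hx (fun k hik hkj => ?_) hout
  rw [transp_apply_of_ne (by omega) (by omega)]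
  exact hmid k hik hkj

end Transposition

lemma sOneTo_apply (n k : ℕ) :
    sOneTo n k = if 1 ≤ k ∧ k ≤ n then k + 1 else if k = n + 1 then 1 else k := by
  induction n generalizing k with
  | zero => simp only [sOneTo, id]; split_ifs <;> omega
  | succ n ih =>
    rw [sOneTo, Function.comp_apply]
    by_cases h₁ : k = n + 1
    · rw [h₁, transp_apply_left, ih]; split_ifs <;> omega
    by_cases h₂ : k = n + 2
    · rw [h₂, transp_apply_right, ih]; split_ifs <;> omega
    · rw [transp_apply_of_ne h₁ h₂, ih]; split_ifs <;> omega

lemma sOneTo_injOn (n : ℕ) : Set.InjOn (sOneTo n) (Set.Icc 1 (n + 1)) := by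
  intro a ha b hb h
  rw [sOneTo_apply, sOneTo_apply] at h
  simp only [Set.mem_Icc] at ha hb
  split_ifs at h <;> omega

lemma sOneTo_mapsTo (n : ℕ) : Set.MapsTo (sOneTo n) (Set.Icc 1 (n + 1)) (Set.Icc 1 (n + 1)) := by
  intro a ha
  simp only [Set.mem_Icc] at ha ⊢
  rw [sOneTo_apply]
  split_ifs <;> omega

lemma sOneTo_eq_self {n a : ℕ} (ha : a ∉ Set.Icc 1 (n + 1)) : sOneTo n a = a := by
  simp only [Set.mem_Icc] at ha
  rw [sOneTo_apply]
  split_ifs <;> omega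

section Uhat

variable {n : ℕ} {u : ℕ → ℕ} {i j k p : ℕ}

lemma uhat_one : uhat u 1 = 1 := rfl

lemma uhat_succ (hk : 1 ≤ k) : uhat u (k + 1) = u k + 1 := by
  simp only [uhat, if_neg (show ¬k + 1 ≤ 1 by omega), Nat.add_sub_cancel]

lemma one_le_uhat (hk : 1 ≤ k) : 1 ≤ uhat u k := by
  unfold uhat; split_ifs <;> omega

lemma uhat_sOneTo_apply (hk : 1 ≤ k) (hkn : k ≤ n) : (uhat u ∘ sOneTo n) k = u k + 1 := by
  rw [Function.comp_apply, sOneTo_apply, if_pos ⟨hk, hkn⟩, uhat_succ hk]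

lemma uhat_sOneTo_apply_last : (uhat u ∘ sOneTo n) (n + 1) = 1 := by
  rw [Function.comp_apply, sOneTo_apply, if_neg (by omega), if_pos rfl, uhat_one]

lemma one_le_uhat_sOneTo (hk : 1 ≤ k) (hkn : k ≤ n + 1) : 1 ≤ (uhat u ∘ sOneTo n) k := by
  rcases lt_or_eq_of_le hkn with hkn | rfl
  · rw [uhat_sOneTo_apply hk (by omega)]; omega
  · rw [uhat_sOneTo_apply_last]

lemma countGE_uhat_succ (hp : p ≤ n) (c : ℕ) :
    countGE (uhat u) (p + 1) c = countGE (uhat u ∘ sOneTo n) p c + if c ≤ 1 then 1 else 0 := by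
  induction p with
  | zero => rw [countGE_succ, countGE_zero, countGE_zero, uhat_one]
  | succ p ih =>
    rw [countGE_succ, ih (by omega), countGE_succ, uhat_succ (by omega),
      uhat_sOneTo_apply (by omega) hp]
    omega

lemma countGE_uhat_add (hp : 1 ≤ p) (hpn : p ≤ n) (c : ℕ) :
    countGE (uhat u) p c + (if c ≤ (uhat u ∘ sOneTo n) p then 1 else 0) =
      countGE (uhat u ∘ sOneTo n) p c + if c ≤ 1 then 1 else 0 := by
  rw [← countGE_uhat_succ hpn, countGE_succ, uhat_succ hp, uhat_sOneTo_apply hp hpn]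

lemma uhat_bruhatLE_uhat_sOneTo : bruhatLE (n + 1) (uhat u) (uhat u ∘ sOneTo n) := by
  rw [bruhatLE_iff_countGE]
  intro p hp hpn c
  rcases lt_or_eq_of_le hpn with hpn | rfl
  · have h₁ := countGE_uhat_add (u := u) hp (by omega : p ≤ n) c
    have h₂ := one_le_uhat_sOneTo (u := u) hp hpn.le
    split_ifs at h₁ <;> omega
  · rw [countGE_uhat_succ le_rfl, countGE_succ, uhat_sOneTo_apply_last]

lemma uhat_comp_transp_bruhatLE_iff (hi : 1 ≤ i) (hij : i < j) (hjn : j ≤ n + 1) :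
    bruhatLE (n + 1) (uhat u ∘ transp i j) (uhat u ∘ sOneTo n) ↔
      ∀ p, i ≤ p → p < j → uhat u j ≤ max (uhat u i) ((uhat u ∘ sOneTo n) p) := by
  have hvw := bruhatLE_iff_countGE.mp (uhat_bruhatLE_uhat_sOneTo (n := n) (u := u))
  have hvi := one_le_uhat (u := u) hi
  rw [bruhatLE_iff_countGE]
  constructor
  · intro h p hip hpj
    have h₁ := h p (by omega) (by omega) (uhat u j)
    have h₂ := countGE_comp_transp_add (x := uhat u) hi hip hpj (uhat u j)
    have h₃ := countGE_uhat_add (u := u) (n := n) (by omega : 1 ≤ p) (by omega) (uhat u j)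
    split_ifs at h₂ h₃ <;> omega
  · intro h p hp hpn c
    rcases lt_or_ge p i with hpi | hip
    · rw [countGE_comp_transp_of_lt hij hpi]; exact hvw p hp hpn c
    rcases lt_or_ge p j with hpj | hjp
    · have h₁ := h p hip hpj
      have h₂ := countGE_comp_transp_add (x := uhat u) hi hip hpj c
      have h₃ := countGE_uhat_add (u := u) (n := n) (by omega : 1 ≤ p) (by omega) c
      have h₄ := one_le_uhat_sOneTo (u := u) (n := n) (by omega : 1 ≤ p) (by omega)
      split_ifs at h₂ h₃ <;> omega
    · rw [countGE_comp_transp_of_le hi hij hjp]; exact hvw p hp hpn c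

lemma uhat_bruhatLE_uhat_sOneTo_comp_transp_iff (hi : 1 ≤ i) (hij : i < j) (hjn : j ≤ n + 1) :
    bruhatLE (n + 1) (uhat u) ((uhat u ∘ sOneTo n) ∘ transp i j) ↔
      ∀ p, i ≤ p → p < j →
        (uhat u ∘ sOneTo n) i ≤ max ((uhat u ∘ sOneTo n) j) ((uhat u ∘ sOneTo n) p) := by
  have hvw := bruhatLE_iff_countGE.mp (uhat_bruhatLE_uhat_sOneTo (n := n) (u := u))
  have hwj := one_le_uhat_sOneTo (u := u) (n := n) (by omega : 1 ≤ j) hjn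
  rw [bruhatLE_iff_countGE]
  constructor
  · intro h p hip hpj
    have h₁ := h p (by omega) (by omega) ((uhat u ∘ sOneTo n) i)
    have h₂ := countGE_comp_transp_add (x := uhat u ∘ sOneTo n) hi hip hpj
      ((uhat u ∘ sOneTo n) i)
    have h₃ := countGE_uhat_add (u := u) (n := n) (by omega : 1 ≤ p) (by omega)
      ((uhat u ∘ sOneTo n) i)
    split_ifs at h₂ h₃ <;> omega
  · intro h p hp hpn c
    rcases lt_or_ge p i with hpi | hip
    · rw [countGE_comp_transp_of_lt hij hpi]; exact hvw p hp hpn c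
    rcases lt_or_ge p j with hpj | hjp
    · have h₁ := h p hip hpj
      have h₂ := countGE_comp_transp_add (x := uhat u ∘ sOneTo n) hi hip hpj c
      have h₃ := countGE_uhat_add (u := u) (n := n) (by omega : 1 ≤ p) (by omega) c
      have h₄ := one_le_uhat_sOneTo (u := u) (n := n) (by omega : 1 ≤ p) (by omega)
      split_ifs at h₂ h₃ <;> omega
    · rw [countGE_comp_transp_of_le hi hij hjp]; exact hvw p hp hpn c

lemma one_le_apply_of_isPermOn (hu : IsPermOn n u) (hk : 1 ≤ k) (hkn : k ≤ n) : 1 ≤ u k :=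
  (hu.1.mapsTo ⟨hk, hkn⟩).1

lemma uhat_injOn (hu : IsPermOn n u) : Set.InjOn (uhat u) (Set.Icc 1 (n + 1)) := by
  rintro a ⟨ha, han⟩ b ⟨hb, hbn⟩ h
  obtain ⟨a, rfl⟩ : ∃ a', a = a' + 1 := ⟨a - 1, by omega⟩
  obtain ⟨b, rfl⟩ : ∃ b', b = b' + 1 := ⟨b - 1, by omega⟩
  rcases Nat.eq_zero_or_pos a with rfl | ha <;> rcases Nat.eq_zero_or_pos b with rfl | hb
  · rfl
  · rw [uhat_one, uhat_succ hb] at h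
    have := one_le_apply_of_isPermOn hu hb (by omega)
    omega
  · rw [uhat_one, uhat_succ ha] at h
    have := one_le_apply_of_isPermOn hu ha (by omega)
    omega
  · rw [uhat_succ ha, uhat_succ hb] at h
    rw [hu.1.injOn ⟨ha, by omega⟩ ⟨hb, by omega⟩ (by omega)]

lemma uhat_sOneTo_injOn (hu : IsPermOn n u) :
    Set.InjOn (uhat u ∘ sOneTo n) (Set.Icc 1 (n + 1)) :=
  (uhat_injOn hu).comp (sOneTo_injOn n) (sOneTo_mapsTo n)

lemma uhat_eq_self (hu : IsPermOn n u) {a : ℕ} (ha : a ∉ Set.Icc 1 (n + 1)) : uhat u a = a := by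
  simp only [Set.mem_Icc, not_and_or, not_le] at ha
  rcases ha with ha | ha
  · obtain rfl : a = 0 := by omega
    rfl
  · obtain ⟨b, rfl⟩ : ∃ b, a = b + 1 := ⟨a - 1, by omega⟩
    rw [uhat_succ (by omega), hu.2 b (by simp only [Set.mem_Icc]; omega)]

lemma uhat_sOneTo_eq_self (hu : IsPermOn n u) {a : ℕ} (ha : a ∉ Set.Icc 1 (n + 1)) :
    (uhat u ∘ sOneTo n) a = a := by
  rw [Function.comp_apply, sOneTo_eq_self ha, uhat_eq_self hu ha]

end Uhat

/-- `a = k_L` for the convention `u 0 = 0`. -/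
def IsPrevSmaller (u : ℕ → ℕ) (k a : ℕ) : Prop :=
  a < k ∧ (a = 0 ∨ u a < u k) ∧ ∀ b, a < b → b < k → ¬(b = 0 ∨ u b < u k)

/-- `b = k_R` for the convention `u (n + 1) = 0`. -/
def IsNextSmaller (n : ℕ) (u : ℕ → ℕ) (k b : ℕ) : Prop :=
  k < b ∧ b ≤ n + 1 ∧ (b = n + 1 ∨ u b < u k) ∧
    ∀ a, k < a → a < b → ¬(a = n + 1 ∨ u a < u k)

lemma IsPrevSmaller.unique {u : ℕ → ℕ} {k a a' : ℕ} (h : IsPrevSmaller u k a)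
    (h' : IsPrevSmaller u k a') : a = a' := by
  obtain ⟨ha, hua, hmax⟩ := h
  obtain ⟨ha', hua', hmax'⟩ := h'
  rcases lt_trichotomy a a' with hlt | rfl | hlt
  · exact absurd hua' (hmax a' hlt ha')
  · rfl
  · exact absurd hua (hmax' a hlt ha)

lemma IsNextSmaller.unique {n : ℕ} {u : ℕ → ℕ} {k b b' : ℕ} (h : IsNextSmaller n u k b)
    (h' : IsNextSmaller n u k b') : b = b' := by
  obtain ⟨hb, -, hub, hmin⟩ := h
  obtain ⟨hb', -, hub', hmin'⟩ := h'
  rcases lt_trichotomy b b' with hlt | rfl | hlt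
  · exact absurd hub (hmin' b hb hlt)
  · rfl
  · exact absurd hub' (hmin b' hb' hlt)

section Atoms

variable {n : ℕ} {u : ℕ → ℕ} {i j : ℕ}

theorem uhat_covBy_and_le_iff_isPrevSmaller (hu : IsPermOn n u) (hi : 1 ≤ i) (hij : i < j)
    (hjn : j ≤ n + 1) :
    (bruhatCovBy (n + 1) (uhat u) (uhat u ∘ transp i j) ∧
        bruhatLE (n + 1) (uhat u ∘ transp i j) (uhat u ∘ sOneTo n)) ↔
      IsPrevSmaller u (j - 1) (i - 1) := by
  obtain ⟨j, rfl⟩ : ∃ j', j = j' + 1 := ⟨j - 1, by omega⟩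
  have hvj : uhat u (j + 1) = u j + 1 := uhat_succ (by omega)
  have huj := one_le_apply_of_isPermOn hu (by omega : 1 ≤ j) (by omega)
  have hvi : (i - 1 = 0 ∨ u (i - 1) < u j) ↔ uhat u i < uhat u (j + 1) := by
    obtain ⟨i, rfl⟩ : ∃ i', i = i' + 1 := ⟨i - 1, by omega⟩
    rcases Nat.eq_zero_or_pos i with rfl | hi
    · rw [zero_add, uhat_one, hvj]
      simp only [Nat.sub_self, true_or, true_iff]
      omega
    · rw [Nat.add_sub_cancel, uhat_succ hi, hvj]
      omega
  rw [Nat.add_sub_cancel, uhat_comp_transp_bruhatLE_iff hi hij hjn]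
  constructor
  · rintro ⟨⟨⟨hle, -⟩, -⟩, hwin⟩
    have hlt : uhat u i < uhat u (j + 1) :=
      lt_of_le_of_ne ((bruhatLE_comp_transp_iff hi hij hjn).mp hle)
        fun h => by have := uhat_injOn hu ⟨hi, by omega⟩ ⟨by omega, hjn⟩ h; omega
    refine ⟨by omega, hvi.mpr hlt, fun b hb hbj => ?_⟩
    have := hwin b (by omega) (by omega)
    rw [uhat_sOneTo_apply (by omega) (by omega)] at this
    omega
  · rintro ⟨-, hpar, hmax⟩
    have hmid : ∀ k, i < k → k < j + 1 → uhat u (j + 1) < uhat u k := by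
      intro k hik hkj
      obtain ⟨k, rfl⟩ : ∃ k', k = k' + 1 := ⟨k - 1, by omega⟩
      have hne : u k ≠ u j := fun h => by
        have := hu.1.injOn ⟨by omega, by omega⟩ ⟨by omega, by omega⟩ h; omega
      have := hmax k (by omega) (by omega)
      rw [hvj, uhat_succ (by omega)]
      omega
    refine ⟨bruhatCovBy_comp_transp hi hij hjn (hvi.mp hpar)
      (fun k hik hkj => Or.inr (hmid k hik hkj)) fun a => uhat_eq_self hu, fun p hip hpj => ?_⟩
    rw [uhat_sOneTo_apply (by omega) (by omega), hvj]
    rcases Nat.lt_or_ge p j with hpj' | hpj'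
    · have := hmax p (by omega) hpj'
      omega
    · rw [show p = j by omega]
      exact le_max_right _ _

theorem uhat_le_and_covBy_iff_isNextSmaller (hu : IsPermOn n u) (hi : 1 ≤ i) (hij : i < j)
    (hjn : j ≤ n + 1) :
    (bruhatLE (n + 1) (uhat u) (uhat u ∘ sOneTo n ∘ transp i j) ∧
        bruhatCovBy (n + 1) (uhat u ∘ sOneTo n ∘ transp i j) (uhat u ∘ sOneTo n)) ↔
      IsNextSmaller n u i j := by
  have hwi : (uhat u ∘ sOneTo n) i = u i + 1 := uhat_sOneTo_apply hi (by omega)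
  have hui := one_le_apply_of_isPermOn hu hi (by omega)
  have hwj : (j = n + 1 ∨ u j < u i) ↔ (uhat u ∘ sOneTo n) j < (uhat u ∘ sOneTo n) i := by
    rcases Nat.lt_or_ge j (n + 1) with hj | hj
    · rw [uhat_sOneTo_apply (by omega) (by omega), hwi]; omega
    · rw [show j = n + 1 by omega, uhat_sOneTo_apply_last, hwi]; omega
  rw [← Function.comp_assoc, uhat_bruhatLE_uhat_sOneTo_comp_transp_iff hi hij hjn]
  constructor
  · rintro ⟨hwin, ⟨hle, -⟩, -⟩
    have hlt : (uhat u ∘ sOneTo n) j < (uhat u ∘ sOneTo n) i :=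
      lt_of_le_of_ne ((comp_transp_bruhatLE_iff hi hij hjn).mp hle)
        fun h => by have := uhat_sOneTo_injOn hu ⟨by omega, hjn⟩ ⟨hi, by omega⟩ h; omega
    refine ⟨hij, hjn, hwj.mpr hlt, fun a ha haj => ?_⟩
    have := hwin a (by omega) haj
    rw [hwi, uhat_sOneTo_apply (k := a) (by omega) (by omega)] at this
    omega
  · rintro ⟨-, -, hpar, hmin⟩
    have hmid : ∀ k, i < k → k < j → (uhat u ∘ sOneTo n) i < (uhat u ∘ sOneTo n) k := by
      intro k hik hkj
      have hne : u k ≠ u i := fun h => by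
        have := hu.1.injOn ⟨by omega, by omega⟩ ⟨hi, by omega⟩ h; omega
      have := hmin k hik hkj
      rw [hwi, uhat_sOneTo_apply (by omega) (by omega)]
      omega
    refine ⟨fun p hip hpj => ?_, comp_transp_bruhatCovBy hi hij hjn (hwj.mp hpar)
      (fun k hik hkj => Or.inr (hmid k hik hkj)) fun a => uhat_sOneTo_eq_self hu⟩
    rcases Nat.eq_or_lt_of_le hip with rfl | hip
    · exact le_max_right _ _
    · exact (hmid p hip hpj).le.trans (le_max_right _ _)

end Atoms

end BruhatInterval

open BruhatInterval

theorem stmt12_general (n : ℕ) (u : ℕ → ℕ) (hu : IsPermOn n u)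
    (kL kR : ℕ → ℕ)
    (hkL : ∀ k, 1 ≤ k → k ≤ n → kL k < k ∧ (kL k = 0 ∨ u (kL k) < u k) ∧
      ∀ a, kL k < a → a < k → ¬(a = 0 ∨ u a < u k))
    (hkR : ∀ k, 1 ≤ k → k ≤ n → k < kR k ∧ kR k ≤ n + 1 ∧
      (kR k = n + 1 ∨ u (kR k) < u k) ∧
      ∀ b, k < b → b < kR k → ¬(b = n + 1 ∨ u b < u k)) :
    ∀ i j, 1 ≤ i → i < j → j ≤ n + 1 →
      ((bruhatCovBy (n + 1) (uhat u) (uhat u ∘ transp i j) ∧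
          bruhatLE (n + 1) (uhat u ∘ transp i j) (uhat u ∘ sOneTo n)) ↔
        (1 ≤ j - 1 ∧ j - 1 ≤ n ∧ i - 1 = kL (j - 1))) ∧
      ((bruhatLE (n + 1) (uhat u) (uhat u ∘ sOneTo n ∘ transp i j) ∧
          bruhatCovBy (n + 1) (uhat u ∘ sOneTo n ∘ transp i j) (uhat u ∘ sOneTo n)) ↔
        (1 ≤ i ∧ i ≤ n ∧ j = kR i)) := by
  intro i j hi hij hjn
  refine ⟨(uhat_covBy_and_le_iff_isPrevSmaller hu hi hij hjn).trans ?_,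
    (uhat_le_and_covBy_iff_isNextSmaller hu hi hij hjn).trans ?_⟩
  · have hk : IsPrevSmaller u (j - 1) (kL (j - 1)) := hkL (j - 1) (by omega) (by omega)
    exact ⟨fun h => ⟨by omega, by omega, h.unique hk⟩, fun ⟨_, _, h⟩ => h ▸ hk⟩
  · have hk : IsNextSmaller n u i (kR i) := hkR i hi (by omega)
    exact ⟨fun h => ⟨hi, by omega, h.unique hk⟩, fun ⟨_, _, h⟩ => h ▸ hk⟩

/-- Atoms and coatoms of the Bruhat interval `[û, û·s(1,n)]` in `S_{n+1}` correspond to the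
edges of the left tree, resp. the right tree, of the triangulation `ψ(u)`: with the
convention `u(0) = u(n+1) = 0` one sets `k_L = max{a : 0 ≤ a < k, u(a) < u(k)}` and
`k_R = min{b : k < b ≤ n+1, u(b) < u(k)}`; then for `1 ≤ i < j ≤ n+1`, `v ⋖ v·t_{i,j} ≤ w`
iff `j−1 ∈ {1,…,n}` and `i−1 = (j−1)_L`, and `v ≤ w·t_{i,j} ⋖ w` iff `i ∈ {1,…,n}` and
`j = i_R`, where `v = û`, `w = û·s(1,n)`. -/
theorem stmt12 (n : ℕ) (hn : 1 ≤ n) (u : ℕ → ℕ) (hu : IsPermOn n u)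
    (kL kR : ℕ → ℕ)
    (hkL : ∀ k, 1 ≤ k → k ≤ n → kL k < k ∧ (kL k = 0 ∨ u (kL k) < u k) ∧
      ∀ a, kL k < a → a < k → ¬(a = 0 ∨ u a < u k))
    (hkR : ∀ k, 1 ≤ k → k ≤ n → k < kR k ∧ kR k ≤ n + 1 ∧
      (kR k = n + 1 ∨ u (kR k) < u k) ∧
      ∀ b, k < b → b < kR k → ¬(b = n + 1 ∨ u b < u k)) :
    ∀ i j, 1 ≤ i → i < j → j ≤ n + 1 →
      ((bruhatCovBy (n + 1) (uhat u) (uhat u ∘ transp i j) ∧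
          bruhatLE (n + 1) (uhat u ∘ transp i j) (uhat u ∘ sOneTo n)) ↔
        (1 ≤ j - 1 ∧ j - 1 ≤ n ∧ i - 1 = kL (j - 1))) ∧
      ((bruhatLE (n + 1) (uhat u) (uhat u ∘ sOneTo n ∘ transp i j) ∧
          bruhatCovBy (n + 1) (uhat u ∘ sOneTo n ∘ transp i j) (uhat u ∘ sOneTo n)) ↔
        (1 ≤ i ∧ i ≤ n ∧ j = kR i)) :=
  stmt12_general n u hu kL kR hkL hkR
end

section
/- Let u ∈ S_n, set v = û and w = û s(1,n) in S_{n+1}. Suppose 1 ≤ i < j ≤ n+1 are such that v ⋖ v t_{i,j} and v t_{i,j} ≤ w (so v t_{i,j} is an atom of the Bruhat interval [v,w]), and suppose j−1 < k ≤ n+1 is such that v ≤ w t_{j−1,k} and w t_{j−1,k} ⋖ w (so w t_{j−1,k} is a coatom of [v,w]). Then v t_{i,j} ≰ w t_{j−1,k} in the Bruhat order. -/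
def countGE (f : ℕ → ℕ) (t : ℕ) : ℕ → ℕ
  | 0 => 0
  | i + 1 => countGE f t i + if t ≤ f (i + 1) then 1 else 0

lemma List.Forall₂.countP_le_countP {α : Type*} [Preorder α] [DecidableLE α] {l₁ l₂ : List α}
    (h : List.Forall₂ (· ≤ ·) l₁ l₂) (t : α) : l₁.countP (t ≤ ·) ≤ l₂.countP (t ≤ ·) := by
  induction h with
  | nil => rfl
  | @cons a b l₁ l₂ hab _ ih =>
    simp only [List.countP_cons]
    by_cases hta : t ≤ a
    · simp only [hta, hta.trans hab, decide_true, if_true]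
      omega
    · simp only [hta, decide_false, Bool.false_eq_true, if_false]
      split_ifs <;> omega

lemma countP_sortedInit (f : ℕ → ℕ) (i t : ℕ) :
    (sortedInit f i).countP (t ≤ ·) = countGE f t i := by
  rw [sortedInit, ← Multiset.coe_countP, Multiset.sort_eq]
  induction i with
  | zero => rfl
  | succ i ih =>
    rw [Multiset.range_succ, Multiset.map_cons, Multiset.countP_cons, ih]
    rfl

lemma bruhatLE.countGE_le {m : ℕ} {f g : ℕ → ℕ} (h : bruhatLE m f g) {i : ℕ}
    (hi : 1 ≤ i) (him : i ≤ m) (t : ℕ) : countGE f t i ≤ countGE g t i := by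
  rw [← countP_sortedInit, ← countP_sortedInit]
  exact (h i hi him).countP_le_countP t

lemma countGE_congr {f g : ℕ → ℕ} {i : ℕ} (h : ∀ q, 1 ≤ q → q ≤ i → f q = g q) (t : ℕ) :
    countGE f t i = countGE g t i := by
  induction i with
  | zero => rfl
  | succ i ih =>
    rw [countGE, countGE, ih fun q hq hqi => h q hq (by omega), h (i + 1) (by omega) le_rfl]

lemma countGE_succ' (f : ℕ → ℕ) (t i : ℕ) :
    countGE f t (i + 1) = (if t ≤ f 1 then 1 else 0) + countGE (fun q => f (q + 1)) t i := by
  induction i with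
  | zero => simp [countGE]
  | succ i ih => rw [countGE, ih, countGE, add_assoc]

section transp

variable {a b : ℕ}

lemma transp_left (a b : ℕ) : transp a b a = b := by simp [transp]

lemma transp_right (h : a ≠ b) : transp a b b = a := by simp [transp, h.symm]

lemma transp_of_ne {x : ℕ} (ha : x ≠ a) (hb : x ≠ b) : transp a b x = x := by
  simp [transp, ha, hb]

lemma comp_transp_comp_transp (f : ℕ → ℕ) (a b : ℕ) : f ∘ transp a b ∘ transp a b = f := by
  funext x
  simp only [Function.comp_apply, transp]
  split_ifs <;> simp_all

lemma comp_transp_eq_self {f : ℕ → ℕ} (h : f a = f b) : f ∘ transp a b = f := by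
  funext x
  simp only [Function.comp_apply, transp]
  split_ifs <;> simp_all

lemma countGE_comp_transp (f : ℕ → ℕ) (t : ℕ) {i : ℕ} (ha : 1 ≤ a) (hai : a ≤ i) (hib : i < b) :
    countGE (f ∘ transp a b) t i + (if t ≤ f a then 1 else 0) =
      countGE f t i + (if t ≤ f b then 1 else 0) := by
  induction i, hai using Nat.le_induction with
  | base =>
    obtain ⟨a, rfl⟩ : ∃ a', a = a' + 1 := ⟨a - 1, by omega⟩
    have hbelow : countGE (f ∘ transp (a + 1) b) t a = countGE f t a :=
      countGE_congr (fun q _ hq => by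
        rw [Function.comp_apply, transp_of_ne (by omega) (by omega)]) t
    simp only [countGE, hbelow, Function.comp_apply, transp_left]
    omega
  | succ i hai ih =>
    have hfix : transp a b (i + 1) = i + 1 := transp_of_ne (by omega) (by omega)
    simp only [countGE, Function.comp_apply, hfix]
    have := ih (by omega)
    omega

lemma lt_of_bruhatLT_comp_transp {m : ℕ} {f : ℕ → ℕ} (h : bruhatLT m f (f ∘ transp a b))
    (ha : 1 ≤ a) (hab : a < b) (ham : a ≤ m) : f a < f b := by
  rcases lt_trichotomy (f a) (f b) with hlt | heq | hgt
  · exact hlt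
  · exact absurd (comp_transp_eq_self heq).symm h.2
  · have hcount := h.1.countGE_le ha ham (f a)
    have hswap := countGE_comp_transp f (f a) ha le_rfl hab
    simp only [le_refl, if_true, if_neg (Nat.not_le.mpr hgt)] at hswap
    omega

lemma lt_of_bruhatLT_transp_comp {m : ℕ} {g : ℕ → ℕ} (h : bruhatLT m (g ∘ transp a b) g)
    (ha : 1 ≤ a) (hab : a < b) (ham : a ≤ m) : g b < g a := by
  have h' : bruhatLT m (g ∘ transp a b) ((g ∘ transp a b) ∘ transp a b) := by
    rwa [Function.comp_assoc, comp_transp_comp_transp]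
  simpa [transp_left, transp_right hab.ne] using lt_of_bruhatLT_comp_transp h' ha hab ham

end transp

/-- With `j = l + 2`: among the first `j - 1` positions, `f t_{i,j}` has one more entry `≥ f j`
than `g t_{j-1,k}`. -/
lemma not_bruhatLE_comp_transp_of_shift {m l i k : ℕ} {f g : ℕ → ℕ}
    (hi : 1 ≤ i) (hil : i ≤ l + 1) (hlm : l + 1 ≤ m) (hlk : l + 1 < k)
    (hshift : ∀ q, 1 ≤ q → q ≤ l → g q = f (q + 1))
    (hf1 : f 1 < f (l + 2)) (hfi : f i < f (l + 2)) (hgk : g k < f (l + 2)) :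
    ¬ bruhatLE m (f ∘ transp i (l + 2)) (g ∘ transp (l + 1) k) := by
  intro hle
  set t := f (l + 2)
  have hleft := countGE_comp_transp f t hi hil (by omega : l + 1 < l + 2)
  have hright : countGE (g ∘ transp (l + 1) k) t (l + 1) = countGE f t (l + 1) := by
    have hbelow : countGE (g ∘ transp (l + 1) k) t l = countGE (fun q => f (q + 1)) t l :=
      countGE_congr (fun q hq hql => by
        rw [Function.comp_apply, transp_of_ne (by omega) (by omega), hshift q hq hql]) t
    rw [countGE, hbelow, countGE_succ', Function.comp_apply, transp_left,
      if_neg (Nat.not_le.mpr hgk), if_neg (Nat.not_le.mpr hf1)]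
    ring
  have hcount := hle.countGE_le (by omega) hlm t
  rw [if_neg (Nat.not_le.mpr hfi), if_pos le_rfl] at hleft
  omega

lemma uhat_one (u : ℕ → ℕ) : uhat u 1 = 1 := rfl

lemma one_le_uhat (u : ℕ → ℕ) {x : ℕ} (hx : 1 ≤ x) : 1 ≤ uhat u x := by
  unfold uhat
  split_ifs <;> omega

lemma sOneTo_of_lt : ∀ (n : ℕ) {x : ℕ}, n + 1 < x → sOneTo n x = x
  | 0, _, _ => rfl
  | n + 1, x, hx => by
    rw [sOneTo, Function.comp_apply, transp_of_ne (by omega) (by omega), sOneTo_of_lt n (by omega)]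

lemma sOneTo_of_le : ∀ (n : ℕ) {x : ℕ}, 1 ≤ x → x ≤ n → sOneTo n x = x + 1
  | 0, _, h₁, h₂ => by omega
  | n + 1, x, h₁, h₂ => by
    rw [sOneTo, Function.comp_apply]
    rcases eq_or_lt_of_le h₂ with rfl | hx
    · rw [transp_left, sOneTo_of_lt n (by omega)]
    · rw [transp_of_ne (by omega) (by omega), sOneTo_of_le n h₁ (by omega)]

theorem stmt13_general (n : ℕ) (u : ℕ → ℕ)
    (i j k : ℕ) (hi : 1 ≤ i) (hij : i < j) (hj : j ≤ n + 1)
    (hjk : j - 1 < k)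
    (hatom : bruhatCovBy (n + 1) (uhat u) (uhat u ∘ transp i j) ∧
      bruhatLE (n + 1) (uhat u ∘ transp i j) (uhat u ∘ sOneTo n))
    (hcoatom : bruhatLE (n + 1) (uhat u) (uhat u ∘ sOneTo n ∘ transp (j - 1) k) ∧
      bruhatCovBy (n + 1) (uhat u ∘ sOneTo n ∘ transp (j - 1) k) (uhat u ∘ sOneTo n)) :
    ¬ bruhatLE (n + 1) (uhat u ∘ transp i j) (uhat u ∘ sOneTo n ∘ transp (j - 1) k) := by
  obtain ⟨l, rfl⟩ : ∃ l, j = l + 2 := ⟨j - 2, by omega⟩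
  rw [show l + 2 - 1 = l + 1 from rfl] at hjk hcoatom ⊢
  have hvi : uhat u i < uhat u (l + 2) := lt_of_bruhatLT_comp_transp hatom.1.1 hi hij (by omega)
  have hwk : uhat u (sOneTo n k) < uhat u (sOneTo n (l + 1)) :=
    lt_of_bruhatLT_transp_comp (g := uhat u ∘ sOneTo n) hcoatom.2.1 (by omega) hjk (by omega)
  rw [sOneTo_of_le n (x := l + 1) (by omega) (by omega)] at hwk
  exact not_bruhatLE_comp_transp_of_shift (g := uhat u ∘ sOneTo n) hi (by omega) (by omega) hjk
    (fun q hq hql => by rw [Function.comp_apply, sOneTo_of_le n hq (by omega)])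
    (by rw [uhat_one]; exact hvi.trans_le' (one_le_uhat u hi)) hvi hwk

/-- Let `v = û`, `w = û·s(1,n)` in `S_{n+1}`. If `v·t_{i,j}` is an atom of the Bruhat
interval `[v,w]` (i.e. `v ⋖ v·t_{i,j}` and `v·t_{i,j} ≤ w`) and `w·t_{j−1,k}` is a coatom
of `[v,w]` (i.e. `v ≤ w·t_{j−1,k}` and `w·t_{j−1,k} ⋖ w`) with `j−1 < k ≤ n+1`, then
`v·t_{i,j} ≰ w·t_{j−1,k}` in the Bruhat order. -/
theorem stmt13 (n : ℕ) (hn : 1 ≤ n) (u : ℕ → ℕ) (hu : IsPermOn n u)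
    (i j k : ℕ) (hi : 1 ≤ i) (hij : i < j) (hj : j ≤ n + 1)
    (hjk : j - 1 < k) (hk : k ≤ n + 1)
    (hatom : bruhatCovBy (n + 1) (uhat u) (uhat u ∘ transp i j) ∧
      bruhatLE (n + 1) (uhat u ∘ transp i j) (uhat u ∘ sOneTo n))
    (hcoatom : bruhatLE (n + 1) (uhat u) (uhat u ∘ sOneTo n ∘ transp (j - 1) k) ∧
      bruhatCovBy (n + 1) (uhat u ∘ sOneTo n ∘ transp (j - 1) k) (uhat u ∘ sOneTo n)) :
    ¬ bruhatLE (n + 1) (uhat u ∘ transp i j) (uhat u ∘ sOneTo n ∘ transp (j - 1) k) :=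
  stmt13_general n u i j k hi hij hj hjk hatom hcoatom
end
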